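/- arXiv:2403.07545 — 12 statements merged into one kernel-verified Lean document; each statement's English description precedes it below -/
import Mathlib

section
/- Let F be a field, Ω a fixed algebraic closure of F, and σ an involution in the absolute Galois group Gal(F) (i.e., σ² = id and σ ≠ id), with fixed field Fix(σ) = {x ∈ Ω : σ(x) = x}. Then the only F-algebra automorphism of the field Fix(σ) is the identity; that is, Aut(Fix(σ)|F) = {id}. -/
set_option linter.unusedSectionVars false

section Aux
variable {F Ω : Type*} [Field F] [Field Ω] [Algebra F Ω] [IsAlgClosure F Ω]
variable {σ : Ω ≃ₐ[F] Ω}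

private lemma AS_sigma_sq (hσ2 : σ * σ = 1) (x : Ω) : σ (σ x) = x := by
  have := congrArg (fun f : Ω ≃ₐ[F] Ω => f x) hσ2
  simpa using this

private lemma AS_exists_not_fixed (hσ1 : σ ≠ 1) : ∃ γ : Ω, σ γ ≠ γ := by
  by_contra h
  push_neg at h
  exact hσ1 (AlgEquiv.ext fun x => by simpa using h x)

private lemma AS_exists_sqrt (F : Type*) {Ω : Type*} [Field F] [Field Ω] [Algebra F Ω]
    [IsAlgClosure F Ω] (x : Ω) : ∃ z : Ω, z ^ 2 = x := by
  haveI := IsAlgClosure.isAlgClosed (R := F) (K := Ω)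
  exact IsAlgClosed.exists_pow_nat_eq x (n := 2) (by norm_num)

private lemma AS_exists_AS_root (F : Type*) {Ω : Type*} [Field F] [Field Ω] [Algebra F Ω]
    [IsAlgClosure F Ω] (c : Ω) : ∃ z : Ω, z ^ 2 - z = c := by
  haveI := IsAlgClosure.isAlgClosed (R := F) (K := Ω)
  obtain ⟨z, hz⟩ := IsAlgClosed.exists_root (Polynomial.X ^ 2 - Polynomial.X - Polynomial.C c)
    (by
      have : (Polynomial.X ^ 2 - Polynomial.X - Polynomial.C c : Polynomial Ω).degree = 2 := by
        compute_degree!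
      simp [this])
  refine ⟨z, ?_⟩
  have := hz
  rw [Polynomial.IsRoot.def] at this
  simp only [Polynomial.eval_sub, Polynomial.eval_pow, Polynomial.eval_X, Polynomial.eval_C] at this
  linear_combination this

/-- characteristic is not 2 -/
private lemma AS_two_ne_zero (hσ2 : σ * σ = 1) (hσ1 : σ ≠ 1) : (2 : Ω) ≠ 0 := by
  intro h2
  obtain ⟨γ, hγ⟩ := AS_exists_not_fixed hσ1
  set δ : Ω := γ - σ γ with hδdef
  have hδ : δ ≠ 0 := sub_ne_zero.mpr (fun h => hγ h.symm)
  have hneg : ∀ t : Ω, -t = t := fun t =>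
    neg_eq_of_add_eq_zero_left (by rw [← two_mul, h2, zero_mul])
  have hσδ : σ δ = δ := by
    have h1 : σ δ = σ γ - γ := by rw [hδdef, map_sub, AS_sigma_sq hσ2]
    rw [h1, ← hneg (σ γ - γ), hδdef]; ring_nf
  set α : Ω := γ * δ⁻¹ with hαdef
  have hσα : σ α = α + 1 := by
    have h1 : σ α = σ γ * δ⁻¹ := by rw [hαdef, map_mul, map_inv₀, hσδ]
    have h2' : σ α - α = (σ γ - γ) * δ⁻¹ := by rw [h1, hαdef]; ring
    have h3 : σ γ - γ = δ := by rw [hδdef, ← hneg (γ - σ γ)]; ring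
    rw [h3, mul_inv_cancel₀ hδ] at h2'
    linear_combination h2'
  set a : Ω := α ^ 2 - α with hadef
  have hσa : σ a = a := by
    rw [hadef, map_sub, map_pow, hσα]; ring_nf
    linear_combination α * h2
  obtain ⟨β, hβ⟩ := AS_exists_AS_root F (a * α)
  set w : Ω := β + σ β with hwdef
  have hσβ : (σ β) ^ 2 - σ β = a * α + a := by
    have : σ (β ^ 2 - β) = σ (a * α) := congrArg σ hβ
    rw [map_sub, map_pow, map_mul, hσa, hσα] at this
    linear_combination this
  have hw : w ^ 2 - w = a := by
    rw [hwdef]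
    linear_combination hβ + hσβ + (β * σ β + a * α) * h2
  -- x = α - w is idempotent
  have hx : (α - w) * (α - w - 1) = 0 := by
    have hα2 : α ^ 2 = a + α := by rw [hadef]; ring
    have hw2 : w ^ 2 = a + w := by linear_combination hw
    linear_combination hα2 + hw2 + (a + w - α * w) * h2
  have hσw : σ w = w := by
    rw [hwdef, map_add, AS_sigma_sq hσ2]; ring
  have hσα' : σ α = α := by
    rcases mul_eq_zero.mp hx with h | h
    · have : α = w := by linear_combination h
      rw [this, hσw]
    · have : α = w + 1 := by linear_combination h
      rw [this, map_add, map_one, hσw]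
  rw [hσα'] at hσα
  exact one_ne_zero (α := Ω) (by linear_combination -hσα)

/-- -1 is not a square in the fixed field -/
private lemma AS_no_sqrt_neg_one (hσ2 : σ * σ = 1) (hσ1 : σ ≠ 1) :
    ∀ i : Ω, σ i = i → i ^ 2 ≠ -1 := by
  intro i hi hii
  have h2 := AS_two_ne_zero hσ2 hσ1
  obtain ⟨γ, hγ⟩ := AS_exists_not_fixed hσ1
  set α : Ω := γ - σ γ with hαdef
  have hα : α ≠ 0 := sub_ne_zero.mpr (fun h => hγ h.symm)
  have hσα : σ α = -α := by
    rw [hαdef, map_sub, AS_sigma_sq hσ2]; ring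
  obtain ⟨e, he⟩ := AS_exists_sqrt F α
  have he0 : e ≠ 0 := fun h => hα (by rw [← he, h]; ring)
  have key : (σ e - i * e) * (σ e + i * e) = 0 := by
    have h1 : (σ e) ^ 2 = -α := by rw [← map_pow, he, hσα]
    linear_combination h1 - e ^ 2 * hii + he
  have he2 : e = -e := by
    rcases mul_eq_zero.mp key with h | h
    · have hσe : σ e = i * e := by linear_combination h
      have := AS_sigma_sq hσ2 e
      rw [hσe, map_mul, hi, hσe] at this
      calc e = i * (i * e) := this.symm
        _ = -e := by linear_combination e * hii
    · have hσe : σ e = -(i * e) := by linear_combination h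
      have := AS_sigma_sq hσ2 e
      rw [hσe, map_neg, map_mul, hi, hσe] at this
      calc e = -(i * -(i * e)) := this.symm
        _ = -e := by linear_combination e * hii
  have h2e : 2 * e = 0 := by linear_combination he2
  rcases mul_eq_zero.mp h2e with h | h
  · exact h2 h
  · exact he0 h

/-- there is i with i^2 = -1 and σ i = -i -/
private lemma AS_exists_i (hσ2 : σ * σ = 1) (hσ1 : σ ≠ 1) :
    ∃ i : Ω, i ^ 2 = -1 ∧ σ i = -i := by
  obtain ⟨i, hi⟩ := AS_exists_sqrt F (-1 : Ω)
  have h1 : (σ i) ^ 2 = i ^ 2 := by rw [← map_pow, hi]; simp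
  have : (σ i - i) * (σ i + i) = 0 := by linear_combination h1
  rcases mul_eq_zero.mp this with h | h
  · have : σ i = i := by linear_combination h
    exact absurd hi (AS_no_sqrt_neg_one hσ2 hσ1 i this)
  · exact ⟨i, hi, by linear_combination h⟩

/-- every fixed element: x or -x is a square of a fixed element -/
private lemma AS_sq_or_neg_sq (hσ2 : σ * σ = 1) (hσ1 : σ ≠ 1) (x : Ω) (hx : σ x = x) :
    (∃ s : Ω, σ s = s ∧ s ^ 2 = x) ∨ (∃ s : Ω, σ s = s ∧ s ^ 2 = -x) := by
  obtain ⟨y, hy⟩ := AS_exists_sqrt F x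
  have h1 : (σ y) ^ 2 = y ^ 2 := by rw [← map_pow, hy, hx]
  have : (σ y - y) * (σ y + y) = 0 := by linear_combination h1
  rcases mul_eq_zero.mp this with h | h
  · exact Or.inl ⟨y, by linear_combination h, hy⟩
  · obtain ⟨i, hi2, hσi⟩ := AS_exists_i hσ2 hσ1
    have hσy : σ y = -y := by linear_combination h
    refine Or.inr ⟨i * y, ?_, ?_⟩
    · rw [map_mul, hσi, hσy]; ring
    · calc (i * y) ^ 2 = i ^ 2 * y ^ 2 := by ring
        _ = -x := by rw [hi2, hy]; ring

/-- sum of two squares of fixed elements is a square of a fixed element -/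
private lemma AS_sum_sq (hσ2 : σ * σ = 1) (hσ1 : σ ≠ 1) (a b : Ω) (ha : σ a = a) (hb : σ b = b) :
    ∃ s : Ω, σ s = s ∧ s ^ 2 = a ^ 2 + b ^ 2 := by
  obtain ⟨i, hi2, hσi⟩ := AS_exists_i hσ2 hσ1
  obtain ⟨z, hz⟩ := AS_exists_sqrt F (a + b * i)
  refine ⟨z * σ z, ?_, ?_⟩
  · rw [map_mul, AS_sigma_sq hσ2]; ring
  · have h1 : (σ z) ^ 2 = a - b * i := by
      rw [← map_pow, hz, map_add, ha, map_mul, hb, hσi]; ring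
    calc (z * σ z) ^ 2 = z ^ 2 * (σ z) ^ 2 := by ring
      _ = (a + b * i) * (a - b * i) := by rw [hz, h1]
      _ = a ^ 2 - b ^ 2 * i ^ 2 := by ring
      _ = a ^ 2 + b ^ 2 := by rw [hi2]; ring

end Aux

/-- For a field `F` with algebraic closure `Ω`, and an involution `σ`
in the absolute Galois group `Gal(F) = Ω ≃ₐ[F] Ω`, the only `F`-algebra automorphism
of the fixed field `Fix(σ) = {x ∈ Ω | σ x = x}` is the identity. -/
theorem aut_fixedField_of_involution_trivial
    (F Ω : Type*) [Field F] [Field Ω] [Algebra F Ω] [IsAlgClosure F Ω]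
    (σ : Ω ≃ₐ[F] Ω) (hσ2 : σ * σ = 1) (hσ1 : σ ≠ 1)
    (K : IntermediateField F Ω) (hK : ∀ x : Ω, x ∈ K ↔ σ x = x)
    (τ : K ≃ₐ[F] K) : τ = AlgEquiv.refl := by
  -- transported square lemmas
  have A_K : ∀ s : K, s ^ 2 ≠ -1 := by
    intro s h
    apply AS_no_sqrt_neg_one hσ2 hσ1 (s : Ω) ((hK s).mp s.2)
    have := congrArg (fun t : K => (t : Ω)) h
    push_cast at this
    exact this
  have C_K : ∀ a b : K, ∃ s : K, s ^ 2 = a ^ 2 + b ^ 2 := by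
    intro a b
    obtain ⟨s, hs, h⟩ := AS_sum_sq hσ2 hσ1 (a : Ω) (b : Ω) ((hK a).mp a.2) ((hK b).mp b.2)
    refine ⟨⟨s, (hK s).mpr hs⟩, ?_⟩
    apply Subtype.ext
    push_cast
    exact h
  have B_K : ∀ x : K, (∃ s : K, s ^ 2 = x) ∨ (∃ s : K, s ^ 2 = -x) := by
    intro x
    rcases AS_sq_or_neg_sq hσ2 hσ1 (x : Ω) ((hK x).mp x.2) with ⟨s, hs, h⟩ | ⟨s, hs, h⟩
    · exact Or.inl ⟨⟨s, (hK s).mpr hs⟩, by apply Subtype.ext; push_cast; exact h⟩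
    · exact Or.inr ⟨⟨s, (hK s).mpr hs⟩, by apply Subtype.ext; push_cast; exact h⟩
  -- transitivity-type combination
  have combine : ∀ a b c : K, (∃ s : K, s ≠ 0 ∧ b - a = s ^ 2) →
      (∃ s : K, s ≠ 0 ∧ c - b = s ^ 2) → ∃ s : K, s ≠ 0 ∧ c - a = s ^ 2 := by
    rintro a b c ⟨s, hs0, hs⟩ ⟨t, ht0, ht⟩
    obtain ⟨u, hu⟩ := C_K s t
    refine ⟨u, ?_, by linear_combination hs + ht - hu⟩
    intro h
    rw [h] at hu
    apply A_K (s * t⁻¹)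
    have ht2 : t ^ 2 ≠ 0 := pow_ne_zero _ ht0
    field_simp
    linear_combination -hu
  -- main rigidity argument
  have key : ∀ (ρ : K ≃ₐ[F] K) (x : K), (∃ s : K, s ≠ 0 ∧ ρ x - x = s ^ 2) → False := by
    rintro ρ x hRx
    set g : ℕ → K := fun n => (ρ ^ n) x with hg
    have hg0 : g 0 = x := by simp [hg]
    have hgs : ∀ n, g (n + 1) = ρ (g n) := by
      intro n
      show (ρ ^ (n + 1)) x = ρ ((ρ ^ n) x)
      rw [pow_succ']
      rfl
    have hstep : ∀ n, ∃ s : K, s ≠ 0 ∧ g (n + 1) - g n = s ^ 2 := by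
      intro n
      induction n with
      | zero => rw [hgs, hg0]; exact hRx
      | succ n ih =>
        obtain ⟨t, ht0, ht⟩ := ih
        refine ⟨ρ t, fun h => ht0 (ρ.injective (by rw [h, map_zero])), ?_⟩
        rw [hgs (n + 1), hgs n, ← map_sub, ← hgs n, ht, map_pow]
    have hlt : ∀ m n : ℕ, m < n → ∃ s : K, s ≠ 0 ∧ g n - g m = s ^ 2 := by
      intro m n h
      induction h with
      | refl => exact hstep m
      | @step n' h' ih =>
        exact combine _ _ _ ih (hstep n')
    have hinj : Function.Injective g := by
      intro m n h
      rcases lt_trichotomy m n with hmn | hmn | hmn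
      · obtain ⟨s, hs0, hs⟩ := hlt m n hmn
        rw [h, sub_self] at hs
        exact absurd (pow_eq_zero_iff (n := 2) (by norm_num) |>.mp hs.symm) hs0
      · exact hmn
      · obtain ⟨s, hs0, hs⟩ := hlt n m hmn
        rw [h, sub_self] at hs
        exact absurd (pow_eq_zero_iff (n := 2) (by norm_num) |>.mp hs.symm) hs0
    have hint : IsIntegral F x :=
      (isIntegral_algHom_iff K.val K.val.injective).mp (Algebra.IsIntegral.isIntegral _)
    set p := minpoly F x with hp
    have hproot : ∀ n, Polynomial.aeval (g n) p = 0 := by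
      intro n
      have h1 : Polynomial.aeval (((ρ ^ n : K ≃ₐ[F] K) : K →ₐ[F] K) x) p =
          ((ρ ^ n : K ≃ₐ[F] K) : K →ₐ[F] K) (Polynomial.aeval x p) :=
        Polynomial.aeval_algHom_apply _ x p
      simpa [hg, hp, minpoly.aeval] using h1
    have hp0 : p ≠ 0 := minpoly.ne_zero hint
    have hq0 : p.map (algebraMap F K) ≠ 0 :=
      Polynomial.map_ne_zero hp0
    have hfin : {y : K | Polynomial.aeval y p = 0}.Finite := by
      have : {y : K | Polynomial.aeval y p = 0} = {y : K | (p.map (algebraMap F K)).IsRoot y} := by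
        ext y
        simp [Polynomial.aeval_def, Polynomial.eval_map, Polynomial.IsRoot]
      rw [this]
      exact Polynomial.finite_setOf_isRoot hq0
    exact (Set.infinite_of_injective_forall_mem hinj hproot) hfin
  -- conclude
  by_contra hne
  have : ∃ x : K, τ x ≠ x := by
    by_contra h
    push_neg at h
    exact hne (AlgEquiv.ext fun x => by simpa using h x)
  obtain ⟨x, hx⟩ := this
  rcases B_K (τ x - x) with ⟨s, hs⟩ | ⟨s, hs⟩
  · have hs0 : s ≠ 0 := by
      intro h
      rw [h] at hs
      apply hx
      have : τ x - x = 0 := by rw [← hs]; ring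
      linear_combination this
    exact key τ x ⟨s, hs0, hs.symm⟩
  · have hs0 : s ≠ 0 := by
      intro h
      rw [h] at hs
      apply hx
      have : -(τ x - x) = 0 := by rw [← hs]; ring
      linear_combination -this
    have : x - τ x = s ^ 2 := by linear_combination -hs
    refine key τ.symm (τ x) ⟨s, hs0, ?_⟩
    rw [AlgEquiv.symm_apply_apply]
    exact this
end

section
/- Let F be a field, Ω a fixed algebraic closure of F, and σ an involution in the absolute Galois group Gal(F). Then the centraliser of σ within Gal(F) is exactly the subgroup {id, σ} generated by σ; that is, for τ ∈ Gal(F), τσ = στ implies τ = id or τ = σ. -/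
/-- For a field `F` with algebraic closure `Ω` and an involution `σ` in
the absolute Galois group `Gal(F) = Ω ≃ₐ[F] Ω`, the centraliser of `σ` in `Gal(F)` is
exactly `{1, σ}`: any `τ` commuting with `σ` is `1` or `σ`. -/
theorem centralizer_of_involution
    (F Ω : Type*) [Field F] [Field Ω] [Algebra F Ω] [IsAlgClosure F Ω]
    (σ : Ω ≃ₐ[F] Ω) (hσ2 : σ * σ = 1) (hσ1 : σ ≠ 1)
    (τ : Ω ≃ₐ[F] Ω) (hcomm : τ * σ = σ * τ) : τ = 1 ∨ τ = σ := by
  classical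
  haveI : IsAlgClosed Ω := IsAlgClosure.isAlgClosed F
  have hσσ : ∀ x : Ω, σ (σ x) = x := fun x => by
    have h := congrArg (fun e : Ω ≃ₐ[F] Ω => e x) hσ2
    simpa using h
  have hroot : ∀ b c : Ω, ∃ x : Ω, x ^ 2 + b * x + c = 0 := by
    intro b c
    have hd : (Polynomial.X ^ 2 + Polynomial.C b * Polynomial.X + Polynomial.C c :
        Polynomial Ω).degree = 2 := by compute_degree!
    obtain ⟨x, hx⟩ := IsAlgClosed.exists_root
      (Polynomial.X ^ 2 + Polynomial.C b * Polynomial.X + Polynomial.C c : Polynomial Ω)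
      (by rw [hd]; decide)
    refine ⟨x, ?_⟩
    have := hx
    simp [Polynomial.IsRoot] at this
    linear_combination this
  obtain ⟨r0, hr0⟩ : ∃ r : Ω, σ r ≠ r := by
    by_contra hall
    push_neg at hall
    exact hσ1 (AlgEquiv.ext fun z => (hall z).trans rfl)
  -- characteristic is not 2
  have h2 : (2 : Ω) ≠ 0 := by
    intro h2
    have hneg : ∀ x : Ω, -x = x := fun x => by
      have hx : x + x = 0 := by
        have : (2 : Ω) * x = 0 := by rw [h2, zero_mul]
        linear_combination this
      exact neg_eq_of_add_eq_zero_left hx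
    have hsq : ∀ a b : Ω, (a + b) ^ 2 = a ^ 2 + b ^ 2 := fun a b => by
      have h : (a + b) ^ 2 = a ^ 2 + b ^ 2 + 2 * (a * b) := by ring
      rw [h, h2, zero_mul, add_zero]
    set t := r0 + σ r0 with ht
    have hσt : σ t = t := by rw [ht, map_add, hσσ, add_comm]
    have ht0 : t ≠ 0 := by
      intro h0
      apply hr0
      rw [ht] at h0
      have h1 : σ r0 = -r0 := by linear_combination h0
      rw [h1, hneg]
    set q := r0 * t⁻¹ with hq
    have hσq : σ q = σ r0 * t⁻¹ := by rw [hq, map_mul, map_inv₀, hσt]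
    have hsum : q + σ q = 1 := by
      rw [hq, hσq, ← add_mul, ← ht, mul_inv_cancel₀ ht0]
    have hσq' : σ q = 1 + q := by
      have h1 : σ q = 1 - q := by rw [← hsum]; ring
      rw [h1, sub_eq_add_neg, hneg]
    have hqne : σ q ≠ q := by
      rw [hσq']
      intro h
      nth_rewrite 2 [← zero_add q] at h
      exact one_ne_zero (add_right_cancel h)
    set c := q * σ q with hc
    have hcval : c = q ^ 2 + q := by rw [hc, hσq']; ring
    obtain ⟨s, hs⟩ := hroot 1 (-(c * q))
    have hs' : s ^ 2 + s = c * q := by linear_combination hs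
    have hσc : σ c = c := by rw [hc, map_mul, hσσ, mul_comm]
    have hσs : (σ s) ^ 2 + σ s = c * σ q := by
      have h1 := congrArg σ hs'
      rw [map_add, map_pow, map_mul, hσc] at h1
      exact h1
    set u := s + σ s with hu
    have hσu : σ u = u := by rw [hu, map_add, hσσ, add_comm]
    have huval : u ^ 2 + u = c := by
      have e : u ^ 2 + u = (s ^ 2 + s) + ((σ s) ^ 2 + σ s) := by
        rw [hu, hsq]; ring
      rw [e, hs', hσs, ← mul_add, hsum, mul_one]
    have hw : (u + q) ^ 2 + (u + q) = 0 := by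
      rw [hsq]
      have e : u ^ 2 + q ^ 2 + (u + q) = (u ^ 2 + u) + (q ^ 2 + q) := by ring
      rw [e, huval, ← hcval, ← two_mul, h2, zero_mul]
    have hfac : (u + q) * ((u + q) + 1) = 0 := by
      have e : (u + q) * ((u + q) + 1) = (u + q) ^ 2 + (u + q) := by ring
      rw [e, hw]
    rcases mul_eq_zero.mp hfac with h | h
    · have hqu : q = u := by
        have h1 : q = -u := eq_neg_of_add_eq_zero_right h
        rw [h1, hneg]
      exact hqne (by rw [hqu, hσu])
    · have hqu : q = u + 1 := by
        have h' : q + (u + 1) = 0 := by linear_combination h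
        have h1 : q = -(u + 1) := eq_neg_of_add_eq_zero_left h'
        rw [h1, hneg]
      exact hqne (by rw [hqu, map_add, hσu, map_one])
  have htwo : ∀ x : Ω, (2 : Ω) * x = 0 → x = 0 := by
    intro x hx
    rcases mul_eq_zero.mp hx with h | h
    · exact absurd h h2
    · exact h
  -- a square root of -1
  obtain ⟨i, hi⟩ : ∃ i : Ω, i ^ 2 = -1 := by
    obtain ⟨x, hx⟩ := hroot 0 1
    exact ⟨x, by linear_combination hx⟩
  have hsqrt : ∀ a : Ω, ∃ r : Ω, r ^ 2 = a := fun a => by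
    obtain ⟨x, hx⟩ := hroot 0 (-a)
    exact ⟨x, by linear_combination hx⟩
  -- σ i = -i
  have hσi : σ i = -i := by
    have hi2 : (σ i) ^ 2 = -1 := by rw [← map_pow, hi, map_neg, map_one]
    have hfac : (σ i - i) * (σ i + i) = 0 := by linear_combination hi2 - hi
    rcases mul_eq_zero.mp hfac with h | h
    · exfalso
      have hii : σ i = i := sub_eq_zero.mp h
      set u := r0 - σ r0 with hudef
      have hσu : σ u = -u := by rw [hudef, map_sub, hσσ]; ring
      have hu0 : u ≠ 0 := fun h0 => hr0 ((sub_eq_zero.mp h0).symm)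
      obtain ⟨v, hv⟩ := hsqrt u
      set w := v * σ v with hwdef
      have hσw : σ w = w := by rw [hwdef, map_mul, hσσ, mul_comm]
      have hw2 : w ^ 2 = -(u ^ 2) := by
        have hσv2 : (σ v) ^ 2 = -u := by rw [← map_pow, hv, hσu]
        rw [hwdef, mul_pow, hv, hσv2]; ring
      have hk2 : (i * w) ^ 2 = u ^ 2 := by rw [mul_pow, hi, hw2]; ring
      have hσk : σ (i * w) = i * w := by rw [map_mul, hii, hσw]
      have hfac2 : (u - i * w) * (u + i * w) = 0 := by linear_combination -hk2
      have hσuu : σ u = u := by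
        rcases mul_eq_zero.mp hfac2 with h' | h'
        · have e : u = i * w := sub_eq_zero.mp h'
          rw [e, hσk]
        · have e : u = -(i * w) := eq_neg_of_add_eq_zero_left h'
          rw [e, map_neg, hσk]
      rw [hσu] at hσuu
      exact hu0 (htwo u (by linear_combination -hσuu))
    · exact eq_neg_of_add_eq_zero_left h
  -- (A): no square root of -1 in the fixed field
  have hA : ∀ c : Ω, σ c = c → c ^ 2 ≠ -1 := by
    intro c hc hc2
    have hfac : (c - i) * (c + i) = 0 := by linear_combination hc2 - hi
    have hii : σ i = i := by
      rcases mul_eq_zero.mp hfac with h | h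
      · have e : c = i := sub_eq_zero.mp h
        rw [← e, hc]
      · have e : c = -i := eq_neg_of_add_eq_zero_left h
        rw [e, map_neg] at hc
        exact neg_injective hc
    rw [hσi] at hii
    have hi0 : i = 0 := htwo i (by linear_combination -hii)
    rw [hi0] at hi
    have : (1 : Ω) = 0 := by linear_combination hi
    exact one_ne_zero this
  -- (B): each fixed element is a square or minus a square of a fixed element
  have hB : ∀ a : Ω, σ a = a →
      (∃ c : Ω, σ c = c ∧ a = c ^ 2) ∨ (∃ c : Ω, σ c = c ∧ a = -(c ^ 2)) := by
    intro a ha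
    obtain ⟨r, hr⟩ := hsqrt a
    have hr2 : (σ r) ^ 2 = a := by rw [← map_pow, hr, ha]
    have hfac : (σ r - r) * (σ r + r) = 0 := by linear_combination hr2 - hr
    rcases mul_eq_zero.mp hfac with h | h
    · exact Or.inl ⟨r, sub_eq_zero.mp h, hr.symm⟩
    · refine Or.inr ⟨i * r, ?_, ?_⟩
      · have hσr : σ r = -r := eq_neg_of_add_eq_zero_left h
        rw [map_mul, hσi, hσr]; ring
      · rw [mul_pow, hi, hr]; ring
  -- (C): a sum of two squares of fixed elements is a square of a fixed element
  have hC : ∀ x y : Ω, σ x = x → σ y = y →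
      ∃ c : Ω, σ c = c ∧ x ^ 2 + y ^ 2 = c ^ 2 := by
    intro x y hx hy
    obtain ⟨w, hw⟩ := hsqrt (x + i * y)
    refine ⟨w * σ w, by rw [map_mul, hσσ, mul_comm], ?_⟩
    have hσw2 : (σ w) ^ 2 = x - i * y := by
      rw [← map_pow, hw, map_add, map_mul, hx, hσi, hy]; ring
    rw [mul_pow, hw, hσw2]; linear_combination y ^ 2 * hi
  -- antisymmetry helper
  have hanti : ∀ c e : Ω, σ c = c → σ e = e → c ^ 2 + e ^ 2 = 0 → c = 0 := by
    intro c e hc he hce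
    by_contra hc0
    apply hA (e * c⁻¹) (by rw [map_mul, map_inv₀, he, hc])
    have h1 : e ^ 2 = -(c ^ 2) := by linear_combination hce
    rw [mul_pow, h1, inv_pow, neg_mul, mul_inv_cancel₀ (pow_ne_zero 2 hc0)]
  -- τ preserves the fixed field
  have hτK : ∀ x : Ω, σ x = x → σ (τ x) = τ x := by
    intro x hx
    have h := congrArg (fun e : Ω ≃ₐ[F] Ω => e x) hcomm
    simp only [AlgEquiv.mul_apply] at h
    rw [← h, hx]
  have hinv : τ⁻¹ * σ = σ * τ⁻¹ := by
    rw [inv_mul_eq_iff_eq_mul, ← mul_assoc, hcomm, mul_assoc, mul_inv_cancel, mul_one]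
  have hτK' : ∀ x : Ω, σ x = x → σ (τ⁻¹ x) = τ⁻¹ x := by
    intro x hx
    have h := congrArg (fun e : Ω ≃ₐ[F] Ω => e x) hinv
    simp only [AlgEquiv.mul_apply] at h
    rw [← h, hx]
  have hτinv1 : ∀ x : Ω, τ⁻¹ (τ x) = x := by
    intro x
    show (τ⁻¹ * τ) x = x
    rw [inv_mul_cancel]; rfl
  have hτinv2 : ∀ x : Ω, τ (τ⁻¹ x) = x := by
    intro x
    show (τ * τ⁻¹) x = x
    rw [mul_inv_cancel]; rfl
  -- τ fixes the fixed field of σ pointwise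
  have hfix : ∀ a : Ω, σ a = a → τ a = a := by
    intro a ha
    have hint : IsIntegral F a := (Algebra.IsAlgebraic.isAlgebraic (R := F) a).isIntegral
    set p : Polynomial F := minpoly F a with hpdef
    have hp0 : p ≠ 0 := minpoly.ne_zero hint
    set S : Set Ω := {x | σ x = x ∧ Polynomial.aeval x p = 0} with hSdef
    have hSfin : S.Finite := by
      have hmap : p.map (algebraMap F Ω) ≠ 0 :=
        Polynomial.map_ne_zero hp0
      refine (Polynomial.finite_setOf_isRoot hmap).subset ?_
      intro x hx
      show (p.map (algebraMap F Ω)).IsRoot x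
      rw [Polynomial.IsRoot, Polynomial.eval_map, ← Polynomial.aeval_def]
      exact hx.2
    haveI : Finite ↥S := hSfin.to_subtype
    have hτS : ∀ x ∈ S, τ x ∈ S := by
      intro x hx
      refine ⟨hτK x hx.1, ?_⟩
      exact (Polynomial.aeval_algHom_apply (↑τ : Ω →ₐ[F] Ω) x p).trans
        (by rw [hx.2]; exact map_zero _)
    have hτS' : ∀ x ∈ S, τ⁻¹ x ∈ S := by
      intro x hx
      refine ⟨hτK' x hx.1, ?_⟩
      exact (Polynomial.aeval_algHom_apply (↑(τ⁻¹) : Ω →ₐ[F] Ω) x p).trans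
        (by rw [hx.2]; exact map_zero _)
    letI : LinearOrder ↥S :=
      { le := fun x y => ∃ c : Ω, σ c = c ∧ (y : Ω) - (x : Ω) = c ^ 2
        le_refl := fun x => ⟨0, map_zero σ, by ring⟩
        le_trans := by
          rintro x y z ⟨c, hc, hxy⟩ ⟨e, he, hyz⟩
          obtain ⟨d, hd, hde⟩ := hC c e hc he
          exact ⟨d, hd, by rw [← hde]; linear_combination hxy + hyz⟩
        le_antisymm := by
          rintro x y ⟨c, hc, hxy⟩ ⟨e, he, hyx⟩
          have hc0 : c = 0 := hanti c e hc he (by linear_combination -hxy - hyx)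
          apply Subtype.ext
          have h0 : (y : Ω) - (x : Ω) = 0 := by rw [hxy, hc0]; ring
          exact (sub_eq_zero.mp h0).symm
        le_total := by
          intro x y
          have hfixed : σ ((y : Ω) - (x : Ω)) = (y : Ω) - (x : Ω) := by
            rw [map_sub, x.2.1, y.2.1]
          rcases hB _ hfixed with ⟨c, hc, hcc⟩ | ⟨c, hc, hcc⟩
          · exact Or.inl ⟨c, hc, hcc⟩
          · exact Or.inr ⟨c, hc, by linear_combination -hcc⟩
        toDecidableLE := Classical.decRel _ }
    let f : ↥S ≃ ↥S := Equiv.ofBijective (fun x => ⟨τ x, hτS x x.2⟩)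
      (by
        constructor
        · intro x y hxy
          exact Subtype.ext (τ.injective (congrArg Subtype.val hxy))
        · intro y
          exact ⟨⟨τ⁻¹ y, hτS' y y.2⟩, Subtype.ext (hτinv2 y)⟩)
    have hmono : ∀ x y : ↥S, f x ≤ f y ↔ x ≤ y := by
      intro x y
      constructor
      · rintro ⟨c, hc, hcc⟩
        refine ⟨τ⁻¹ c, hτK' c hc, ?_⟩
        have h1 := congrArg (τ⁻¹ : Ω ≃ₐ[F] Ω) hcc
        rw [map_sub, map_pow] at h1
        show (y : Ω) - (x : Ω) = _
        rw [← hτinv1 (y : Ω), ← hτinv1 (x : Ω)]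
        exact h1
      · rintro ⟨c, hc, hcc⟩
        refine ⟨τ c, hτK c hc, ?_⟩
        show τ (y : Ω) - τ (x : Ω) = _
        rw [← map_sub, hcc, map_pow]
    let g : ↥S ≃o ↥S := ⟨f, hmono _ _⟩
    have hgid : ∀ x : ↥S, g x = x := by
      intro x
      rw [Subsingleton.elim g (OrderIso.refl _)]
      rfl
    have haS : a ∈ S := ⟨ha, minpoly.aeval F a⟩
    exact congrArg Subtype.val (hgid ⟨a, haS⟩)
  -- dichotomy: τ x = x or τ x = σ x for every x
  have hdich : ∀ x : Ω, τ x = x ∨ τ x = σ x := by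
    intro x
    have hs : σ (x + σ x) = x + σ x := by rw [map_add, hσσ, add_comm]
    have hm : σ (x * σ x) = x * σ x := by rw [map_mul, hσσ, mul_comm]
    have e1 : τ x + τ (σ x) = x + σ x := by rw [← map_add]; exact hfix _ hs
    have e2 : τ x * τ (σ x) = x * σ x := by rw [← map_mul]; exact hfix _ hm
    have key : (τ x - x) * (τ x - σ x) = 0 := by
      linear_combination (τ x) * e1 - e2
    rcases mul_eq_zero.mp key with h | h
    · exact Or.inl (sub_eq_zero.mp h)
    · exact Or.inr (sub_eq_zero.mp h)
  -- endgame
  by_contra hcon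
  push_neg at hcon
  obtain ⟨h1, h2'⟩ := hcon
  obtain ⟨y, hy⟩ : ∃ y : Ω, τ y ≠ σ y := by
    by_contra hall
    push_neg at hall
    exact h2' (AlgEquiv.ext hall)
  obtain ⟨x, hx⟩ : ∃ x : Ω, τ x ≠ x := by
    by_contra hall
    push_neg at hall
    exact h1 (AlgEquiv.ext fun z => (hall z).trans rfl)
  have hτx : τ x = σ x := (hdich x).resolve_left hx
  have hτy : τ y = y := (hdich y).resolve_right hy
  have hyK : σ y ≠ y := fun h => hy (hτy.trans h.symm)
  have hxK : σ x ≠ x := fun h => hx (hτx.trans h)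
  rcases hdich (x + y) with h | h
  · rw [map_add, hτx, hτy] at h
    exact hxK (add_right_cancel h)
  · rw [map_add, hτx, hτy, map_add] at h
    exact hyK (add_left_cancel h).symm
end

section
/- Let F be a field, Ω a fixed algebraic closure of F, and σ an involution in the absolute Galois group Gal(F) with fixed field Fix(σ) = {x ∈ Ω : σ(x) = x}. Let H = {τ ∈ Gal(F) : τ fixes Fix(σ) pointwise} be the subgroup of Gal(F) fixing Fix(σ). Then the normaliser of H within Gal(F) equals H itself. -/
private lemma aux_min {α : Type*} (P : α → Prop) (le : α → α → Prop)
    (hrefl : ∀ a, P a → le a a)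
    (htot : ∀ a b, P a → P b → le a b ∨ le b a)
    (htrans : ∀ a b c, P a → P b → P c → le a b → le b c → le a c) :
    ∀ S : Finset α, (∀ s ∈ S, P s) → S.Nonempty → ∃ m ∈ S, ∀ s ∈ S, le m s := by
  classical
  intro S
  induction S using Finset.induction_on with
  | empty => intro _ h; simp at h
  | @insert a S' ha ih =>
    intro hP _
    by_cases hS' : S'.Nonempty
    · obtain ⟨m, hm, hmin⟩ := ih (fun s hs => hP s (Finset.mem_insert_of_mem hs)) hS'
      have hPm : P m := hP m (Finset.mem_insert_of_mem hm)
      have hPa : P a := hP a (Finset.mem_insert_self a S')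
      rcases htot m a hPm hPa with h | h
      · refine ⟨m, Finset.mem_insert_of_mem hm, fun s hs => ?_⟩
        rcases Finset.mem_insert.1 hs with rfl | hs
        · exact h
        · exact hmin s hs
      · refine ⟨a, Finset.mem_insert_self a S', fun s hs => ?_⟩
        rcases Finset.mem_insert.1 hs with rfl | hs
        · exact hrefl _ hPa
        · exact htrans a m s hPa hPm (hP s (Finset.mem_insert_of_mem hs)) h (hmin s hs)
    · rw [Finset.not_nonempty_iff_eq_empty] at hS'
      subst hS'
      refine ⟨a, by simp, fun s hs => ?_⟩
      simp only [Finset.mem_insert, Finset.notMem_empty, or_false] at hs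
      subst hs
      exact hrefl _ (hP _ (Finset.mem_insert_self _ ∅))

private lemma aux_fix {α : Type*} [DecidableEq α] (P : α → Prop) (le : α → α → Prop)
    (hrefl : ∀ a, P a → le a a)
    (htot : ∀ a b, P a → P b → le a b ∨ le b a)
    (htrans : ∀ a b c, P a → P b → P c → le a b → le b c → le a c)
    (hanti : ∀ a b, P a → P b → le a b → le b a → a = b)
    (f : α → α) (hinj : Function.Injective f)
    (hmono : ∀ a b, P a → P b → le a b → le (f a) (f b)) :
    ∀ S : Finset α, (∀ s ∈ S, P s) → (∀ s ∈ S, f s ∈ S) → ∀ s ∈ S, f s = s := by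
  have key : ∀ n (S : Finset α), S.card = n → (∀ s ∈ S, P s) → (∀ s ∈ S, f s ∈ S) →
      ∀ s ∈ S, f s = s := by
    intro n
    induction n with
    | zero =>
      intro S hc _ _ s hs
      rw [Finset.card_eq_zero] at hc; subst hc; simp at hs
    | succ n ih =>
      intro S hc hP hf s hs
      have hne : S.Nonempty := Finset.card_pos.1 (by omega)
      obtain ⟨m, hm, hmin⟩ := aux_min P le hrefl htot htrans S hP hne
      have himg : S.image f = S := by
        apply Finset.eq_of_subset_of_card_le
        · intro y hy
          obtain ⟨z, hz, rfl⟩ := Finset.mem_image.1 hy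
          exact hf z hz
        · rw [Finset.card_image_of_injective _ hinj]
      obtain ⟨s₀, hs₀, hfs₀⟩ := Finset.mem_image.1 (himg ▸ hm)
      have hPm : P m := hP m hm
      have hmf : f m = m :=
        hanti (f m) m (hP _ (hf m hm)) hPm
          (hfs₀ ▸ hmono m s₀ hPm (hP s₀ hs₀) (hmin s₀ hs₀))
          (hmin (f m) (hf m hm))
      by_cases hsm : s = m
      · subst hsm; exact hmf
      · apply ih (S.erase m) (by rw [Finset.card_erase_of_mem hm, hc]; rfl)
          (fun x hx => hP x (Finset.mem_of_mem_erase hx)) ?_ s (Finset.mem_erase.2 ⟨hsm, hs⟩)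
        intro x hx
        refine Finset.mem_erase.2 ⟨?_, hf x (Finset.mem_of_mem_erase hx)⟩
        intro h
        exact (Finset.mem_erase.1 hx).1 (hinj (h.trans hmf.symm))
  intro S hP hf s hs
  exact key S.card S rfl hP hf s hs

/-- For a field `F` with algebraic closure `Ω`, an involution `σ` in the
absolute Galois group `Gal(F) = Ω ≃ₐ[F] Ω` with fixed field `K = Fix(σ)`, the
normaliser of the subgroup `H = {τ | τ fixes K pointwise}` in `Gal(F)` equals `H`. -/
theorem normalizer_fixingSubgroup_of_involution
    (F Ω : Type*) [Field F] [Field Ω] [Algebra F Ω] [IsAlgClosure F Ω]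
    (σ : Ω ≃ₐ[F] Ω) (hσ2 : σ * σ = 1) (hσ1 : σ ≠ 1)
    (K : IntermediateField F Ω) (hK : ∀ x : Ω, x ∈ K ↔ σ x = x)
    (H : Subgroup (Ω ≃ₐ[F] Ω)) (hH : ∀ τ : Ω ≃ₐ[F] Ω, τ ∈ H ↔ ∀ x ∈ K, τ x = x) :
    Subgroup.normalizer (H : Set (Ω ≃ₐ[F] Ω)) = H := by
  classical
  have hAC : IsAlgClosed Ω := IsAlgClosure.isAlgClosed F
  have hσapp : ∀ x : Ω, σ (σ x) = x := by
    intro x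
    have h1 : (σ * σ) x = (1 : Ω ≃ₐ[F] Ω) x := by rw [hσ2]
    simpa using h1
  have h2K : (2 : Ω) ∈ K := (hK 2).2 (map_ofNat σ 2)
  apply le_antisymm ?_ Subgroup.le_normalizer
  intro τ hτ
  rw [hH]
  -- τ maps K into K
  have hσH : σ ∈ H := (hH σ).2 (fun y hy => (hK y).1 hy)
  have hτK : ∀ x ∈ K, τ x ∈ K := by
    intro x hx
    have hgrp : τ * (τ⁻¹ * σ * τ) * τ⁻¹ = σ := by group
    have hmem : τ⁻¹ * σ * τ ∈ H := by
      rw [Subgroup.mem_normalizer_iff] at hτ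
      exact (hτ _).2 (by rw [hgrp]; exact hσH)
    have h3 : (τ⁻¹ * σ * τ) x = x := (hH _).1 hmem x hx
    have h4 : σ (τ x) = τ x := by
      have he : σ * τ = τ * (τ⁻¹ * σ * τ) := by group
      calc σ (τ x) = (σ * τ) x := (AlgEquiv.mul_apply σ τ x).symm
        _ = (τ * (τ⁻¹ * σ * τ)) x := by rw [he]
        _ = τ ((τ⁻¹ * σ * τ) x) := AlgEquiv.mul_apply _ _ x
        _ = τ x := by rw [h3]
    exact (hK _).2 h4
  -- some element not fixed by σ
  obtain ⟨t, ht⟩ : ∃ t : Ω, σ t ≠ t := by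
    by_contra h
    push_neg at h
    exact hσ1 (AlgEquiv.ext h)
  have htK : t ∉ K := fun h => ht ((hK t).1 h)
  -- uniqueness helper
  have huniq : ∀ w : Ω, w ∉ K → ∀ v : Ω, v ∈ K → v * w ∈ K → v = 0 := by
    intro w hwK v hv hvw
    by_contra h0
    apply hwK
    have hw : w = (v * w) * v⁻¹ := by field_simp
    rw [hw]
    exact mul_mem hvw (inv_mem hv)
  by_cases h2 : (2 : Ω) = 0
  · -- characteristic 2: no involution can exist
    exfalso
    have htr : t + σ t ≠ 0 := by
      intro h
      apply ht
      have h' : σ t = -t := by linear_combination h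
      rw [h']
      linear_combination -t * h2
    set s := t + σ t with hs
    have hsK : s ∈ K := (hK s).2 (by rw [hs, map_add, hσapp]; ring)
    have hσs : σ s = s := (hK s).1 hsK
    set θ := s⁻¹ * t with hθ
    clear_value θ
    have hσθ : σ θ = 1 - θ := by
      rw [hθ, map_mul, map_inv₀, hσs]
      field_simp
      linear_combination hs
    have hθnotK : θ ∉ K := by
      intro h
      have h' : 1 - θ = θ := by rw [← hσθ]; exact (hK θ).1 h
      have h1 : (1 : Ω) = 0 := by linear_combination h' + θ * h2
      exact one_ne_zero h1
    set c := θ ^ 2 - θ with hc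
    clear_value c
    have hcK : c ∈ K := (hK c).2 (by rw [hc, map_sub, map_pow, hσθ]; ring)
    obtain ⟨y, hy⟩ : ∃ y : Ω, y ^ 2 - y - c * θ = 0 := by
      obtain ⟨z, hz⟩ := IsAlgClosed.exists_root
        (Polynomial.C 1 * Polynomial.X ^ 2 + Polynomial.C (-1) * Polynomial.X
          + Polynomial.C (-(c * θ)))
        (by rw [Polynomial.degree_quadratic one_ne_zero]; norm_num)
      refine ⟨z, ?_⟩
      have hz' := hz
      simp [Polynomial.IsRoot] at hz'
      linear_combination hz'
    set v := y - σ y with hv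
    clear_value v
    have hvK : v ∈ K := by
      apply (hK v).2
      rw [hv, map_sub, hσapp]
      linear_combination (σ y - y) * h2
    set u := y - v * θ with hu
    clear_value u
    have huK : u ∈ K := by
      apply (hK u).2
      rw [hu, map_sub, map_mul, hσθ, (hK v).1 hvK]
      linear_combination hv + (v * θ - v) * h2
    have hyuv : y = u + v * θ := by rw [hu]; ring
    rw [hyuv] at hy
    have hveq : v ^ 2 - v = c := by
      by_contra hne
      apply hθnotK
      have key : (v ^ 2 - v - c) * θ = -(u ^ 2 + c * v ^ 2 - u) := by
        linear_combination hy + v ^ 2 * hc - u * v * θ * h2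
      have hne' : v ^ 2 - v - c ≠ 0 := fun h => hne (by linear_combination h)
      have hθval : θ = -(u ^ 2 + c * v ^ 2 - u) / (v ^ 2 - v - c) := by
        rw [eq_div_iff hne']
        linear_combination key
      rw [hθval]
      exact div_mem (neg_mem (sub_mem (add_mem (pow_mem huK 2)
        (mul_mem hcK (pow_mem hvK 2))) huK))
        (sub_mem (sub_mem (pow_mem hvK 2) hvK) hcK)
    have hfact : (v - θ) * (v + θ - 1) = 0 := by linear_combination hveq + hc
    rcases mul_eq_zero.1 hfact with h | h
    · apply hθnotK
      have : θ = v := by linear_combination -h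
      rw [this]; exact hvK
    · apply hθnotK
      have : θ = 1 - v := by linear_combination h
      rw [this]; exact sub_mem (one_mem K) hvK
  · -- characteristic ≠ 2
    intro x hx
    set θ := t - σ t with hθd
    clear_value θ
    have hσθ : σ θ = -θ := by rw [hθd, map_sub, hσapp]; ring
    have hθ0 : θ ≠ 0 := by rw [hθd, sub_ne_zero]; exact fun h => ht h.symm
    have hθK : θ ∉ K := by
      intro h
      have h' : -θ = θ := by rw [← hσθ]; exact (hK θ).1 h
      have h2θ : (2 : Ω) * θ = 0 := by linear_combination -h'
      rcases mul_eq_zero.1 h2θ with h'' | h''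
      · exact h2 h''
      · exact hθ0 h''
    -- representation lemma
    have hrep : ∀ w : Ω, σ w = -w → w ≠ 0 → ∀ z : Ω,
        ∃ u v, u ∈ K ∧ v ∈ K ∧ z = u + v * w := by
      intro w hw hw0 z
      have h2w : (2 : Ω) * w ≠ 0 := mul_ne_zero h2 hw0
      have h2w' : (2 : Ω) * -w ≠ 0 := mul_ne_zero h2 (neg_ne_zero.2 hw0)
      refine ⟨(z + σ z) / 2, (z - σ z) / (2 * w), ?_, ?_, ?_⟩
      · apply (hK _).2
        rw [map_div₀, map_add, hσapp, map_ofNat]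
        ring
      · apply (hK _).2
        rw [map_div₀, map_sub, map_mul, map_ofNat, hσapp, hw]
        rw [div_eq_div_iff h2w' h2w]
        ring
      · field_simp [h2, hw0]
        ring
    -- square root of -1
    obtain ⟨i, hi⟩ : ∃ i : Ω, i ^ 2 = -1 := IsAlgClosed.exists_pow_nat_eq (-1 : Ω) (by norm_num)
    have hi0 : i ≠ 0 := by
      intro h
      rw [h] at hi
      norm_num at hi
    have hiK : i ∉ K := by
      intro hiK
      obtain ⟨sq, hsq⟩ : ∃ sq : Ω, sq ^ 2 = θ := IsAlgClosed.exists_pow_nat_eq θ (by norm_num)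
      obtain ⟨u, v, hu, hv, hsuv⟩ := hrep θ hσθ hθ0 sq
      have haK : θ ^ 2 ∈ K := (hK _).2 (by rw [map_pow, hσθ]; ring)
      rw [hsuv] at hsq
      have hwθ : (2 * u * v - 1) * θ = -(u ^ 2) - v ^ 2 * θ ^ 2 := by linear_combination hsq
      have hmemw : (2 * u * v - 1) * θ ∈ K := by
        rw [hwθ]
        exact sub_mem (neg_mem (pow_mem hu 2)) (mul_mem (pow_mem hv 2) haK)
      have h10 : 2 * u * v - 1 = 0 :=
        huniq θ hθK _ (sub_mem (mul_mem (mul_mem h2K hu) hv) (one_mem K)) hmemw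
      have hv0 : v ≠ 0 := by
        intro h
        rw [h] at h10
        norm_num at h10
      have hu2 : u ^ 2 + v ^ 2 * θ ^ 2 = 0 := by linear_combination hwθ - θ * h10
      set k := i * u / v with hk
      clear_value k
      have hkK : k ∈ K := by rw [hk]; exact div_mem (mul_mem hiK hu) hv
      have hθk : θ ^ 2 = k ^ 2 := by
        rw [hk]
        field_simp
        linear_combination hu2 - u ^ 2 * hi
      have hfac : (θ - k) * (θ + k) = 0 := by linear_combination hθk
      rcases mul_eq_zero.1 hfac with h | h
      · apply hθK
        have : θ = k := by linear_combination h
        rw [this]; exact hkK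
      · apply hθK
        have : θ = -k := by linear_combination h
        rw [this]; exact neg_mem hkK
    have hσi : σ i = -i := by
      have hsi2 : (σ i) ^ 2 = -1 := by rw [← map_pow, hi, map_neg, map_one]
      have h' : (σ i - i) * (σ i + i) = 0 := by linear_combination hsi2 - hi
      rcases mul_eq_zero.1 h' with h | h
      · exact absurd ((hK i).2 (by linear_combination h)) hiK
      · linear_combination h
    -- total squares
    have sqK : ∀ z : Ω, z ∈ K → (∃ u, u ∈ K ∧ u ^ 2 = z) ∨ (∃ u, u ∈ K ∧ u ^ 2 = -z) := by
      intro z hz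
      obtain ⟨sq, hsq⟩ : ∃ sq : Ω, sq ^ 2 = z := IsAlgClosed.exists_pow_nat_eq z (by norm_num)
      obtain ⟨u, v, hu, hv, hsuv⟩ := hrep i hσi hi0 sq
      rw [hsuv] at hsq
      have hcross : (2 * u * v) * i = z - u ^ 2 + v ^ 2 := by linear_combination hsq - v ^ 2 * hi
      have hzK' : z - u ^ 2 + v ^ 2 ∈ K := add_mem (sub_mem hz (pow_mem hu 2)) (pow_mem hv 2)
      have h0 : 2 * u * v = 0 := huniq i hiK _ (mul_mem (mul_mem h2K hu) hv) (hcross ▸ hzK')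
      have huv : u * v = 0 := by
        rcases mul_eq_zero.1 (show (2 : Ω) * (u * v) = 0 by linear_combination h0) with h | h
        · exact absurd h h2
        · exact h
      rcases mul_eq_zero.1 huv with h | h
      · right
        rw [h] at hsq
        exact ⟨v, hv, by linear_combination -hsq + v ^ 2 * hi⟩
      · left
        rw [h] at hsq
        exact ⟨u, hu, by linear_combination hsq⟩
    -- sums of squares
    have sqsum : ∀ a b : Ω, a ∈ K → b ∈ K → ∃ k, k ∈ K ∧ k ^ 2 = a ^ 2 + b ^ 2 := by
      intro a b ha hb
      obtain ⟨sq, hsq⟩ : ∃ sq : Ω, sq ^ 2 = a + b * i :=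
        IsAlgClosed.exists_pow_nat_eq _ (by norm_num)
      refine ⟨sq * σ sq, (hK _).2 (by rw [map_mul, hσapp]; ring), ?_⟩
      have hσs2 : (σ sq) ^ 2 = a - b * i := by
        rw [← map_pow, hsq, map_add, map_mul, hσi, (hK a).1 ha, (hK b).1 hb]
        ring
      calc (sq * σ sq) ^ 2 = sq ^ 2 * (σ sq) ^ 2 := by ring
        _ = (a + b * i) * (a - b * i) := by rw [hsq, hσs2]
        _ = a ^ 2 + b ^ 2 := by linear_combination -b ^ 2 * hi
    -- the order
    set le : Ω → Ω → Prop := fun a b => ∃ u, u ∈ K ∧ u ^ 2 = b - a with hledef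
    have hrefl : ∀ a : Ω, a ∈ K → le a a := fun a _ => ⟨0, zero_mem K, by ring⟩
    have htot : ∀ a b : Ω, a ∈ K → b ∈ K → le a b ∨ le b a := by
      intro a b ha hb
      rcases sqK (b - a) (sub_mem hb ha) with ⟨u, hu, h⟩ | ⟨u, hu, h⟩
      · exact Or.inl ⟨u, hu, h⟩
      · exact Or.inr ⟨u, hu, by linear_combination h⟩
    have htrans : ∀ a b c : Ω, a ∈ K → b ∈ K → c ∈ K → le a b → le b c → le a c := by
      rintro a b c _ _ _ ⟨u, hu, h1⟩ ⟨w, hw, hh2⟩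
      obtain ⟨k, hk, hk2⟩ := sqsum u w hu hw
      exact ⟨k, hk, by rw [hk2]; linear_combination h1 + hh2⟩
    have hanti : ∀ a b : Ω, a ∈ K → b ∈ K → le a b → le b a → a = b := by
      rintro a b _ _ ⟨u, hu, h1⟩ ⟨w, hw, hh2⟩
      have hsum : u ^ 2 + w ^ 2 = 0 := by linear_combination h1 + hh2
      have hfac : (w - i * u) * (w + i * u) = 0 := by linear_combination hsum - u ^ 2 * hi
      have hu0 : u = 0 := by
        by_contra h0
        rcases mul_eq_zero.1 hfac with h | h
        · apply hiK
          have hiw : i = w / u := by field_simp; linear_combination -h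
          rw [hiw]; exact div_mem hw hu
        · apply hiK
          have hiw : i = -(w / u) := by field_simp; linear_combination h
          rw [hiw]; exact neg_mem (div_mem hw hu)
      rw [hu0] at h1
      linear_combination h1
    -- τ is monotone on K
    have hmono : ∀ a b : Ω, a ∈ K → b ∈ K → le a b → le (τ a) (τ b) := by
      rintro a b ha hb ⟨u, hu, h⟩
      exact ⟨τ u, hτK u hu, by rw [← map_sub, ← h, map_pow]⟩
    -- finite set of conjugates of x
    have hint : IsIntegral F x := Algebra.IsIntegral.isIntegral x
    set p := minpoly F x with hpdef
    have hmap0 : p.map (algebraMap F Ω) ≠ 0 :=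
      Polynomial.map_ne_zero (minpoly.ne_zero hint)
    set T := ((p.map (algebraMap F Ω)).roots.toFinset).filter (· ∈ K) with hT
    have hT1 : ∀ s ∈ T, s ∈ K := fun s hs => (Finset.mem_filter.1 hs).2
    have hroot : ∀ z : Ω, z ∈ K → Polynomial.aeval z p = 0 → z ∈ T := by
      intro z hzK hz
      refine Finset.mem_filter.2 ⟨Multiset.mem_toFinset.2 (Polynomial.mem_roots'.2
        ⟨hmap0, ?_⟩), hzK⟩
      rw [Polynomial.IsRoot, Polynomial.eval_map, ← Polynomial.aeval_def]
      exact hz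
    have hxT : x ∈ T := hroot x hx (minpoly.aeval F x)
    have hT2 : ∀ s ∈ T, τ s ∈ T := by
      intro s hs
      obtain ⟨hs1, hs2⟩ := Finset.mem_filter.1 hs
      rw [Multiset.mem_toFinset, Polynomial.mem_roots'] at hs1
      have haeval : Polynomial.aeval s p = 0 := by
        rw [Polynomial.aeval_def, ← Polynomial.eval_map]
        exact hs1.2
      apply hroot _ (hτK s hs2)
      have h' := Polynomial.aeval_algHom_apply (τ : Ω →ₐ[F] Ω) s p
      simpa [haeval] using h'
    exact aux_fix (· ∈ K) le hrefl htot htrans hanti τ τ.injective hmono T hT1 hT2 x hxT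
end

section
/- Let F be a field and Ω a fixed algebraic closure of F. The set Inv(Gal(F)) = {σ ∈ Gal(F) : σ² = id and σ ≠ id} of involutions is a closed subset of the absolute Galois group Gal(F) equipped with the Krull topology. -/
/-!
An involution `σ` of an algebraically closed field that fixes `i` with `i * i = -1` is the
identity. In characteristic `≠ 2`, if `σ` moves `t`, then `α := t - σ t` has `σ α = -α`;
writing `α = β * β`, the norm `c := β * σ β` is fixed, so `c / α` is a square root of `-1`
moved by `σ`, whereas both `±i` are fixed. In characteristic `2`, a moved element can be
rescaled to `θ` with `σ θ = θ + 1`, so `a := θ * θ + θ` is fixed; for `β * β + β = a * θ`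
the trace `β + σ β` is a fixed root of `z * z + z = a`, whose only roots `θ, θ + 1` are moved.

Hence the involutions are the `σ` with `σ * σ = 1` lying outside the open subgroup fixing
`F(i)`, an intersection of two closed sets.
-/

open Polynomial in
theorem IsAlgClosed.exists_mul_self_add_eq {k : Type*} [Field k] [IsAlgClosed k] (a : k) :
    ∃ z : k, z * z + z = a := by
  have hdeg : (X ^ 2 + X - C a : k[X]).degree = 2 := by compute_degree!
  obtain ⟨z, hz⟩ := IsAlgClosed.exists_root (X ^ 2 + X - C a) (by rw [hdeg]; norm_num)
  refine ⟨z, ?_⟩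
  simp only [IsRoot, eval_sub, eval_add, eval_pow, eval_X, eval_C] at hz
  linear_combination hz

section Involution

variable {K : Type*} [Field K] [IsAlgClosed K] {σ : K →+* K}

theorem eq_id_of_involutive_of_two_eq_zero (hσ : Function.Involutive σ) (h2 : (2 : K) = 0) :
    σ = RingHom.id K := by
  by_contra hne
  obtain ⟨t, ht⟩ : ∃ t, σ t ≠ t := by
    by_contra! h
    exact hne (RingHom.ext h)
  set s := t + σ t with hs
  have hσs : σ s = s := by rw [hs, map_add, hσ]; ring
  have hs0 : s ≠ 0 := fun h => ht (by linear_combination h - t * h2)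
  set θ := t / s
  have hσθ : σ θ = θ + 1 := by
    have hσt : σ t = t + s := by rw [hs]; linear_combination (-t) * h2
    rw [map_div₀, hσs, hσt, add_div, div_self hs0]
  set a := θ * θ + θ with ha
  have hσa : σ a = a := by
    rw [ha, map_add, map_mul, hσθ]
    linear_combination (θ + 1) * h2
  obtain ⟨β, hβ⟩ := IsAlgClosed.exists_mul_self_add_eq (a * θ)
  have hσβ : σ β * σ β + σ β = a * (θ + 1) := by
    simpa only [map_add, map_mul, hσa, hσθ] using congrArg σ hβ
  set y := β + σ β with hy
  have hσy : σ y = y := by rw [hy, map_add, hσ]; ring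
  have hroots : (θ + y) * (θ + y + 1) = 0 := by
    linear_combination hβ + hσβ - ha + (a + θ * y + a * θ + β * σ β) * h2
  have hσθ_fixed : σ θ = θ := by
    rcases mul_eq_zero.mp hroots with h | h
    · rw [eq_neg_of_add_eq_zero_left h, map_neg, hσy]
    · rw [show θ = -y - 1 by linear_combination h, map_sub, map_neg, hσy, map_one]
  exact one_ne_zero (by linear_combination hσθ_fixed - hσθ : (1 : K) = 0)

theorem exists_mul_self_eq_neg_one_and_apply_eq_neg (hσ : Function.Involutive σ)
    {t : K} (ht : σ t ≠ t) : ∃ j : K, j * j = -1 ∧ σ j = -j := by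
  set α := t - σ t with hα
  have hσα : σ α = -α := by rw [hα, map_sub, hσ]; ring
  have hα0 : α ≠ 0 := fun h => ht (by linear_combination -h)
  obtain ⟨β, hβ⟩ := IsAlgClosed.exists_eq_mul_self α
  have hσβ : -α = σ β * σ β := by simpa only [map_mul, hσα] using congrArg σ hβ
  set c := β * σ β with hc
  have hσc : σ c = c := by rw [hc, map_mul, hσ]; ring
  refine ⟨c / α, ?_, by rw [map_div₀, hσc, hσα, div_neg]⟩
  field_simp
  linear_combination -(σ β * σ β) * hβ - α * hσβ

theorem eq_id_of_involutive_of_map_eq_self (hσ : Function.Involutive σ) {i : K}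
    (hi : i * i = -1) (hσi : σ i = i) : σ = RingHom.id K := by
  by_cases h2 : (2 : K) = 0
  · exact eq_id_of_involutive_of_two_eq_zero hσ h2
  by_contra hne
  obtain ⟨t, ht⟩ : ∃ t, σ t ≠ t := by
    by_contra! h
    exact hne (RingHom.ext h)
  obtain ⟨j, hj, hσj⟩ := exists_mul_self_eq_neg_one_and_apply_eq_neg hσ ht
  have hσj_fixed : σ j = j := by
    rcases mul_self_eq_mul_self_iff.mp (hj.trans hi.symm) with rfl | rfl
    · exact hσi
    · rw [map_neg, hσi]
  have hj0 : j = 0 :=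
    (mul_eq_zero.mp (by linear_combination hσj - hσj_fixed : 2 * j = 0)).resolve_left h2
  exact one_ne_zero (by simpa [hj0] using hj.symm : (1 : K) = 0)

end Involution

open IntermediateField in
theorem AlgEquiv.eq_one_of_mul_self_eq_one_of_mem_fixingSubgroup {F Ω : Type*} [Field F]
    [Field Ω] [Algebra F Ω] [IsAlgClosed Ω] {i : Ω} (hi : i * i = -1) {σ : Ω ≃ₐ[F] Ω}
    (hσ : σ * σ = 1) (hσi : σ ∈ F⟮i⟯.fixingSubgroup) : σ = 1 := by
  have hinv : Function.Involutive σ := fun x => by simpa using DFunLike.congr_fun hσ x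
  have hid := eq_id_of_involutive_of_map_eq_self (σ := (σ : Ω →+* Ω)) hinv hi
    (hσi ⟨i, mem_adjoin_simple_self F i⟩)
  exact AlgEquiv.ext fun x => RingHom.congr_fun hid x

/-- For a field `F` with algebraic closure `Ω`, the set of involutions
in the absolute Galois group `Gal(F) = Ω ≃ₐ[F] Ω` is closed in the Krull topology. -/
theorem isClosed_involutions_absoluteGaloisGroup
    (F Ω : Type*) [Field F] [Field Ω] [Algebra F Ω] [IsAlgClosure F Ω] :
    IsClosed {σ : Ω ≃ₐ[F] Ω | σ * σ = 1 ∧ σ ≠ 1} := by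
  have : IsAlgClosed Ω := IsAlgClosure.isAlgClosed F
  obtain ⟨i, hi⟩ := IsAlgClosed.exists_eq_mul_self (-1 : Ω)
  set E := IntermediateField.adjoin F {i}
  have : FiniteDimensional F E :=
    IntermediateField.adjoin.finiteDimensional (Algebra.IsIntegral.isIntegral i)
  have hset : {σ : Ω ≃ₐ[F] Ω | σ * σ = 1 ∧ σ ≠ 1}
      = {σ | σ * σ = 1} ∩ (E.fixingSubgroup : Set (Ω ≃ₐ[F] Ω))ᶜ := by
    ext σ
    refine ⟨fun ⟨hσ, hne⟩ => ⟨hσ, fun hE => hne ?_⟩, fun ⟨hσ, hE⟩ => ⟨hσ, ?_⟩⟩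
    · exact AlgEquiv.eq_one_of_mul_self_eq_one_of_mem_fixingSubgroup hi.symm hσ hE
    · rintro rfl
      exact hE (one_mem _)
  rw [hset]
  exact (isClosed_eq (continuous_id.mul continuous_id) continuous_const).inter
    (IntermediateField.fixingSubgroup_isOpen _).isClosed_compl
end

section
/- Let F be a field, Ω a fixed algebraic closure of F, and σ, τ two involutions in the absolute Galois group Gal(F). Then στσ⁻¹ = τ if and only if σ = τ; equivalently, two involutions in Gal(F) commute if and only if they are equal. -/
section Aux

variable {F Ω : Type*} [Field F] [Field Ω] [Algebra F Ω]

/-- In characteristic 2, an algebraically closed field has no automorphism of order 2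
(elementary Artin–Schreier argument). -/
lemma no_involution_char_two [IsAlgClosed Ω] (σ : Ω ≃ₐ[F] Ω)
    (h2 : (2 : Ω) = 0) (hσ2 : σ * σ = 1) (hσ1 : σ ≠ 1) : False := by
  have hσσ : ∀ x : Ω, σ (σ x) = x := fun x => by
    have := DFunLike.congr_fun hσ2 x
    simpa using this
  have : ∃ c : Ω, σ c ≠ c := by
    by_contra h
    push_neg at h
    exact hσ1 (AlgEquiv.ext h)
  obtain ⟨c, hc⟩ := this
  set t : Ω := c + σ c with ht
  have hσt : σ t = t := by rw [ht, map_add, hσσ]; ring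
  have htne : t ≠ 0 := by
    intro h0
    apply hc
    have : σ c = -c := by linear_combination h0 - ht
    rw [this]
    linear_combination -c * h2
  set α : Ω := c / t with hα
  have hασ : α + σ α = 1 := by
    rw [hα, map_div₀, hσt]
    field_simp
    exact ht.symm
  have hσα : σ α = 1 - α := by linear_combination hασ
  set a : Ω := α ^ 2 + α with ha
  have hσa : σ a = a := by
    rw [ha, map_add, map_pow, hσα]
    linear_combination (1 - 2 * α) * h2
  obtain ⟨y, hy⟩ : ∃ y : Ω, y ^ 2 + y = a * α := by
    obtain ⟨y, hy⟩ := IsAlgClosed.exists_root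
      (Polynomial.C 1 * Polynomial.X ^ 2 + Polynomial.C 1 * Polynomial.X
        + Polynomial.C (-(a * α)))
      (by rw [Polynomial.degree_quadratic one_ne_zero]; norm_num)
    refine ⟨y, ?_⟩
    simp only [Polynomial.IsRoot, Polynomial.eval_add, Polynomial.eval_mul,
      Polynomial.eval_pow, Polynomial.eval_C, Polynomial.eval_X] at hy
    linear_combination hy
  set v : Ω := y + σ y with hv
  have hσv : σ v = v := by rw [hv, map_add, hσσ]; ring
  have hσy : σ y ^ 2 + σ y = a * σ α := by
    rw [← map_pow, ← map_add, hy, map_mul, hσa]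
  have hva : v ^ 2 + v = a := by
    have expand : v ^ 2 + v = (y ^ 2 + y) + (σ y ^ 2 + σ y) + 2 * (y * σ y) := by
      rw [hv]; ring
    rw [expand, hy, hσy, hσα]
    linear_combination (y * σ y) * h2
  have hfac : (v - α) * (v + α + 1) = 0 := by
    have : v ^ 2 + v = α ^ 2 + α := by rw [hva, ha]
    linear_combination this
  have hαfix : σ α = α := by
    rcases mul_eq_zero.mp hfac with h | h
    · have : v = α := by linear_combination h
      rw [← this, hσv, this]
    · have hvα : v = -α - 1 := by linear_combination h
      have h1 : σ (-α - 1) = -α - 1 := by rw [← hvα, hσv]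
      have h' : -(σ α) - 1 = -α - 1 := by
        rw [← h1, map_sub, map_neg, map_one]
      linear_combination -h'
  rw [hσα] at hαfix
  apply one_ne_zero (α := Ω)
  linear_combination hαfix + α * h2

/-- In characteristic ≠ 2, any order-2 automorphism of an algebraically closed field
sends a square root of -1 to its negative. -/
lemma involution_apply_i [IsAlgClosed Ω] (σ : Ω ≃ₐ[F] Ω) (h2 : (2 : Ω) ≠ 0)
    (i : Ω) (hi : i ^ 2 = -1) (hσ2 : σ * σ = 1) (hσ1 : σ ≠ 1) : σ i = -i := by
  have hσσ : ∀ x : Ω, σ (σ x) = x := fun x => by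
    have := DFunLike.congr_fun hσ2 x
    simpa using this
  have hcases : σ i = i ∨ σ i = -i := by
    have h0 : (σ i - i) * (σ i + i) = 0 := by
      have h1 : σ i ^ 2 = -1 := by rw [← map_pow, hi, map_neg, map_one]
      linear_combination h1 - hi
    rcases mul_eq_zero.mp h0 with h | h
    · left; linear_combination h
    · right; linear_combination h
  rcases hcases with hfix | h
  · exfalso
    -- every σ-fixed element has a σ-fixed square root
    have sqrt_fixed : ∀ e : Ω, σ e = e → ∃ s : Ω, σ s = s ∧ s ^ 2 = e := by
      intro e he
      obtain ⟨s, hs⟩ := IsAlgClosed.exists_pow_nat_eq e (n := 2) (by norm_num)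
      have hσs : σ s = s ∨ σ s = -s := by
        have h0 : (σ s - s) * (σ s + s) = 0 := by
          have h1 : σ s ^ 2 = e := by rw [← map_pow, hs, he]
          linear_combination h1 - hs
        rcases mul_eq_zero.mp h0 with h | h
        · left; linear_combination h
        · right; linear_combination h
      rcases hσs with h | h
      · exact ⟨s, h, hs⟩
      · by_cases hs0 : s = 0
        · exact ⟨s, by rw [hs0, map_zero], hs⟩
        exfalso
        obtain ⟨u, hu⟩ := IsAlgClosed.exists_pow_nat_eq s (n := 2) (by norm_num)
        have hu0 : u ≠ 0 := by
          intro h0; apply hs0; rw [← hu, h0]; ring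
        have hσu2 : (σ u - i * u) * (σ u + i * u) = 0 := by
          have h1 : σ u ^ 2 = -s := by rw [← map_pow, hu, h]
          linear_combination h1 - u ^ 2 * hi + hu
        have huu : u = -u := by
          rcases mul_eq_zero.mp hσu2 with h' | h'
          · have hw : σ u = i * u := by linear_combination h'
            have : σ (σ u) = i * (i * u) := by rw [hw, map_mul, hfix, hw]
            rw [hσσ] at this
            linear_combination this + u * hi
          · have hw : σ u = -(i * u) := by linear_combination h'
            have : σ (σ u) = -(i * (-(i * u))) := by rw [hw, map_neg, map_mul, hfix, hw]
            rw [hσσ] at this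
            linear_combination this + u * hi
        apply hu0
        have := mul_eq_zero.mp (show (2 : Ω) * u = 0 by linear_combination huu)
        tauto
    -- now σ fixes everything, contradiction
    apply hσ1
    apply AlgEquiv.ext
    intro x
    rw [AlgEquiv.one_apply]
    set b : Ω := x + σ x with hb
    have hσb : σ b = b := by rw [hb, map_add, hσσ]; ring
    set c : Ω := x * σ x with hc
    have hσc : σ c = c := by rw [hc, map_mul, hσσ]; ring
    have he : σ ((b / 2) ^ 2 - c) = (b / 2) ^ 2 - c := by
      rw [map_sub, map_pow, map_div₀, hσb, hσc, map_ofNat]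
    obtain ⟨s, hσs, hs⟩ := sqrt_fixed _ he
    have hsq : (x - b / 2) ^ 2 = s ^ 2 := by
      rw [hs, hb, hc]
      field_simp
      ring
    have : (x - b / 2 - s) * (x - b / 2 + s) = 0 := by linear_combination hsq
    rcases mul_eq_zero.mp this with h' | h'
    · have hx : x = b / 2 + s := by linear_combination h'
      rw [hx, map_add, map_div₀, hσb, hσs, map_ofNat]
    · have hx : x = b / 2 - s := by linear_combination h'
      rw [hx, map_sub, map_div₀, hσb, hσs, map_ofNat]
  · exact h

end Aux

/-- For involutions `σ`, `τ` in the absolute Galois group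
`Gal(F) = Ω ≃ₐ[F] Ω` of a field `F`, we have `σ τ σ⁻¹ = τ` if and only if `σ = τ`. -/
theorem involution_conj_fixed_iff_eq
    (F Ω : Type*) [Field F] [Field Ω] [Algebra F Ω] [IsAlgClosure F Ω]
    (σ τ : Ω ≃ₐ[F] Ω) (hσ2 : σ * σ = 1) (hσ1 : σ ≠ 1) (hτ2 : τ * τ = 1) (hτ1 : τ ≠ 1) :
    σ * τ * σ⁻¹ = τ ↔ σ = τ := by
  have := IsAlgClosure.isAlgClosed (R := F) (K := Ω)
  constructor
  · intro h
    have hcomm : σ * τ = τ * σ := by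
      have := congrArg (· * σ) h
      simpa [mul_assoc] using this
    by_cases hρ : σ * τ = 1
    · have hτinv : τ⁻¹ = τ := inv_eq_of_mul_eq_one_left hτ2
      calc σ = σ * τ * τ⁻¹ := by group
        _ = τ⁻¹ := by rw [hρ, one_mul]
        _ = τ := hτinv
    · exfalso
      have hρ2 : (σ * τ) * (σ * τ) = 1 := by
        calc (σ * τ) * (σ * τ) = σ * (τ * σ) * τ := by group
          _ = σ * (σ * τ) * τ := by rw [hcomm]
          _ = (σ * σ) * (τ * τ) := by group
          _ = 1 := by rw [hσ2, hτ2, one_mul]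
      by_cases h2 : (2 : Ω) = 0
      · exact no_involution_char_two σ h2 hσ2 hσ1
      · obtain ⟨i, hi⟩ := IsAlgClosed.exists_pow_nat_eq (-1 : Ω) (n := 2) (by norm_num)
        have hσi := involution_apply_i σ h2 i hi hσ2 hσ1
        have hτi := involution_apply_i τ h2 i hi hτ2 hτ1
        have hρi := involution_apply_i (σ * τ) h2 i hi hρ2 hρ
        have : (σ * τ) i = i := by
          show σ (τ i) = i
          rw [hτi, map_neg, hσi]; ring
        rw [hρi] at this
        have hi0 : i = 0 := by
          have := mul_eq_zero.mp (show (2 : Ω) * i = 0 by linear_combination -this)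
          tauto
        rw [hi0] at hi
        apply one_ne_zero (α := Ω)
        linear_combination hi
  · rintro rfl
    exact mul_inv_cancel_right σ σ
end

section
/- Let F be a field and Ω a fixed algebraic closure of F. If the absolute Galois group Gal(F) contains two distinct involutions, then it contains infinitely many involutions. -/
open Finset Polynomial

section ArtinSchreierHelpers

variable {F Ω : Type*} [Field F] [Field Ω] [Algebra F Ω]

private lemma apow_fixed (s : Ω ≃ₐ[F] Ω) {x : Ω} (hx : s x = x) : ∀ i : ℕ, (s ^ i) x = x := by
  intro i
  induction i with
  | zero => simp
  | succ n ih => rw [pow_succ', AlgEquiv.mul_apply, ih, hx]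


private lemma shift_sum {p : ℕ} (g : ℕ → Ω) (hg : g p = g 0) :
    ∑ i ∈ range p, g (i + 1) = ∑ i ∈ range p, g i := by
  have h1 := Finset.sum_range_succ' g p
  have h2 := Finset.sum_range_succ g p
  rw [h1] at h2
  rw [hg] at h2
  exact add_right_cancel h2


private lemma shift_prod {p : ℕ} (g : ℕ → Ω) (hg : g p = g 0) (hg0 : g 0 ≠ 0) :
    ∏ i ∈ range p, g (i + 1) = ∏ i ∈ range p, g i := by
  have h2 := Finset.prod_range_succ g p
  rw [Finset.prod_range_succ' g p, hg] at h2
  exact mul_right_cancel₀ hg0 h2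


private lemma map_sum_pow (s : Ω ≃ₐ[F] Ω) {p : ℕ} (hsp : s ^ p = 1) (c : Ω) :
    s (∑ i ∈ range p, (s ^ i) c) = ∑ i ∈ range p, (s ^ i) c := by
  have h1 : s (∑ i ∈ range p, (s ^ i) c) = ∑ i ∈ range p, (s ^ (i + 1)) c := by
    rw [map_sum]
    exact Finset.sum_congr rfl fun i _ => by rw [pow_succ', AlgEquiv.mul_apply]
  rw [h1]
  exact shift_sum (fun i => (s ^ i) c) (by show (s ^ p) c = (s ^ 0) c; rw [hsp, pow_zero])


private lemma exists_comb_ne_zero {p : ℕ} (hp : 1 < p) (s : Ω ≃ₐ[F] Ω) (hord : orderOf s = p)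
    (γ : ℕ → Ω) (hγ : ∀ i < p, γ i ≠ 0) :
    ∃ c : Ω, ∑ i ∈ range p, γ i * (s ^ i) c ≠ 0 := by
  by_contra hall
  push_neg at hall
  have hLI : LinearIndependent Ω (M := Ω → Ω) (fun f => f : (Ω →* Ω) → Ω → Ω) :=
    linearIndependent_monoidHom Ω Ω
  have hinj : Function.Injective (fun i : Fin p => ((s ^ (i : ℕ) : Ω ≃ₐ[F] Ω) : Ω →* Ω)) := by
    intro i j hij
    have : (s ^ (i : ℕ) : Ω ≃ₐ[F] Ω) = s ^ (j : ℕ) := by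
      apply AlgEquiv.ext
      intro x
      exact DFunLike.congr_fun hij x
    have := pow_injOn_Iio_orderOf (x := s) (by simpa [hord] using i.2) (by simpa [hord] using j.2) this
    exact Fin.ext this
  have hLI2 : LinearIndependent Ω (fun i : Fin p => (((s ^ (i : ℕ) : Ω ≃ₐ[F] Ω) : Ω →* Ω) : Ω → Ω)) :=
    hLI.comp _ hinj
  have hzero : ∑ i : Fin p, γ (i : ℕ) • (((s ^ (i : ℕ) : Ω ≃ₐ[F] Ω) : Ω →* Ω) : Ω → Ω) = 0 := by
    funext c
    have := hall c
    simpa [Finset.sum_apply, Finset.sum_range, smul_eq_mul] using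
      (Finset.sum_range (fun i => γ i * (s ^ i) c)).symm.trans this
  have := (Fintype.linearIndependent_iff.mp hLI2) (fun i => γ (i : ℕ)) hzero
  have := this ⟨0, by omega⟩
  exact hγ 0 (by omega) this


/-- No automorphism of order `p` of an algebraically closed field of characteristic `p`. -/
private lemma no_order_char [IsAlgClosed Ω] (p : ℕ) (hp : p.Prime) [CharP Ω p]
    (s : Ω ≃ₐ[F] Ω) (hord : orderOf s = p) : False := by
  haveI : Fact p.Prime := ⟨hp⟩
  classical
  have hsp : s ^ p = 1 := hord ▸ pow_orderOf_eq_one s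
  have hppos : 0 < p := hp.pos
  -- a c' with trace 1
  obtain ⟨c', hTc'⟩ : ∃ c' : Ω, ∑ i ∈ range p, (s ^ i) c' = 1 := by
    obtain ⟨c, hc⟩ := exists_comb_ne_zero hp.one_lt s hord (fun _ => 1) (fun _ _ => one_ne_zero)
    simp only [one_mul] at hc
    have hfix : s ((∑ i ∈ range p, (s ^ i) c)⁻¹) = (∑ i ∈ range p, (s ^ i) c)⁻¹ := by
      rw [map_inv₀, map_sum_pow s hsp]
    refine ⟨(∑ i ∈ range p, (s ^ i) c)⁻¹ * c, ?_⟩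
    have : ∀ i : ℕ, (s ^ i) ((∑ j ∈ range p, (s ^ j) c)⁻¹ * c)
        = (∑ j ∈ range p, (s ^ j) c)⁻¹ * (s ^ i) c := fun i => by
      rw [map_mul, apow_fixed s hfix]
    rw [Finset.sum_congr rfl fun i _ => this i, ← Finset.mul_sum]
    exact inv_mul_cancel₀ hc
  -- x with s x = x + 1
  obtain ⟨x, hsx⟩ : ∃ x : Ω, s x = x + 1 := by
    refine ⟨-∑ i ∈ range p, (i : Ω) * (s ^ i) c', ?_⟩
    have hTshift : ∑ i ∈ range p, (s ^ (i + 1)) c' = 1 := by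
      rw [shift_sum (fun i => (s ^ i) c') (by show (s ^ p) c' = (s ^ 0) c'; rw [hsp, pow_zero])]
      exact hTc'
    have hmap : s (-∑ i ∈ range p, (i : Ω) * (s ^ i) c')
        = -∑ i ∈ range p, (i : Ω) * (s ^ (i + 1)) c' := by
      rw [map_neg, map_sum]
      congr 1
      refine Finset.sum_congr rfl fun i _ => ?_
      rw [map_mul, pow_succ', AlgEquiv.mul_apply]
      congr 1
      exact map_natCast (s : Ω →+* Ω) i
    have key : ∑ i ∈ range p, (i : Ω) * (s ^ (i + 1)) c'
        = ∑ i ∈ range p, (i : Ω) * (s ^ i) c' - 1 := by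
      have h1 : ∀ i ∈ range p, (i : Ω) * (s ^ (i + 1)) c'
          = ((i + 1 : ℕ) : Ω) * (s ^ (i + 1)) c' - (s ^ (i + 1)) c' := by
        intro i _
        push_cast
        ring
      rw [Finset.sum_congr rfl h1, Finset.sum_sub_distrib, hTshift,
        shift_sum (fun j => ((j : Ω) * (s ^ j) c'))
          (by show (p : Ω) * (s ^ p) c' = (0 : ℕ) * (s ^ 0) c'
              rw [hsp, CharP.cast_eq_zero Ω p]; simp)]
    rw [hmap, key]
    ring
  -- a := x^p - x is s-fixed
  have hsa : s (x ^ p - x) = x ^ p - x := by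
    rw [map_sub, map_pow, hsx, add_pow_char, one_pow]
    ring
  -- w s-fixed with w^p - w = x^p - x
  obtain ⟨w, hsw, hwp⟩ : ∃ w : Ω, s w = w ∧ w ^ p - w = x ^ p - x := by
    obtain ⟨v, hv⟩ : ∃ v : Ω, v ^ p - v = (x ^ p - x) * c' := by
      obtain ⟨v, hv⟩ := IsAlgClosed.exists_root
        (X ^ p - (X + C ((x ^ p - x) * c')) : Polynomial Ω) (by
          have hdeg : ((X ^ p - (X + C ((x ^ p - x) * c'))) : Polynomial Ω).degree = p := by
            rw [Polynomial.degree_sub_eq_left_of_degree_lt, degree_X_pow]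
            rw [degree_X_pow]
            calc (X + C ((x ^ p - x) * c') : Polynomial Ω).degree ≤ 1 := by
                  apply Polynomial.degree_add_le_of_degree_le
                  · exact le_of_eq degree_X
                  · exact (degree_C_le).trans (by norm_num)
              _ < p := by exact_mod_cast Nat.one_lt_cast.mpr hp.one_lt
          rw [hdeg]
          exact_mod_cast Nat.cast_ne_zero.mpr hppos.ne')
      simp only [IsRoot.def, eval_sub, eval_add, eval_pow, eval_X, eval_C] at hv
      exact ⟨v, by linear_combination hv⟩
    refine ⟨∑ i ∈ range p, (s ^ i) v, map_sum_pow s hsp v, ?_⟩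
    have hfrob : (∑ i ∈ range p, (s ^ i) v) ^ p = ∑ i ∈ range p, ((s ^ i) v) ^ p :=
      sum_pow_char _ _ _
    rw [hfrob, ← Finset.sum_sub_distrib]
    have h2 : ∀ i ∈ range p, ((s ^ i) v) ^ p - (s ^ i) v = (x ^ p - x) * (s ^ i) c' := by
      intro i _
      rw [← map_pow, ← map_sub, hv, map_mul, apow_fixed s hsa]
    rw [Finset.sum_congr rfl h2, ← Finset.mul_sum, hTc', mul_one]
  -- y := x - w satisfies y^p = y, s y = y + 1
  have hyp : (x - w) ^ p = x - w := by
    have h : (x - w) ^ p - (x - w) = 0 := by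
      rw [sub_pow_char]
      linear_combination -hwp
    linear_combination h
  have hsy : s (x - w) = (x - w) + 1 := by
    rw [map_sub, hsx, hsw]
    ring
  -- x - w is in the prime field, hence s-fixed: contradiction
  have hyin : ∃ k : ZMod p, (ZMod.castHom (dvd_refl p) Ω) k = x - w := by
    by_contra hnone
    push_neg at hnone
    have hdegf : (X ^ p - X : Polynomial Ω).degree = p := by
      rw [Polynomial.degree_sub_eq_left_of_degree_lt, degree_X_pow]
      rw [degree_X_pow, degree_X]
      exact_mod_cast Nat.one_lt_cast.mpr hp.one_lt
    have hf0 : (X ^ p - X : Polynomial Ω) ≠ 0 := by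
      intro h
      rw [h, degree_zero] at hdegf
      exact (by simp : (⊥ : WithBot ℕ) ≠ (p : WithBot ℕ)) hdegf
    have hroot : ∀ z : Ω, z ^ p = z → z ∈ (X ^ p - X : Polynomial Ω).roots := by
      intro z hz
      rw [mem_roots hf0]
      simp [hz]
    have hSsub : insert (x - w) ((Finset.univ : Finset (ZMod p)).image (ZMod.castHom (dvd_refl p) Ω))
        ⊆ (X ^ p - X : Polynomial Ω).roots.toFinset := by
      intro z hz
      rw [Finset.mem_insert] at hz
      rw [Multiset.mem_toFinset]
      rcases hz with rfl | hz
      · exact hroot _ hyp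
      · obtain ⟨k, _, rfl⟩ := Finset.mem_image.mp hz
        exact hroot _ (by rw [← map_pow, ZMod.pow_card])
    have hcardS : (insert (x - w)
        ((Finset.univ : Finset (ZMod p)).image (ZMod.castHom (dvd_refl p) Ω))).card = p + 1 := by
      rw [Finset.card_insert_of_notMem (by
        intro hmem
        obtain ⟨k, _, hk⟩ := Finset.mem_image.mp hmem
        exact hnone k hk)]
      rw [Finset.card_image_of_injective _ (ZMod.castHom (dvd_refl p) Ω).injective,
        Finset.card_univ, ZMod.card]
    have hcard := Finset.card_le_card hSsub
    rw [hcardS] at hcard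
    have h2 := (Multiset.toFinset_card_le (X ^ p - X : Polynomial Ω).roots).trans
      (Polynomial.card_roots' _)
    rw [natDegree_eq_of_degree_eq_some hdegf] at h2
    omega
  obtain ⟨k, hk⟩ := hyin
  have hsy' : s (x - w) = x - w := by
    rw [← hk]
    have : (s : Ω →+* Ω).comp (ZMod.castHom (dvd_refl p) Ω) = ZMod.castHom (dvd_refl p) Ω :=
      RingHom.ext_zmod _ _
    exact DFunLike.congr_fun this k
  rw [hsy'] at hsy
  exact one_ne_zero (by linear_combination -hsy : (1 : Ω) = 0)


/-- No automorphism of odd prime order `p` of an algebraically closed field of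
characteristic different from `p`. -/
private lemma no_order_odd_prime [IsAlgClosed Ω] (p : ℕ) (hp : p.Prime) (hp2 : p ≠ 2)
    (hchar : (p : Ω) ≠ 0) (s : Ω ≃ₐ[F] Ω) (hord : orderOf s = p) : False := by
  haveI : NeZero ((p : ℕ) : Ω) := ⟨hchar⟩
  have hsp : s ^ p = 1 := hord ▸ pow_orderOf_eq_one s
  have hppos : 0 < p := hp.pos
  obtain ⟨ζ, hζ⟩ := HasEnoughRootsOfUnity.exists_primitiveRoot Ω p
  have hζp : ζ ^ p = 1 := hζ.pow_eq_one
  have hζ0 : ζ ≠ 0 := by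
    intro h
    rw [h, zero_pow hppos.ne'] at hζp
    exact zero_ne_one hζp
  have hζ1 : ζ ≠ 1 := by
    intro h
    have h2 := hζ.eq_orderOf
    rw [h, orderOf_one] at h2
    exact hp.one_lt.ne' h2
  -- s fixes ζ
  haveI : Fact p.Prime := ⟨hp⟩
  have hsζ : s ζ = ζ := by
    obtain ⟨j, hjp, hj⟩ := hζ.eq_pow_of_pow_eq_one (ξ := s ζ) (by rw [← map_pow, hζp, map_one])
    have hpow : ∀ k : ℕ, (s ^ k) ζ = ζ ^ (j ^ k) := by
      intro k
      induction k with
      | zero => simp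
      | succ n ih =>
        rw [pow_succ', AlgEquiv.mul_apply, ih, map_pow, ← hj, ← pow_mul, ← pow_succ']
    have h1 : ζ ^ (j ^ p) = ζ := by rw [← hpow p, hsp, AlgEquiv.one_apply]
    have h2 : ζ ^ (j ^ p % p) = ζ ^ (1 % p) := by
      rw [← pow_eq_pow_mod _ hζp, h1, ← pow_eq_pow_mod _ hζp, pow_one]
    have h3 : j ^ p % p = 1 % p := hζ.pow_inj (Nat.mod_lt _ hppos) (Nat.mod_lt _ hppos) h2
    have h4 : ((j : ZMod p)) ^ p = (j : ZMod p) := ZMod.pow_card _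
    have h5 : ((j ^ p : ℕ) : ZMod p) = ((1 : ℕ) : ZMod p) :=
      (ZMod.natCast_eq_natCast_iff _ _ _).mpr h3
    push_cast at h5
    have h6 : (j : ZMod p) = ((1 : ℕ) : ZMod p) := by
      rw [← h4, h5]; push_cast; ring
    have h7 : j % p = 1 % p := (ZMod.natCast_eq_natCast_iff _ _ _).mp h6
    rw [← hj, pow_eq_pow_mod j hζp, h7, Nat.one_mod_eq_one.mpr hp.one_lt.ne', pow_one]
  -- x ≠ 0 with s x = ζ * x
  obtain ⟨x, hx0, hsx⟩ : ∃ x : Ω, x ≠ 0 ∧ s x = ζ * x := by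
    obtain ⟨c, hc⟩ := exists_comb_ne_zero hp.one_lt s hord (fun i => ζ ^ (p - i))
      (fun i _ => pow_ne_zero _ hζ0)
    refine ⟨∑ i ∈ range p, ζ ^ (p - i) * (s ^ i) c, hc, ?_⟩
    have hmap : s (∑ i ∈ range p, ζ ^ (p - i) * (s ^ i) c)
        = ∑ i ∈ range p, ζ ^ (p - i) * (s ^ (i + 1)) c := by
      rw [map_sum]
      refine Finset.sum_congr rfl fun i _ => ?_
      rw [map_mul, map_pow, hsζ, pow_succ', AlgEquiv.mul_apply]
    have hterm : ∀ i ∈ range p, ζ ^ (p - i) * (s ^ (i + 1)) c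
        = ζ * (ζ ^ (p - (i + 1)) * (s ^ (i + 1)) c) := by
      intro i hi
      rw [mem_range] at hi
      rw [← mul_assoc]
      congr 1
      rw [← pow_succ']
      congr 1
      omega
    rw [hmap, Finset.sum_congr rfl hterm, ← Finset.mul_sum]
    congr 1
    exact shift_sum (fun i => ζ ^ (p - i) * (s ^ i) c) (by
      show ζ ^ (p - p) * (s ^ p) c = ζ ^ (p - 0) * (s ^ 0) c
      rw [hsp, Nat.sub_self, pow_zero, one_mul, Nat.sub_zero, hζp, pow_zero, one_mul])
  -- powers of s on x
  have hpowx : ∀ i : ℕ, (s ^ i) x = ζ ^ i * x := by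
    intro i
    induction i with
    | zero => simp
    | succ n ih =>
      rw [pow_succ', AlgEquiv.mul_apply, ih, map_mul, map_pow, hsζ, hsx, pow_succ']
      ring
  -- v with v^p = x
  obtain ⟨v, hv⟩ := IsAlgClosed.exists_pow_nat_eq x hppos
  have hv0 : v ≠ 0 := by
    intro h
    rw [h, zero_pow hppos.ne'] at hv
    exact hx0 hv.symm
  -- w := prod of conjugates of v is s-fixed
  have hsw : s (∏ i ∈ range p, (s ^ i) v) = ∏ i ∈ range p, (s ^ i) v := by
    have h1 : s (∏ i ∈ range p, (s ^ i) v) = ∏ i ∈ range p, (s ^ (i + 1)) v := by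
      rw [map_prod]
      exact Finset.prod_congr rfl fun i _ => by rw [pow_succ', AlgEquiv.mul_apply]
    rw [h1]
    exact shift_prod (fun i => (s ^ i) v)
      (by show (s ^ p) v = (s ^ 0) v; rw [hsp, pow_zero]) (by simpa using hv0)
  have hw0 : (∏ i ∈ range p, (s ^ i) v) ≠ 0 :=
    Finset.prod_ne_zero_iff.mpr fun i _ => fun h => hv0 (by
      have := congrArg (⇑((s ^ i)⁻¹ : Ω ≃ₐ[F] Ω)) h
      simpa [← AlgEquiv.mul_apply, -AlgEquiv.coe_pow] using this)
  -- w^p = x^p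
  have hwp : (∏ i ∈ range p, (s ^ i) v) ^ p = x ^ p := by
    rw [← Finset.prod_pow]
    have h1 : ∀ i ∈ range p, ((s ^ i) v) ^ p = ζ ^ i * x := by
      intro i _
      rw [← map_pow, hv, hpowx]
    rw [Finset.prod_congr rfl h1, Finset.prod_mul_distrib, Finset.prod_pow_eq_pow_sum,
      Finset.prod_const, Finset.card_range]
    have hdvd : p ∣ ∑ i ∈ range p, i := by
      have h2 : (∑ i ∈ range p, i) * 2 = p * (p - 1) := Finset.sum_range_id_mul_two p
      rcases (Nat.Prime.dvd_mul hp).mp (⟨p - 1, h2⟩ : p ∣ (∑ i ∈ range p, i) * 2) with h | h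
      · exact h
      · exact absurd ((Nat.prime_dvd_prime_iff_eq hp Nat.prime_two).mp h) hp2
    obtain ⟨m, hm⟩ := hdvd
    rw [hm, pow_mul, hζp, one_pow, one_mul]
  -- conclude
  have hxw : (x / (∏ i ∈ range p, (s ^ i) v)) ^ p = 1 := by
    rw [div_pow, hwp, div_self (pow_ne_zero _ hx0)]
  obtain ⟨i, hip, hi⟩ := hζ.eq_pow_of_pow_eq_one hxw
  have hfix : s (x / (∏ j ∈ range p, (s ^ j) v)) = x / (∏ j ∈ range p, (s ^ j) v) := by
    rw [← hi, map_pow, hsζ]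
  have hmove : s (x / (∏ j ∈ range p, (s ^ j) v)) = ζ * (x / (∏ j ∈ range p, (s ^ j) v)) := by
    rw [map_div₀, hsx, hsw, mul_div_assoc]
  rw [hfix] at hmove
  have hne : x / (∏ j ∈ range p, (s ^ j) v) ≠ 0 := div_ne_zero hx0 hw0
  have hfin : ζ * (x / ∏ j ∈ range p, (s ^ j) v) = 1 * (x / ∏ j ∈ range p, (s ^ j) v) := by
    rw [one_mul, ← hmove]
  exact hζ1 (mul_right_cancel₀ hne hfin)


/-- No pair (t, s) with t an involution, s commuting with t, s ∉ {1, t}, s² ∈ {1, t},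
over an algebraically closed field of characteristic ≠ 2. -/
private lemma no_two_case [IsAlgClosed Ω] (h2 : (2 : Ω) ≠ 0) (s t : Ω ≃ₐ[F] Ω)
    (ht2 : t * t = 1) (ht1 : t ≠ 1) (hcomm : s * t = t * s)
    (hs2 : s * s = 1 ∨ s * s = t) (hs1 : s ≠ 1) (hst : s ≠ t) : False := by
  have happ : ∀ c : Ω, t (t c) = c := fun c => by
    have := DFunLike.congr_fun ht2 c
    rwa [AlgEquiv.mul_apply, AlgEquiv.one_apply] at this
  have hcapp : ∀ c : Ω, s (t c) = t (s c) := fun c => by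
    have := DFunLike.congr_fun hcomm c
    rwa [AlgEquiv.mul_apply, AlgEquiv.mul_apply] at this
  -- Step A : a t-fixed element moved by s
  obtain ⟨c₀, hc₀t, hc₀s⟩ : ∃ c : Ω, t c = c ∧ s c ≠ c := by
    by_contra hall
    push_neg at hall
    have claim : ∀ c : Ω, s c = c ∨ s c = t c := by
      intro c
      have h1 : s (c + t c) = c + t c := hall _ (by rw [map_add, happ]; ring)
      have hb : s (c * t c) = c * t c := hall _ (by rw [map_mul, happ]; ring)
      have key : (s c - c) * (s c - t c) = 0 := by
        have e : s c * s c - s c * s (c + t c) + s (c * t c) = 0 := by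
          rw [← map_mul, ← map_mul, ← map_sub, ← map_add]
          rw [show c * c - c * (c + t c) + c * t c = 0 by ring, map_zero]
        rw [h1, hb] at e
        calc (s c - c) * (s c - t c) = s c * s c - s c * (c + t c) + c * t c := by ring
          _ = 0 := e
      rcases mul_eq_zero.mp key with h | h
      · exact Or.inl (sub_eq_zero.mp h)
      · exact Or.inr (sub_eq_zero.mp h)
    by_cases hA : ∀ c : Ω, s c = c
    · exact hs1 (AlgEquiv.ext hA)
    by_cases hB : ∀ c : Ω, s c = t c
    · exact hst (AlgEquiv.ext hB)
    push_neg at hA hB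
    obtain ⟨u, hu⟩ := hA
    obtain ⟨v, hv⟩ := hB
    have hu' : s u = t u := (claim u).resolve_left hu
    have hv' : s v = v := (claim v).resolve_right hv
    rcases claim (u + v) with h | h
    · rw [map_add, hu', hv'] at h
      have huu : t u = u := by linear_combination h
      rw [← hu'] at huu
      exact hu huu
    · rw [map_add, map_add, hu', hv'] at h
      have hvv : v = t v := by linear_combination h
      exact hv (hv'.trans hvv)
  -- Step B : r ≠ 0 with t r = r, s r = -r
  obtain ⟨r, hr0, hrt, hrs⟩ : ∃ r : Ω, r ≠ 0 ∧ t r = r ∧ s r = -r := by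
    refine ⟨c₀ - s c₀, sub_ne_zero.mpr (Ne.symm hc₀s), ?_, ?_⟩
    · rw [map_sub, hc₀t, ← hcapp, hc₀t]
    · have hss : s (s c₀) = c₀ := by
        rcases hs2 with h | h
        · have := DFunLike.congr_fun h c₀
          rwa [AlgEquiv.mul_apply, AlgEquiv.one_apply] at this
        · have := DFunLike.congr_fun h c₀
          rw [AlgEquiv.mul_apply] at this
          rw [this, hc₀t]
      rw [map_sub, hss]
      ring
  -- Step C : j with t j = -j, j ≠ 0
  obtain ⟨c₁, hc₁⟩ : ∃ c : Ω, t c ≠ c := by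
    by_contra hall
    push_neg at hall
    exact ht1 (AlgEquiv.ext hall)
  obtain ⟨j, hj0, hjt⟩ : ∃ j : Ω, j ≠ 0 ∧ t j = -j := by
    refine ⟨c₁ - t c₁, sub_ne_zero.mpr (Ne.symm hc₁), ?_⟩
    rw [map_sub, happ]
    ring
  have hjj0 : j * j ≠ 0 := mul_ne_zero hj0 hj0
  have hdt : t (j * j) = j * j := by rw [map_mul, hjt]; ring
  -- Step D : decomposition
  have hdec : ∀ g : Ω, ∃ u v : Ω, t u = u ∧ t v = v ∧ g = u + v * j := by
    intro g
    refine ⟨(g + t g) / 2, (g - t g) / (2 * j), ?_, ?_, ?_⟩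
    · rw [map_div₀, map_add, happ, map_ofNat]
      ring_nf
    · rw [map_div₀, map_sub, happ, map_mul, map_ofNat, hjt]
      rw [show (2 : Ω) * -j = -(2 * j) by ring, show t g - g = -(g - t g) by ring,
        neg_div_neg_eq]
    · field_simp
      ring
  -- Step E : -1 is not a square of a t-fixed element
  have hE : ∀ e : Ω, t e = e → e * e ≠ -1 := by
    intro i hit hii
    obtain ⟨g, hg⟩ := IsAlgClosed.exists_pow_nat_eq j (n := 2) (by norm_num)
    rw [pow_two] at hg
    obtain ⟨u, v, hut, hvt, hguv⟩ := hdec g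
    have heq : (2 * u * v - 1) * j + (u * u + v * v * (j * j)) = 0 := by
      have : (2 * u * v - 1) * j + (u * u + v * v * (j * j)) = g * g - j := by
        rw [hguv]; ring
      rw [this, hg, sub_self]
    have heqt : (2 * u * v - 1) * -j + (u * u + v * v * (j * j)) = 0 := by
      have h := congrArg t heq
      simp only [map_add, map_mul, map_sub, map_one, map_ofNat, map_zero, hut, hvt, hjt] at h
      linear_combination h
    have hq : 2 * u * v - 1 = 0 := by
      have hjq : (2 : Ω) * ((2 * u * v - 1) * j) = 0 := by linear_combination heq - heqt
      rcases mul_eq_zero.mp hjq with h | h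
      · exact absurd h h2
      rcases mul_eq_zero.mp h with h | h
      · exact h
      · exact absurd h hj0
    have huv : 2 * u * v = 1 := by linear_combination hq
    have hv0 : v ≠ 0 := by
      intro h
      rw [h] at huv
      simp at huv
    have he0 : u * u + v * v * (j * j) = 0 := by linear_combination heq - hq * j
    -- w' := (u/v) * i satisfies w'² = j²
    have hw' : ((u / v) * i) * ((u / v) * i) = j * j := by
      have : (u / v) * (u / v) = -(j * j) := by
        rw [div_mul_div_comm, div_eq_iff (mul_ne_zero hv0 hv0)]
        linear_combination he0
      calc ((u / v) * i) * ((u / v) * i) = ((u / v) * (u / v)) * (i * i) := by ring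
        _ = -(j * j) * (-1) := by rw [this, hii]
        _ = j * j := by ring
    have hw't : t ((u / v) * i) = (u / v) * i := by
      rw [map_mul, map_div₀, hut, hvt, hit]
    have hfac : (j - (u / v) * i) * (j + (u / v) * i) = 0 := by
      have : (j - (u / v) * i) * (j + (u / v) * i) = j * j - ((u / v) * i) * ((u / v) * i) := by
        ring
      rw [this, hw', sub_self]
    have hjfix : t j = j := by
      rcases mul_eq_zero.mp hfac with h | h
      · have hjeq : j = (u / v) * i := by linear_combination h
        rw [hjeq]
        exact hw't
      · have hjeq : j = -((u / v) * i) := by linear_combination h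
        rw [hjeq, map_neg, hw't]
    rw [hjt] at hjfix
    have h2j : (2 : Ω) * j = 0 := by linear_combination -hjfix
    rcases mul_eq_zero.mp h2j with h | h
    · exact h2 h
    · exact hj0 h
  -- Step SQ : every t-fixed element is a t-fixed square or j² times one
  have hSQ : ∀ c : Ω, t c = c →
      (∃ u, t u = u ∧ c = u * u) ∨ (∃ v, t v = v ∧ c = (j * j) * (v * v)) := by
    intro c hct
    obtain ⟨g, hg⟩ := IsAlgClosed.exists_pow_nat_eq c (n := 2) (by norm_num)
    rw [pow_two] at hg
    have hfac : (t g - g) * (t g + g) = 0 := by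
      have h1 : t g * t g = g * g := by rw [← map_mul, hg, hct]
      linear_combination h1
    rcases mul_eq_zero.mp hfac with h | h
    · exact Or.inl ⟨g, sub_eq_zero.mp h, hg.symm⟩
    · right
      have htg : t g = -g := by linear_combination h
      refine ⟨g / j, by rw [map_div₀, htg, hjt, neg_div_neg_eq], ?_⟩
      have hcomp : (j * j) * ((g / j) * (g / j)) = g * g := by
        rw [div_mul_div_comm, mul_comm, div_mul_cancel₀ _ hjj0]
      rw [hcomp]
      exact hg.symm
  -- Step F : r = ± (t-fixed square)
  obtain ⟨e, het, hre⟩ : ∃ e : Ω, t e = e ∧ (r = e * e ∨ r = -(e * e)) := by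
    rcases hSQ r hrt with ⟨u, hut, hru⟩ | ⟨v, hvt, hrv⟩
    · exact ⟨u, hut, Or.inl hru⟩
    · rcases hSQ (-(j * j)) (by rw [map_neg, hdt]) with ⟨u, hut, hju⟩ | ⟨v', hv't, hjv'⟩
      · refine ⟨u * v, by rw [map_mul, hut, hvt], Or.inr ?_⟩
        rw [hrv]
        have hjj : (j * j) = -(u * u) := by linear_combination -hju
        rw [hjj]
        ring
      · exfalso
        have hv'v' : v' * v' = -1 := by
          have hcan : (j * j) * (v' * v') = (j * j) * (-1) := by linear_combination -hjv'
          exact mul_left_cancel₀ hjj0 hcan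
        exact hE v' hv't hv'v'
  -- Step G : conclusion
  have he0 : e ≠ 0 := by
    intro h
    rw [h] at hre
    rcases hre with h' | h'
    · rw [mul_zero] at h'
      exact hr0 h'
    · rw [mul_zero, neg_zero] at h'
      exact hr0 h'
  have hset : (s e) * (s e) = -(e * e) := by
    rcases hre with h' | h'
    · have hs' := congrArg s h'
      rw [hrs, map_mul, h'] at hs'
      linear_combination -hs'
    · have hs' := congrArg s h'
      rw [hrs, map_neg, map_mul, h'] at hs'
      linear_combination hs'
  have hste : t (s e) = s e := by rw [← hcapp, het]
  have hfin : ((s e) / e) * ((s e) / e) = -1 := by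
    field_simp
    linear_combination hset
  exact hE _ (by rw [map_div₀, hste, het]) hfin

end ArtinSchreierHelpers

/-- If the absolute Galois group `Gal(F) = Ω ≃ₐ[F] Ω` of a field `F`
contains two distinct involutions, then it contains infinitely many involutions. -/
theorem infinite_involutions_of_two_distinct
    (F Ω : Type*) [Field F] [Field Ω] [Algebra F Ω] [IsAlgClosure F Ω]
    (σ τ : Ω ≃ₐ[F] Ω) (hσ2 : σ * σ = 1) (hσ1 : σ ≠ 1) (hτ2 : τ * τ = 1) (hτ1 : τ ≠ 1)
    (hne : σ ≠ τ) :
    {g : Ω ≃ₐ[F] Ω | g * g = 1 ∧ g ≠ 1}.Infinite := by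
  haveI : IsAlgClosed Ω := IsAlgClosure.isAlgClosed F
  have hσinv : σ⁻¹ = σ := inv_eq_of_mul_eq_one_right hσ2
  have hτinv : τ⁻¹ = τ := inv_eq_of_mul_eq_one_right hτ2
  set a : Ω ≃ₐ[F] Ω := σ * τ with hadef
  have ha1 : a ≠ 1 := by
    intro h
    have : σ = τ⁻¹ := eq_inv_of_mul_eq_one_left h
    rw [hτinv] at this
    exact hne this
  have hconj : σ * a * σ⁻¹ = a⁻¹ := by
    rw [hadef, hσinv, mul_inv_rev, hσinv, hτinv, ← mul_assoc, hσ2, one_mul]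
  -- helper: no element of prime order p with (p : Ω) = 0
  have hCHARP : ∀ p : ℕ, p.Prime → (p : Ω) = 0 → ∀ g : Ω ≃ₐ[F] Ω, orderOf g = p → False := by
    intro p hp hpΩ g hg
    have hd : ringChar Ω ∣ p := ringChar.dvd hpΩ
    have hrc : ringChar Ω = p :=
      ((Nat.Prime.eq_one_or_self_of_dvd hp _ hd).resolve_left CharP.ringChar_ne_one)
    haveI : CharP Ω p := hrc ▸ ringChar.charP Ω
    exact no_order_char p hp g hg
  have hordσ : orderOf σ = 2 := by
    haveI : Fact (Nat.Prime 2) := ⟨Nat.prime_two⟩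
    exact orderOf_eq_prime (by rw [pow_two]; exact hσ2) hσ1
  -- a has infinite order
  have ha0 : orderOf a = 0 := by
    by_contra hn
    have hn1 : orderOf a ≠ 1 := fun h => ha1 (orderOf_eq_one_iff.mp h)
    have h2ne : (2 : Ω) ≠ 0 := fun h20 => hCHARP 2 Nat.prime_two h20 σ hordσ
    by_cases hodd : ∃ p : ℕ, p.Prime ∧ p ∣ orderOf a ∧ p ≠ 2
    · obtain ⟨p, hp, hpn, hp2⟩ := hodd
      have hb : orderOf (a ^ (orderOf a / p)) = p := by
        have hdvd0 : orderOf a / p ≠ 0 :=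
          (Nat.div_pos (Nat.le_of_dvd (Nat.pos_of_ne_zero hn) hpn) hp.pos).ne'
        rw [orderOf_pow' a hdvd0,
          Nat.gcd_eq_right (Nat.div_dvd_of_dvd hpn), Nat.div_div_self hpn hn]
      by_cases hpc : (p : Ω) = 0
      · exact hCHARP p hp hpc _ hb
      · exact no_order_odd_prime p hp hp2 hpc _ hb
    · push_neg at hodd
      by_cases h4 : 4 ∣ orderOf a
      · obtain ⟨c, hc4⟩ : ∃ c : Ω ≃ₐ[F] Ω, orderOf c = 4 := by
          refine ⟨a ^ (orderOf a / 4), ?_⟩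
          have hdvd0 : orderOf a / 4 ≠ 0 :=
            (Nat.div_pos (Nat.le_of_dvd (Nat.pos_of_ne_zero hn) h4) (by norm_num)).ne'
          rw [orderOf_pow' a hdvd0,
            Nat.gcd_eq_right (Nat.div_dvd_of_dvd h4), Nat.div_div_self h4 hn]
        have hc41 : c ^ 4 = 1 := hc4 ▸ pow_orderOf_eq_one c
        have hc1 : c ≠ 1 := by
          intro h
          rw [h, orderOf_one] at hc4
          omega
        have hcc1 : c * c ≠ 1 := by
          intro h
          have : orderOf c ∣ 2 := orderOf_dvd_of_pow_eq_one (by rw [pow_two]; exact h)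
          rw [hc4] at this
          omega
        exact no_two_case h2ne c (c * c)
          (by rw [show c * c * (c * c) = c ^ 4 by simp [pow_succ, pow_two, mul_assoc]]; exact hc41)
          hcc1 (by rw [mul_assoc]) (Or.inr rfl) hc1
          (by
            intro h
            have : c * 1 = c * c := by rw [mul_one, ← h]
            exact hc1 (mul_left_cancel this).symm)
      · -- orderOf a = 2
        have h2n : 2 ∣ orderOf a := by
          have hmf := Nat.minFac_prime hn1
          have := hodd _ hmf (Nat.minFac_dvd _)
          rw [← this]
          exact Nat.minFac_dvd _
        have hn2 : orderOf a = 2 := by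
          obtain ⟨m, hm⟩ := h2n
          by_contra hne2
          have hm1 : m ≠ 1 := by intro h; rw [h, mul_one] at hm; exact hne2 hm
          have hm0 : m ≠ 0 := by intro h; rw [h, mul_zero] at hm; exact hn hm
          have hmf := Nat.minFac_prime hm1
          have hm2 : m.minFac = 2 := hodd _ hmf (hm ▸ Dvd.dvd.mul_left (Nat.minFac_dvd m) 2)
          obtain ⟨k, hk⟩ := hm2 ▸ Nat.minFac_dvd m
          exact h4 ⟨k, by rw [hm, hk]; ring⟩
        have ha2 : a * a = 1 := by
          have := pow_orderOf_eq_one a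
          rw [hn2, pow_two] at this
          exact this
        have hainv : a⁻¹ = a := inv_eq_of_mul_eq_one_right ha2
        have hcommσa : a * σ = σ * a := by
          have h := hconj
          rw [hainv, hσinv] at h
          calc a * σ = ((σ * σ) * a) * σ := by rw [hσ2, one_mul]
            _ = σ * (σ * a * σ) := by group
            _ = σ * a := by rw [h]
        refine no_two_case h2ne a σ hσ2 hσ1 hcommσa (Or.inl ha2) ha1 ?_
        intro h
        rw [hadef] at h
        have : σ * τ = σ * 1 := by rw [mul_one, h]
        exact hτ1 (mul_left_cancel this)
  -- build infinitely many involutions σ * aⁿ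
  refine Set.infinite_of_injective_forall_mem (f := fun n : ℕ => σ * a ^ n) ?_ ?_
  · have key : ∀ {m k : ℕ}, m ≤ k → a ^ m = a ^ k → m = k := by
      intro m k hmk he
      have h1 : a ^ m * a ^ (k - m) = a ^ m * 1 := by
        rw [mul_one, ← pow_add, Nat.add_sub_cancel' hmk, he]
      have h2 : a ^ (k - m) = 1 := mul_left_cancel h1
      have h3 := orderOf_dvd_of_pow_eq_one h2
      rw [ha0] at h3
      have := Nat.eq_zero_of_zero_dvd h3
      omega
    intro m k h
    simp only at h
    have he : a ^ m = a ^ k := mul_left_cancel h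
    rcases le_total m k with hmk | hkm
    · exact key hmk he
    · exact (key hkm he.symm).symm
  · intro n
    have hconjn : σ * a ^ n * σ⁻¹ = (a ^ n)⁻¹ := by
      have h1 : (MulAut.conj σ) (a ^ n) = ((MulAut.conj σ) a) ^ n := map_pow _ _ _
      rw [MulAut.conj_apply, MulAut.conj_apply, hconj, inv_pow] at h1
      exact h1
    constructor
    · calc (σ * a ^ n) * (σ * a ^ n) = (σ * a ^ n * σ⁻¹) * a ^ n := by
            rw [hσinv, mul_assoc, mul_assoc, mul_assoc]
        _ = (a ^ n)⁻¹ * a ^ n := by rw [hconjn]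
        _ = 1 := inv_mul_cancel _
    · intro h1
      have han : a ^ n = σ := by
        have h' : a ^ n = σ⁻¹ := eq_inv_of_mul_eq_one_right h1
        rwa [hσinv] at h'
      have h2n : a ^ (n + n) = 1 := by rw [pow_add, han, hσ2]
      have h3 := orderOf_dvd_of_pow_eq_one h2n
      rw [ha0] at h3
      have hnn := Nat.eq_zero_of_zero_dvd h3
      have hn0 : n = 0 := by omega
      rw [hn0, pow_zero] at han
      exact hσ1 han.symm
end

section
/- Let F be a field, Ω a fixed algebraic closure of F, and σ ≠ τ two distinct involutions in the absolute Galois group Gal(F). Then the group homomorphism from the free product (ℤ/2) ∗ (ℤ/2) to Gal(F) that sends the generator of the first factor to σ and the generator of the second factor to τ is injective; in particular, the subgroup of Gal(F) generated by σ and τ is infinite dihedral. -/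
open Monoid


section FieldLemmas
variable {F Ω : Type*} [Field F] [Field Ω] [Algebra F Ω]

lemma invol_apply {ρ : Ω ≃ₐ[F] Ω} (h : ρ * ρ = 1) (x : Ω) : ρ (ρ x) = x := by
  have := congrArg (fun e : Ω ≃ₐ[F] Ω => e x) h
  simpa [AlgEquiv.mul_apply] using this

lemma exists_not_fixed {ρ : Ω ≃ₐ[F] Ω} (h1 : ρ ≠ 1) : ∃ t : Ω, ρ t ≠ t := by
  by_contra h
  push_neg at h
  exact h1 (AlgEquiv.ext fun x => by simpa using h x)

lemma no_invol_char_two [IsAlgClosed Ω] {ρ : Ω ≃ₐ[F] Ω} (h2 : ρ * ρ = 1) (h1 : ρ ≠ 1)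
    (hc : (2 : Ω) = 0) : False := by
  obtain ⟨t, ht⟩ := exists_not_fixed h1
  set y := t - ρ t with hy
  have hy0 : y ≠ 0 := sub_ne_zero.2 (Ne.symm ht)
  have hρy : ρ y = y := by
    have h1' : ρ y = -y := by
      rw [hy, map_sub, invol_apply h2]; ring
    rw [h1']; linear_combination (-y) * hc
  set α := t / y with hα
  have hρα : ρ α = α - 1 := by
    have hρt : ρ t = t - y := by rw [hy]; ring
    rw [hα, map_div₀, hρy, hρt]
    field_simp
  obtain ⟨β, hβ⟩ : ∃ β : Ω, β ^ 2 - β = (α ^ 2 - α) * α := by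
    obtain ⟨z, hz⟩ := IsAlgClosed.exists_root
      (Polynomial.C 1 * Polynomial.X ^ 2 + Polynomial.C (-1) * Polynomial.X
        + Polynomial.C (-((α ^ 2 - α) * α)))
      (by rw [Polynomial.degree_quadratic one_ne_zero]; decide)
    refine ⟨z, ?_⟩
    simp only [Polynomial.IsRoot, Polynomial.eval_add, Polynomial.eval_mul, Polynomial.eval_pow,
      Polynomial.eval_C, Polynomial.eval_X] at hz
    linear_combination hz
  have hρβ : (ρ β) ^ 2 - ρ β = (α ^ 2 - α) * α - (α ^ 2 - α) := by
    have e1 : (ρ β) ^ 2 - ρ β = ρ (β ^ 2 - β) := by rw [map_sub, map_pow]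
    rw [e1, hβ, map_mul, map_sub, map_pow, hρα]
    linear_combination (-(α - 1) ^ 2) * hc
  set δ := β + ρ β - α with hδ
  have hδsq : δ ^ 2 = δ := by
    have key : δ ^ 2 - δ = 2 * (α ^ 3 - α ^ 2 + α + β * ρ β - β * α - ρ β * α) := by
      rw [hδ]; linear_combination hβ + hρβ
    have : δ ^ 2 - δ = 0 := by
      rw [key, hc]; ring
    linear_combination this
  have hρδ : ρ δ = δ + 1 := by
    rw [hδ, map_sub, map_add, invol_apply h2, hρα]
    ring
  have hδfix : ρ δ = δ := by
    have hfac : δ * (δ - 1) = 0 := by linear_combination hδsq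
    rcases mul_eq_zero.1 hfac with h | h
    · rw [h, map_zero]
    · have hδ1 : δ = 1 := by linear_combination h
      rw [hδ1, map_one]
  rw [hδfix] at hρδ
  have : (1 : Ω) = 0 := by linear_combination -hρδ
  exact one_ne_zero this

lemma invol_neg_i [IsAlgClosed Ω] {ρ : Ω ≃ₐ[F] Ω} (h2 : ρ * ρ = 1) (h1 : ρ ≠ 1)
    {j : Ω} (hj : j ^ 2 = -1) : ρ j = -j := by
  have hj0 : j ≠ 0 := by
    intro h
    rw [h] at hj
    exact one_ne_zero (by linear_combination hj : (1 : Ω) = 0)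
  obtain ⟨t, ht⟩ := exists_not_fixed h1
  set y := t - ρ t with hy
  have hy0 : y ≠ 0 := sub_ne_zero.2 (Ne.symm ht)
  have hρy : ρ y = -y := by rw [hy, map_sub, invol_apply h2]; ring
  obtain ⟨z, hz⟩ := IsAlgClosed.exists_pow_nat_eq y (n := 2) (by norm_num)
  have hz0 : z ≠ 0 := by
    intro h; rw [h] at hz; exact hy0 (by simpa using hz.symm)
  have hρz2 : (ρ z) ^ 2 = -y := by rw [← map_pow, hz, hρy]
  have hfact : (ρ z - j * z) * (ρ z + j * z) = 0 := by
    linear_combination hρz2 - z ^ 2 * hj + hz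
  have hkey : ρ j * (j * z) = z := by
    rcases mul_eq_zero.1 hfact with h | h
    · have hce : ρ z = j * z := by linear_combination h
      calc ρ j * (j * z) = ρ j * ρ z := by rw [hce]
        _ = ρ (j * z) := (map_mul ρ j z).symm
        _ = ρ (ρ z) := by rw [hce]
        _ = z := invol_apply h2 z
    · have hce : ρ z = -(j * z) := by linear_combination h
      calc ρ j * (j * z) = -(ρ j * ρ z) := by rw [hce]; ring
        _ = -ρ (j * z) := by rw [map_mul]
        _ = -ρ (-(ρ z)) := by rw [hce, neg_neg]
        _ = ρ (ρ z) := by rw [map_neg]; ring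
        _ = z := invol_apply h2 z
  have hρjj : ρ j * j = 1 := by
    have : (ρ j * j - 1) * z = 0 := by linear_combination hkey
    rcases mul_eq_zero.1 this with h | h
    · linear_combination h
    · exact absurd h hz0
  have : (ρ j + j) * j = 0 := by linear_combination hρjj + hj
  rcases mul_eq_zero.1 this with h | h
  · linear_combination h
  · exact absurd h hj0

lemma charZero_of_invol [IsAlgClosed Ω] {ρ : Ω ≃ₐ[F] Ω} (h2 : ρ * ρ = 1) (h1 : ρ ≠ 1) :
    CharZero Ω := by
  have h2c : (2 : Ω) ≠ 0 := fun h => no_invol_char_two h2 h1 h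
  obtain ⟨j, hj⟩ := IsAlgClosed.exists_pow_nat_eq (-1 : Ω) (n := 2) (by norm_num)
  have hj0 : j ≠ 0 := by
    intro h
    rw [h] at hj
    exact one_ne_zero (by linear_combination hj : (1 : Ω) = 0)
  have hρj : ρ j = -j := invol_neg_i h2 h1 hj
  have hjj : j ≠ -j := by
    intro h
    rcases mul_eq_zero.1 (show (2 : Ω) * j = 0 by linear_combination h) with h' | h'
    · exact h2c h'
    · exact hj0 h'
  have sq : ∀ n : ℕ, ∃ c : Ω, ρ c = c ∧ c ^ 2 = (n : Ω) := by
    intro n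
    induction n with
    | zero => exact ⟨0, map_zero ρ, by simp⟩
    | succ n ih =>
      obtain ⟨c, hc1, hc2⟩ := ih
      obtain ⟨w, hw⟩ := IsAlgClosed.exists_pow_nat_eq (c + j) (n := 2) (by norm_num)
      refine ⟨w * ρ w, by rw [map_mul, invol_apply h2]; ring, ?_⟩
      have hρw2 : (ρ w) ^ 2 = c - j := by rw [← map_pow, hw, map_add, hc1, hρj]; ring
      have : (w * ρ w) ^ 2 = (c + j) * (c - j) := by rw [mul_pow, hw, hρw2]
      rw [this]
      push_cast
      linear_combination hc2 - hj
  rcases CharP.char_is_prime_or_zero Ω (ringChar Ω) with hq | hq0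
  · exfalso
    have hqcast : ((ringChar Ω : ℕ) : Ω) = 0 := (ringChar.spec Ω (ringChar Ω)).2 dvd_rfl
    obtain ⟨c, hc1, hc2⟩ := sq (ringChar Ω - 1)
    have hcast : ((ringChar Ω - 1 : ℕ) : Ω) = -1 := by
      rw [Nat.cast_sub hq.one_lt.le, hqcast]
      simp
    rw [hcast] at hc2
    have hcj : c = j ∨ c = -j := by
      rcases mul_eq_zero.1 (show (c - j) * (c + j) = 0 by linear_combination hc2 - hj) with h | h
      · exact Or.inl (by linear_combination h)
      · exact Or.inr (by linear_combination h)
    rcases hcj with h | h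
    · rw [h] at hc1
      exact hjj (hc1.symm.trans hρj)
    · rw [h, map_neg, hρj] at hc1
      exact hjj (by linear_combination hc1)
  · haveI := ringChar.of_eq hq0
    exact CharP.charP_to_charZero Ω

end FieldLemmas


section OddPrime
variable {F Ω : Type*} [Field F] [Field Ω] [Algebra F Ω]

lemma no_odd_prime_order [IsAlgClosed Ω] [CharZero Ω] {ρ : Ω ≃ₐ[F] Ω} {p : ℕ}
    (hp : p.Prime) (hodd : p ≠ 2) (hord : orderOf ρ = p) : False := by
  haveI : Fact p.Prime := ⟨hp⟩
  haveI : NeZero ((p : ℕ) : Ω) := ⟨Nat.cast_ne_zero.2 hp.pos.ne'⟩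
  -- primitive p-th root of unity
  obtain ⟨ζ, hζroot⟩ := IsAlgClosed.exists_root (Polynomial.cyclotomic p Ω) (by
    rw [Polynomial.degree_cyclotomic]
    exact_mod_cast (Nat.totient_pos.2 hp.pos).ne')
  have hζ : IsPrimitiveRoot ζ p := (Polynomial.isRoot_cyclotomic_iff).1 hζroot
  have hζp : ζ ^ p = 1 := hζ.pow_eq_one
  have hζ0 : ζ ≠ 0 := fun h => by simp [h, zero_pow hp.pos.ne'] at hζp
  have hζ1 : ζ ≠ 1 := hζ.ne_one hp.one_lt
  have hρp : ρ ^ p = 1 := by rw [← hord]; exact pow_orderOf_eq_one ρ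
  -- ρ fixes ζ
  have hρζ : ρ ζ = ζ := by
    obtain ⟨k, hk, hkζ⟩ := hζ.eq_pow_of_pow_eq_one (ξ := ρ ζ)
      (by rw [← map_pow, hζp, map_one])
    have hiter : ∀ m : ℕ, (ρ ^ m) ζ = ζ ^ (k ^ m) := by
      intro m
      induction m with
      | zero => simp
      | succ m ih =>
        have : ρ ^ (m + 1) = ρ * ρ ^ m := by rw [pow_succ']
        rw [this, AlgEquiv.mul_apply, ih, map_pow, ← hkζ, ← pow_mul, pow_succ, mul_comm]
    have h1 : ζ ^ (k ^ p) = ζ ^ 1 := by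
      rw [← hiter p, hρp]; simp
    have hred : ζ ^ (k ^ p) = ζ ^ (k ^ p % p) := by
      conv_lhs => rw [← Nat.mod_add_div (k ^ p) p]
      rw [pow_add, pow_mul, hζp, one_pow, mul_one]
    have hmod : k ^ p % p = 1 := by
      have := hζ.pow_inj (Nat.mod_lt _ hp.pos) hp.one_lt (by rw [← hred, h1, pow_one])
      exact this
    have hzk : (k : ZMod p) = 1 := by
      have hcast : ((k ^ p % p : ℕ) : ZMod p) = ((k ^ p : ℕ) : ZMod p) := ZMod.natCast_mod _ _
      rw [hmod] at hcast
      have h2 : ((k : ZMod p)) ^ p = 1 := by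
        push_cast at hcast
        rw [← hcast]
      rwa [ZMod.pow_card] at h2
    have hk1 : k = 1 := by
      have e1 : k % p = 1 % p := (ZMod.natCast_eq_natCast_iff _ _ _).1 (by
        rw [hzk]; simp)
      rw [Nat.mod_eq_of_lt hk, Nat.mod_eq_of_lt hp.one_lt] at e1
      exact e1
    rw [← hkζ, hk1, pow_one]
  -- Dedekind: eigenvector
  set S : Ω → Ω := fun t => ∑ i ∈ Finset.range p, ζ⁻¹ ^ i * (ρ ^ i) t with hS
  obtain ⟨t, htS⟩ : ∃ t : Ω, S t ≠ 0 := by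
    by_contra hall
    push_neg at hall
    set g : Fin p → (Ω →* Ω) := fun i => ((ρ ^ (i : ℕ)).toAlgHom.toRingHom.toMonoidHom) with hg
    have hginj : Function.Injective g := by
      intro i j hij
      have hpow : ρ ^ (i : ℕ) = ρ ^ (j : ℕ) := by
        apply AlgEquiv.ext
        intro x
        exact DFunLike.congr_fun hij x
      have := pow_injOn_Iio_orderOf (x := ρ) (by rw [hord]; exact i.2) (by rw [hord]; exact j.2) hpow
      exact Fin.ext this
    have hli : LinearIndependent Ω (fun i : Fin p => ⇑(g i)) :=
      (linearIndependent_monoidHom Ω Ω).comp g hginj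
    have hzero : (∑ i : Fin p, (ζ⁻¹ ^ (i : ℕ)) • ⇑(g i)) = 0 := by
      funext x
      have h0 : ∑ i ∈ Finset.range p, ζ⁻¹ ^ i * (ρ ^ i) x = 0 := hall x
      rw [← Fin.sum_univ_eq_sum_range (fun i => ζ⁻¹ ^ i * (ρ ^ i) x) p] at h0
      simpa [Finset.sum_apply, hg] using h0
    have := Fintype.linearIndependent_iff.1 hli (fun i => ζ⁻¹ ^ (i : ℕ)) hzero ⟨0, hp.pos⟩
    simp at this
  set α := S t with hαdef
  have hρα : ρ α = ζ * α := by
    have hmapped : ρ α = ∑ i ∈ Finset.range p, ζ⁻¹ ^ i * (ρ ^ (i + 1)) t := by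
      rw [hαdef, hS, map_sum]
      refine Finset.sum_congr rfl fun i _ => ?_
      rw [map_mul, map_pow, map_inv₀, hρζ, pow_succ']
      rfl
    have hexp : ζ * α = ∑ i ∈ Finset.range p, ζ * (ζ⁻¹ ^ i * (ρ ^ i) t) := by
      rw [hαdef, hS, Finset.mul_sum]
    obtain ⟨m, hm⟩ : ∃ m, p = m + 1 := ⟨p - 1, (Nat.succ_pred_eq_of_pos hp.pos).symm⟩
    rw [hmapped, hexp, hm, Finset.sum_range_succ, Finset.sum_range_succ']
    have e1 : ∀ i, ζ * (ζ⁻¹ ^ (i + 1) * (ρ ^ (i + 1)) t) = ζ⁻¹ ^ i * (ρ ^ (i + 1)) t := by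
      intro i
      rw [pow_succ', mul_assoc ζ⁻¹, ← mul_assoc ζ ζ⁻¹, mul_inv_cancel₀ hζ0, one_mul]
    have e2 : ζ⁻¹ ^ m * (ρ ^ (m + 1)) t = ζ * (ζ⁻¹ ^ 0 * (ρ ^ 0) t) := by
      have hρm1 : (ρ ^ (m + 1)) t = t := by rw [← hm, hρp]; rfl
      have hζm : ζ⁻¹ ^ m = ζ := by
        have : ζ⁻¹ ^ m * ζ ^ m * ζ = ζ := by
          rw [← mul_pow, inv_mul_cancel₀ hζ0, one_pow, one_mul]
        have hζm1 : ζ ^ (m + 1) = 1 := by rw [← hm]; exact hζp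
        calc ζ⁻¹ ^ m = ζ⁻¹ ^ m * (ζ ^ (m + 1)) := by rw [hζm1, mul_one]
          _ = (ζ⁻¹ ^ m * ζ ^ m) * ζ := by ring
          _ = ζ := by rw [← mul_pow, inv_mul_cancel₀ hζ0, one_pow, one_mul]
      rw [hρm1, hζm]
      simp
    rw [e2]
    congr 1
    exact Finset.sum_congr rfl fun i _ => (e1 i).symm
  have hα0 : α ≠ 0 := htS
  -- p-th root of α
  obtain ⟨β, hβ⟩ := IsAlgClosed.exists_pow_nat_eq α (n := p) hp.pos
  have hβ0 : β ≠ 0 := fun h => hα0 (by rw [← hβ, h, zero_pow hp.pos.ne'])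
  set η := ρ β * β⁻¹ with hηdef
  have hρβ : ρ β = η * β := by
    rw [hηdef, mul_assoc, inv_mul_cancel₀ hβ0, mul_one]
  have hηp : η ^ p = ζ := by
    rw [hηdef, mul_pow, inv_pow, ← map_pow, hβ, hρα]
    rw [mul_assoc, mul_inv_cancel₀ hα0, mul_one]
  have hη0 : η ≠ 0 := fun h => hζ0 (by rw [← hηp, h, zero_pow hp.pos.ne'])
  -- ρ η = ζ^k * η
  obtain ⟨k, hk, hkη⟩ : ∃ k, k < p ∧ ζ ^ k = ρ η * η⁻¹ := by
    have : (ρ η * η⁻¹) ^ p = 1 := by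
      rw [mul_pow, inv_pow, ← map_pow, hηp, hρζ]
      exact mul_inv_cancel₀ hζ0
    obtain ⟨k, hk, hkη⟩ := hζ.eq_pow_of_pow_eq_one this
    exact ⟨k, hk, hkη⟩
  have hρη : ρ η = ζ ^ k * η := by
    rw [hkη, mul_assoc, inv_mul_cancel₀ hη0, mul_one]
  -- iteration formula
  have hiter : ∀ m : ℕ, (ρ ^ m) β = η ^ m * ζ ^ (k * Nat.choose m 2) * β := by
    intro m
    induction m with
    | zero => simp
    | succ m ih =>
      have hstep : ρ ^ (m + 1) = ρ * ρ ^ m := by rw [pow_succ']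
      rw [hstep, AlgEquiv.mul_apply, ih, map_mul, map_mul, map_pow, map_pow, hρη, hρζ, hρβ]
      have hch : Nat.choose (m + 1) 2 = Nat.choose m 2 + m := by
        rw [Nat.choose_succ_succ, Nat.choose_one_right, Nat.add_comm]
      rw [hch]
      ring
  -- evaluate at m = p
  have hfinal := hiter p
  rw [hρp] at hfinal
  have hfinal' : β = η ^ p * ζ ^ (k * Nat.choose p 2) * β := by
    simpa using hfinal
  have hfinal'' : β = ζ * ζ ^ (k * Nat.choose p 2) * β := by
    rw [hηp] at hfinal'
    exact hfinal'
  have hcancel : ζ * ζ ^ (k * Nat.choose p 2) = 1 := by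
    have hfac : (ζ * ζ ^ (k * Nat.choose p 2) - 1) * β = 0 := by linear_combination -hfinal''
    rcases mul_eq_zero.1 hfac with h | h
    · linear_combination h
    · exact absurd h hβ0
  obtain ⟨r, hr⟩ : ∃ r, p - 1 = 2 * r := by
    obtain ⟨m, hm⟩ := hp.odd_of_ne_two hodd
    exact ⟨m, by omega⟩
  have hch2 : Nat.choose p 2 = p * r := by
    rw [Nat.choose_two_right, hr, Nat.mul_div_assoc p (dvd_mul_right 2 r)]
    congr 1
    omega
  have hζpow : ζ ^ (k * Nat.choose p 2) = 1 := by
    rw [hch2, show k * (p * r) = p * (k * r) by ring, pow_mul, hζp, one_pow]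
  rw [hζpow, mul_one] at hcancel
  exact hζ1 hcancel

end OddPrime



section Master
variable {F Ω : Type*} [Field F] [Field Ω] [Algebra F Ω]

lemma conj_pow_eq {G : Type*} [Group G] (σ x : G) (hσ : σ⁻¹ = σ) (hx : σ * x * σ = x⁻¹)
    (m : ℕ) : σ * x ^ m * σ = (x ^ m)⁻¹ := by
  have h1 : MulAut.conj σ (x ^ m) = (MulAut.conj σ x) ^ m := map_pow _ _ _
  simp only [MulAut.conj_apply, hσ] at h1
  rw [h1, hx, inv_pow]

lemma mul_not_finOrder [IsAlgClosed Ω] {σ τ : Ω ≃ₐ[F] Ω} (hσ2 : σ * σ = 1) (hσ1 : σ ≠ 1)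
    (hτ2 : τ * τ = 1) (hτ1 : τ ≠ 1) (hne : σ ≠ τ) : ¬ IsOfFinOrder (σ * τ) := by
  intro hfin
  haveI : CharZero Ω := charZero_of_invol hσ2 hσ1
  have hσinv : σ⁻¹ = σ := inv_eq_of_mul_eq_one_right hσ2
  have hst1 : σ * τ ≠ 1 := by
    intro h
    have h' : σ * (σ * τ) = σ * 1 := by rw [h]
    rw [← mul_assoc, hσ2, one_mul, mul_one] at h'
    exact hne h'.symm
  set n := orderOf (σ * τ) with hn
  have hn0 : n ≠ 0 := hfin.orderOf_pos.ne'
  have hn1 : n ≠ 1 := fun h => hst1 (orderOf_eq_one_iff.1 h)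
  set p := n.minFac with hpdef
  have hp : p.Prime := Nat.minFac_prime hn1
  have hpdvd : p ∣ n := Nat.minFac_dvd n
  have hnp0 : n / p ≠ 0 := (Nat.div_pos (Nat.minFac_le (Nat.pos_of_ne_zero hn0)) hp.pos).ne'
  set h := (σ * τ) ^ (n / p) with hh
  have hordh : orderOf h = p := by
    rw [hh, orderOf_pow' _ hnp0, ← hn, Nat.gcd_eq_right (Nat.div_dvd_of_dvd hpdvd),
      Nat.div_div_self hpdvd hn0]
  by_cases hp2 : p = 2
  · have hh2 : h * h = 1 := by
      have := pow_orderOf_eq_one h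
      rwa [hordh, hp2, pow_two] at this
    have hh1 : h ≠ 1 := by
      intro e
      rw [e, orderOf_one] at hordh
      omega
    have hconj : σ * (σ * τ) * σ = (σ * τ)⁻¹ := by
      have hτσ : (σ * τ) * (τ * σ) = 1 := by
        rw [mul_assoc σ τ (τ * σ), ← mul_assoc τ τ σ, hτ2, one_mul, hσ2]
      have h1 : σ * (σ * τ) * σ = τ * σ := by
        rw [← mul_assoc σ σ τ, hσ2, one_mul]
      rw [h1]
      exact (inv_eq_of_mul_eq_one_right hτσ).symm
    have hconjh : σ * h * σ = h⁻¹ := by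
      rw [hh]
      exact conj_pow_eq σ (σ * τ) hσinv hconj (n / p)
    have hcomm : σ * h = h * σ := by
      have hinvh : h⁻¹ = h := inv_eq_of_mul_eq_one_right hh2
      rw [hinvh] at hconjh
      calc σ * h = σ * h * (σ * σ) := by rw [hσ2, mul_one]
        _ = (σ * h * σ) * σ := by group
        _ = h * σ := by rw [hconjh]
    by_cases hσh : σ = h
    · have hτeq : τ = (σ * τ) ^ (n / p + 1) := by
        calc τ = σ * (σ * τ) := by rw [← mul_assoc, hσ2, one_mul]
          _ = h * (σ * τ) := by rw [hσh]
          _ = (σ * τ) ^ (n / p) * (σ * τ) ^ 1 := by rw [hh, pow_one]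
          _ = (σ * τ) ^ (n / p + 1) := (pow_add _ _ _).symm
      have hpow1 : (σ * τ) ^ ((n / p + 1) * 2) = 1 := by
        rw [pow_mul, ← hτeq, pow_two, hτ2]
      have hdvd : n ∣ (n / p + 1) * 2 := orderOf_dvd_of_pow_eq_one hpow1
      have h2n : 2 ∣ n := hp2 ▸ hpdvd
      have he : (n / p + 1) * 2 = n + 2 := by
        rw [hp2]
        omega
      rw [he] at hdvd
      have hn2' : n ∣ 2 := (Nat.dvd_add_right dvd_rfl).1 hdvd
      have hn2 : n = 2 := by
        rcases (Nat.dvd_prime Nat.prime_two).1 hn2' with h' | h'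
        · exact absurd h' hn1
        · exact h'
      have hheq : h = σ * τ := by
        rw [hh, hn2, hp2]
        norm_num
      have hσst : σ * 1 = σ * τ := by
        rw [mul_one]
        exact hσh.trans hheq
      exact hτ1 (mul_left_cancel hσst).symm
    · have hσh2 : (σ * h) * (σ * h) = 1 := by
        calc (σ * h) * (σ * h) = σ * ((h * σ) * h) := by group
          _ = σ * ((σ * h) * h) := by rw [← hcomm]
          _ = (σ * σ) * (h * h) := by group
          _ = 1 := by rw [hσ2, hh2, mul_one]
      have hσh1 : σ * h ≠ 1 := by
        intro e
        have : σ⁻¹ = h := inv_eq_of_mul_eq_one_right e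
        rw [hσinv] at this
        exact hσh this
      obtain ⟨j, hj⟩ := IsAlgClosed.exists_pow_nat_eq (-1 : Ω) (n := 2) (by norm_num)
      have hj0 : j ≠ 0 := by
        intro h'
        rw [h'] at hj
        exact one_ne_zero (by linear_combination hj : (1 : Ω) = 0)
      have e1 := invol_neg_i hσ2 hσ1 hj
      have e2 := invol_neg_i hh2 hh1 hj
      have e3 := invol_neg_i hσh2 hσh1 hj
      have e4 : (σ * h) j = j := by
        rw [AlgEquiv.mul_apply, e2, map_neg, e1]
        ring
      rw [e3] at e4
      rcases mul_eq_zero.1 (show (2 : Ω) * j = 0 by linear_combination -e4) with h' | h'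
      · exact two_ne_zero h'
      · exact hj0 h'
  · exact no_odd_prime_order hp hp2 hordh

end Master

/-- If `σ ≠ τ` are two involutions in the absolute Galois group
`Gal(F) = Ω ≃ₐ[F] Ω` of a field `F`, then the homomorphism `(ℤ/2) ∗ (ℤ/2) → Gal(F)`
sending the generator of the first factor to `σ` and that of the second factor to `τ`
is injective; in particular the subgroup generated by `σ` and `τ` is infinite
(dihedral). -/
theorem coprod_zmod_two_to_galois_injective
    (F Ω : Type*) [Field F] [Field Ω] [Algebra F Ω] [IsAlgClosure F Ω]
    (σ τ : Ω ≃ₐ[F] Ω) (hσ2 : σ * σ = 1) (hσ1 : σ ≠ 1) (hτ2 : τ * τ = 1) (hτ1 : τ ≠ 1)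
    (hne : σ ≠ τ)
    (f : Coprod (Multiplicative (ZMod 2)) (Multiplicative (ZMod 2)) →* (Ω ≃ₐ[F] Ω))
    (hfσ : f (Coprod.inl (Multiplicative.ofAdd (1 : ZMod 2))) = σ)
    (hfτ : f (Coprod.inr (Multiplicative.ofAdd (1 : ZMod 2))) = τ) :
    Function.Injective f ∧ Infinite (Subgroup.closure {σ, τ}) := by
  haveI : IsAlgClosed Ω := IsAlgClosure.isAlgClosed (R := F)
  have hnofin : ¬ IsOfFinOrder (σ * τ) := mul_not_finOrder hσ2 hσ1 hτ2 hτ1 hne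
  set a : Coprod (Multiplicative (ZMod 2)) (Multiplicative (ZMod 2)) :=
    Coprod.inl (Multiplicative.ofAdd (1 : ZMod 2)) with hadef
  set b : Coprod (Multiplicative (ZMod 2)) (Multiplicative (ZMod 2)) :=
    Coprod.inr (Multiplicative.ofAdd (1 : ZMod 2)) with hbdef
  have hM : ∀ m : Multiplicative (ZMod 2), m = 1 ∨ m = Multiplicative.ofAdd 1 := by decide
  have hmul1 : (Multiplicative.ofAdd (1 : ZMod 2)) * (Multiplicative.ofAdd (1 : ZMod 2)) = 1 := by
    decide
  have ha2 : a * a = 1 := by rw [hadef, ← map_mul, hmul1, map_one]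
  have hb2 : b * b = 1 := by rw [hbdef, ← map_mul, hmul1, map_one]
  have hainv : a⁻¹ = a := inv_eq_of_mul_eq_one_right ha2
  have hbinv : b⁻¹ = b := inv_eq_of_mul_eq_one_right hb2
  set x := a * b with hxdef
  have hxinv : x⁻¹ = b * a := by rw [hxdef, mul_inv_rev, hainv, hbinv]
  have hconj : ∀ k : ℤ, a * x ^ k * a = x ^ (-k) := by
    intro k
    have h1 : MulAut.conj a (x ^ k) = (MulAut.conj a x) ^ k := map_zpow _ _ _
    simp only [MulAut.conj_apply, hainv] at h1
    have h2 : a * x * a = x⁻¹ := by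
      calc a * x * a = (a * a) * b * a := by rw [hxdef]; group
        _ = b * a := by rw [ha2, one_mul]
        _ = x⁻¹ := hxinv.symm
    rw [h1, h2, inv_zpow, ← zpow_neg]
  have hswap : ∀ k : ℤ, a * x ^ k = x ^ (-k) * a := by
    intro k
    calc a * x ^ k = a * x ^ k * (a * a) := by rw [ha2, mul_one]
      _ = (a * x ^ k * a) * a := by group
      _ = x ^ (-k) * a := by rw [hconj]
  have hdecomp : ∀ g, ∃ k : ℤ, g = x ^ k ∨ g = x ^ k * a := by
    intro g
    induction g using Coprod.induction_on with
    | inl m =>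
      rcases hM m with rfl | rfl
      · exact ⟨0, Or.inl (by simp)⟩
      · exact ⟨0, Or.inr (by rw [zpow_zero, one_mul, hadef])⟩
    | inr m =>
      rcases hM m with rfl | rfl
      · exact ⟨0, Or.inl (by simp)⟩
      · refine ⟨-1, Or.inr ?_⟩
        rw [zpow_neg, zpow_one, hxinv, mul_assoc, ha2, mul_one, hbdef]
    | mul g₁ g₂ ih₁ ih₂ =>
      obtain ⟨k, hk⟩ := ih₁
      obtain ⟨m, hm⟩ := ih₂
      rcases hk with h1 | h1 <;> rcases hm with h2 | h2 <;> rw [h1, h2]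
      · exact ⟨k + m, Or.inl (zpow_add x k m).symm⟩
      · exact ⟨k + m, Or.inr (by rw [← mul_assoc, ← zpow_add])⟩
      · refine ⟨k + -m, Or.inr ?_⟩
        rw [mul_assoc, hswap m, ← mul_assoc, ← zpow_add]
      · refine ⟨k + -m, Or.inl ?_⟩
        calc x ^ k * a * (x ^ m * a) = x ^ k * (a * x ^ m) * a := by group
          _ = x ^ k * (x ^ (-m) * a) * a := by rw [hswap]
          _ = (x ^ k * x ^ (-m)) * (a * a) := by group
          _ = x ^ (k + -m) := by rw [zpow_add, ha2, mul_one]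
  have hfa : f a = σ := hfσ
  have hfb : f b = τ := hfτ
  have hfx : f x = σ * τ := by rw [hxdef, map_mul, hfa, hfb]
  have hzpow_ne : ∀ k : ℤ, k ≠ 0 → (σ * τ) ^ k ≠ 1 := by
    intro k hk he
    apply hnofin
    refine isOfFinOrder_iff_pow_eq_one.2 ⟨k.natAbs, Int.natAbs_pos.2 hk, ?_⟩
    rcases Int.natAbs_eq k with he' | he'
    · rw [← zpow_natCast, ← he', he]
    · rw [← zpow_natCast, show ((k.natAbs : ℤ)) = -k by omega, zpow_neg, he, inv_one]
  constructor
  · rw [injective_iff_map_eq_one]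
    intro g hg
    obtain ⟨k, hk | hk⟩ := hdecomp g
    · rw [hk, map_zpow, hfx] at hg
      have hk0 : k = 0 := by
        by_contra h'
        exact hzpow_ne k h' hg
      rw [hk, hk0, zpow_zero]
    · exfalso
      rw [hk, map_mul, map_zpow, hfx, hfa] at hg
      have hσeq : σ = ((σ * τ) ^ k)⁻¹ := eq_inv_of_mul_eq_one_right hg
      have h2k : (σ * τ) ^ (-k + -k) = 1 := by
        rw [zpow_add, zpow_neg, ← hσeq, hσ2]
      by_cases hk0 : k = 0
      · rw [hk0] at hσeq
        simp at hσeq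
        exact hσ1 hσeq
      · exact hzpow_ne _ (by omega) h2k
  · have hmem : σ * τ ∈ Subgroup.closure ({σ, τ} : Set (Ω ≃ₐ[F] Ω)) :=
      mul_mem (Subgroup.subset_closure (by simp)) (Subgroup.subset_closure (by simp))
    have hinj : Function.Injective (fun m : ℕ => (σ * τ) ^ m) :=
      injective_pow_iff_not_isOfFinOrder.2 hnofin
    exact Infinite.of_injective
      (fun m : ℕ => (⟨(σ * τ) ^ m, pow_mem hmem m⟩ : Subgroup.closure ({σ, τ} : Set (Ω ≃ₐ[F] Ω))))
      (fun m n hmn => hinj (congrArg Subtype.val hmn))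
end

section
/- Let S be a set and F₂(S) the universal Coxeter group on S, i.e., the free product of copies of ℤ/2 indexed by S. Then every element g ∈ F₂(S) with g² = e and g ≠ e is conjugate in F₂(S) to the image of some generator s ∈ S. Consequently, the set of involutions of F₂(S) is exactly the union of the conjugacy classes of the generators. -/
/-!
The reduced word of `g⁻¹` is the reduced word of `g` read backwards with every letter inverted.
So if `g⁻¹ = g`, uniqueness of reduced words makes the word of `g` a palindrome up to inverting
letters. Its length cannot be even, since the two middle letters would then lie in the same
factor; hence it has the form `a ++ x :: a⁻¹`, and `g` is the conjugate by the product of `a`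
of the letter `x`, which is an involution of its factor. In `ℤ/2` that letter is the generator.
-/

open Monoid

namespace List

variable {α : Type*}

theorem exists_eq_append_cons_reverse_map_of_reverse_map_eq {σ : α → α} {R : α → α → Prop}
    (hR : ∀ a, ¬R a (σ a)) {l : List α} (hl : l ≠ []) (hc : l.IsChain R)
    (hσ : (l.map σ).reverse = l) : ∃ a x, σ x = x ∧ l = a ++ x :: (a.map σ).reverse := by
  induction l using List.bidirectionalRec with
  | nil => exact absurd rfl hl
  | singleton x => exact ⟨[], x, by simpa using hσ, rfl⟩
  | cons_append x m y ih =>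
    simp only [map_cons, map_append, map_nil, reverse_cons, reverse_append, reverse_nil,
      nil_append, cons_append, cons.injEq, append_singleton_inj] at hσ
    obtain ⟨rfl, hm, hy⟩ := hσ
    rcases eq_or_ne m [] with rfl | hm0
    · exact absurd (by simpa [hy] using hc) (hR (σ y))
    obtain ⟨a, z, hz, rfl⟩ := ih hm0 (hc.tail.left_of_append) hm
    exact ⟨σ y :: a, z, hz, by simp [hy]⟩

end List

namespace Monoid.CoprodI

variable {ι : Type*} {G : ι → Type*} [∀ i, Group (G i)]

theorem prod_map_of_reverse_map_inv (l : List (Σ i, G i)) :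
    (((l.map (Sigma.map id fun _ x => x⁻¹)).reverse.map fun p => of p.2).prod : CoprodI G) =
      (l.map fun p => of p.2).prod⁻¹ := by
  rw [List.prod_inv_reverse, List.map_reverse, List.map_map, List.map_map]
  congr 3 with p

namespace Word

def inv (w : Word G) : Word G where
  toList := (w.toList.map (Sigma.map id fun _ x => x⁻¹)).reverse
  ne_one p hp := by
    obtain ⟨q, hq, rfl⟩ := List.mem_map.mp (List.mem_reverse.mp hp)
    exact inv_ne_one.mpr (w.ne_one q hq)
  chain_ne := List.isChain_reverse.mpr <| (List.isChain_map _).mpr <|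
    w.chain_ne.imp fun _ _ h => h.symm

theorem prod_inv (w : Word G) : w.inv.prod = w.prod⁻¹ :=
  prod_map_of_reverse_map_inv w.toList

end Word

theorem exists_conj_of_mul_self_eq_one {g : CoprodI G} (hg : g * g = 1) (hne : g ≠ 1) :
    ∃ i, ∃ x : G i, x * x = 1 ∧ x ≠ 1 ∧ ∃ k, g = k * of x * k⁻¹ := by
  classical
  set w := Word.equiv g
  have hw : w.prod = g := Word.equiv.symm_apply_apply g
  have hinv : w.inv = w := Word.equiv.symm.injective <| by
    change w.inv.prod = w.prod
    rw [Word.prod_inv, hw, inv_eq_of_mul_eq_one_right hg]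
  have hw_ne_nil : w.toList ≠ [] := fun h => hne <| by rw [← hw, Word.prod, h]; rfl
  obtain ⟨a, ⟨i, x⟩, hx, hw_split⟩ := List.exists_eq_append_cons_reverse_map_of_reverse_map_eq
    (σ := Sigma.map id fun _ x => x⁻¹) (fun _ h => h rfl) hw_ne_nil w.chain_ne
    (congrArg Word.toList hinv)
  have hx_inv : x⁻¹ = x := by simpa [Sigma.map] using hx
  refine ⟨i, x, mul_eq_one_iff_eq_inv.mpr hx_inv.symm, w.ne_one ⟨i, x⟩ (by simp [hw_split]), ?_⟩
  refine ⟨(a.map fun p => of p.2).prod, ?_⟩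
  rw [← hw, Word.prod, hw_split, List.map_append, List.prod_append, List.map_cons, List.prod_cons,
    prod_map_of_reverse_map_inv, mul_assoc]

end Monoid.CoprodI

/-- In the universal Coxeter group `F₂(S)` on a set `S` (the free
product of copies of `ℤ/2` indexed by `S`), every involution is conjugate to a
generator; consequently the set of involutions is the union of the conjugacy
classes of the generators. -/
theorem involutions_of_universalCoxeterGroup (S : Type*) :
    (∀ g : CoprodI (fun _ : S => Multiplicative (ZMod 2)),
      g * g = 1 → g ≠ 1 →
        ∃ (s : S) (k : CoprodI (fun _ : S => Multiplicative (ZMod 2))),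
          g = k * CoprodI.of (i := s) (Multiplicative.ofAdd (1 : ZMod 2)) * k⁻¹) ∧
    ({g : CoprodI (fun _ : S => Multiplicative (ZMod 2)) | g * g = 1 ∧ g ≠ 1} =
      ⋃ s : S, {g | ∃ k, g = k * CoprodI.of (i := s) (Multiplicative.ofAdd (1 : ZMod 2)) * k⁻¹}) := by
  have eq_ofAdd_one : ∀ x : Multiplicative (ZMod 2), x ≠ 1 → x = .ofAdd 1 := by decide
  have conj_generator : ∀ g : CoprodI (fun _ : S => Multiplicative (ZMod 2)), g * g = 1 → g ≠ 1 →
      ∃ (s : S) (k : CoprodI (fun _ : S => Multiplicative (ZMod 2))),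
        g = k * CoprodI.of (i := s) (Multiplicative.ofAdd (1 : ZMod 2)) * k⁻¹ := by
    intro g hg hne
    obtain ⟨s, x, -, hx, k, rfl⟩ := CoprodI.exists_conj_of_mul_self_eq_one hg hne
    exact ⟨s, k, by rw [eq_ofAdd_one x hx]⟩
  refine ⟨conj_generator, Set.ext fun g =>
    ⟨fun ⟨hg, hne⟩ => Set.mem_iUnion.mpr (conj_generator g hg hne), ?_⟩⟩
  rintro ⟨_, ⟨s, rfl⟩, k, rfl⟩
  set t : CoprodI (fun _ : S => Multiplicative (ZMod 2)) := CoprodI.of (i := s) (.ofAdd 1)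
  have ht : t * t = 1 := by
    rw [← map_mul, ← map_one (CoprodI.of (i := s))]
    rfl
  have ht_ne : t ≠ 1 := by
    rw [Ne, ← map_one (CoprodI.of (i := s)), (CoprodI.of_injective s).eq_iff]
    decide
  exact ⟨by rw [conj_mul, ht, mul_one, mul_inv_cancel], conj_eq_one_iff.not.mpr ht_ne⟩
end

section
/- Let S be a set and F₂(S) the universal Coxeter group on S, i.e., the free product of copies of ℤ/2 indexed by S. For each generator s ∈ S, the centraliser of (the image of) s in F₂(S) is exactly the two-element subgroup {e, s}. In particular, if g s g⁻¹ = h s h⁻¹ for g, h ∈ F₂(S), then h ∈ {g, gs}. -/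
open Monoid Monoid.CoprodI Monoid.CoprodI.Word

namespace UCGaux

variable {S : Type*} [DecidableEq S]

local notation "G" => CoprodI (fun _ : S => Multiplicative (ZMod 2))

def ofl (j : S) (m : Multiplicative (ZMod 2)) : G := CoprodI.of (i := j) m

def sig (s : S) : G := ofl s (Multiplicative.ofAdd 1)

lemma zmod2_eq (m : Multiplicative (ZMod 2)) (h : m ≠ 1) :
    m = Multiplicative.ofAdd 1 := by revert h; revert m; decide

omit [DecidableEq S] in
lemma sig_mul_self (s : S) : sig s * sig s = 1 := by
  rw [sig, ofl, ← MonoidHom.map_mul]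
  have : (Multiplicative.ofAdd (1 : ZMod 2)) * Multiplicative.ofAdd 1 = 1 := by decide
  rw [this, MonoidHom.map_one]

lemma equiv_apply (x : G) : Word.equiv x = x • Word.empty := rfl

lemma equiv_one : Word.equiv (1 : G) = Word.empty := by
  rw [equiv_apply, one_smul]

lemma eq_one_of_toList_eq_nil {g : G} (h : (Word.equiv g).toList = []) : g = 1 := by
  have h2 : Word.equiv g = Word.empty := Word.ext h
  have := congrArg Word.equiv.symm (h2.trans equiv_one.symm)
  rwa [Equiv.symm_apply_apply, Equiv.symm_apply_apply] at this

lemma equiv_mul (x y : G) : Word.equiv (x * y) = x • Word.equiv y := by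
  rw [equiv_apply, equiv_apply, mul_smul]

lemma equiv_of_mul {j : S} (m : Multiplicative (ZMod 2)) (hm : m ≠ 1) (x : G)
    (hx : Word.fstIdx (Word.equiv x) ≠ some j) :
    Word.equiv (ofl j m * x) = Word.cons (M := fun _ : S => Multiplicative (ZMod 2)) (i := j) m (Word.equiv x) hx hm := by
  rw [equiv_mul, ofl, Word.cons_eq_smul]

lemma fstIdx_of_mul {j : S} (m : Multiplicative (ZMod 2)) (hm : m ≠ 1) (x : G)
    (hx : Word.fstIdx (Word.equiv x) ≠ some j) :
    Word.fstIdx (Word.equiv (ofl j m * x)) = some j := by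
  rw [equiv_of_mul m hm x hx]
  rfl

lemma toList_of_mul {j : S} (m : Multiplicative (ZMod 2)) (hm : m ≠ 1) (x : G)
    (hx : Word.fstIdx (Word.equiv x) ≠ some j) :
    (Word.equiv (ofl j m * x)).toList = ⟨j, m⟩ :: (Word.equiv x).toList := by
  rw [equiv_of_mul m hm x hx]; rfl

end UCGaux

namespace UCGaux2
open UCGaux
variable {S : Type*} [DecidableEq S]
local notation "G" => CoprodI (fun _ : S => Multiplicative (ZMod 2))

lemma decompAt {j : S} {g : G} (h : Word.fstIdx (Word.equiv g) = some j) :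
    ∃ g' : G, g = sig j * g' ∧
      (Word.equiv g').toList.length + 1 = (Word.equiv g).toList.length ∧
      Word.fstIdx (Word.equiv g') ≠ some j := by
  set w := Word.equiv g with hw
  set p := Word.equivPair j w with hp
  have hr : Word.rcons p = w := by
    rw [hp, ← Word.equivPair_symm, Equiv.symm_apply_apply]
  have hhead : p.head ≠ 1 := by
    intro h1
    apply p.fstIdx_ne
    rw [Word.rcons, dif_pos h1] at hr
    rw [hr]; exact h
  have hm : p.head = Multiplicative.ofAdd 1 := zmod2_eq _ hhead
  have hg : Word.prod w = g := by
    rw [show Word.prod w = Word.equiv.symm w from rfl, hw, Equiv.symm_apply_apply]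
  have hc : Word.rcons p = Word.cons (M := fun _ : S => Multiplicative (ZMod 2)) (i := j) p.head p.tail p.fstIdx_ne hhead := by
    rw [Word.rcons, dif_neg hhead]
  refine ⟨Word.prod p.tail, ?_, ?_, ?_⟩
  · rw [← hg, ← hr, Word.prod_rcons, hm, sig, ofl]
  · have htl : Word.equiv (Word.prod p.tail) = p.tail := by
      rw [show Word.prod p.tail = Word.equiv.symm p.tail from rfl, Equiv.apply_symm_apply]
    rw [htl, ← hr, hc]
    rfl
  · rw [show Word.equiv (Word.prod p.tail) = p.tail from
      (show Word.prod p.tail = Word.equiv.symm p.tail from rfl) ▸ Equiv.apply_symm_apply _ _]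
    exact p.fstIdx_ne

end UCGaux2

namespace UCGaux3
open UCGaux UCGaux2
variable {S : Type*} [DecidableEq S]
local notation "G" => CoprodI (fun _ : S => Multiplicative (ZMod 2))

lemma sig_eq (s : S) : sig s = ofl s (Multiplicative.ofAdd 1) := rfl

lemma one_ne : (Multiplicative.ofAdd (1 : ZMod 2)) ≠ 1 := by decide

lemma fstIdx_sig (s : S) : Word.fstIdx (Word.equiv (sig s : G)) = some s := by
  have h0 : Word.fstIdx (Word.equiv (1 : G)) ≠ some s := by rw [equiv_one]; simp [Word.fstIdx]
  have := fstIdx_of_mul (j := s) (Multiplicative.ofAdd 1) one_ne 1 h0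
  rwa [mul_one] at this

lemma claimC (s : S) : ∀ (n : ℕ) (g : G), (Word.equiv g).toList.length ≤ n →
    (Word.equiv g).toList ≠ [] → Word.fstIdx (Word.equiv g) ≠ some s →
    Word.fstIdx (Word.equiv (g * sig s)) = Word.fstIdx (Word.equiv g) ∧
      (Word.equiv (g * sig s)).toList ≠ [] := by
  intro n
  induction n with
  | zero =>
    intro g hlen hne _
    exact absurd (List.length_eq_zero_iff.mp (Nat.le_zero.mp hlen)) hne
  | succ n ih =>
    intro g hlen hne hs
    obtain ⟨a, l, hal⟩ := List.exists_cons_of_ne_nil hne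
    have hj : Word.fstIdx (Word.equiv g) = some a.1 := by simp [Word.fstIdx, hal]
    have hjs : a.1 ≠ s := fun h => hs (h ▸ hj)
    obtain ⟨g', hg, hlen', hfst⟩ := decompAt hj
    rw [hj]
    by_cases hne' : (Word.equiv g').toList = []
    · -- g' = 1, g = sig a.1
      have hg1 : g' = 1 := eq_one_of_toList_eq_nil hne'
      subst hg1
      rw [mul_one] at hg
      subst hg
      have hx : Word.fstIdx (Word.equiv (sig s : G)) ≠ some a.1 := by
        rw [fstIdx_sig]; exact fun h => hjs (Option.some.inj h.symm)
      constructor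
      · rw [show sig a.1 * sig s = ofl a.1 (Multiplicative.ofAdd 1) * sig s from rfl]
        exact fstIdx_of_mul _ one_ne _ hx
      · rw [show sig a.1 * sig s = ofl a.1 (Multiplicative.ofAdd 1) * sig s from rfl,
          toList_of_mul _ one_ne _ hx]
        simp
    · obtain ⟨b, l', hbl⟩ := List.exists_cons_of_ne_nil hne'
      have hk : Word.fstIdx (Word.equiv g') = some b.1 := by simp [Word.fstIdx, hbl]
      have hkj : b.1 ≠ a.1 := fun h => hfst (h ▸ hk)
      by_cases hks : b.1 = s
      · -- second letter is sig s : peel it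
        obtain ⟨g'', hg', hlen'', hfst'⟩ := decompAt (hks ▸ hk)
        by_cases hne'' : (Word.equiv g'').toList = []
        · -- g = sig a.1 * sig s, so g * sig s = sig a.1
          have hg1 : g'' = 1 := eq_one_of_toList_eq_nil hne''
          subst hg1
          rw [mul_one] at hg'
          subst hg'
          subst hg
          have hgs : sig a.1 * sig s * sig s = ofl a.1 (Multiplicative.ofAdd 1) * 1 := by
            rw [mul_assoc, sig_mul_self, mul_one, mul_one]; rfl
          have hx : Word.fstIdx (Word.equiv (1 : G)) ≠ some a.1 := by
            rw [equiv_one]; simp [Word.fstIdx]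
          rw [hgs]
          constructor
          · exact fstIdx_of_mul _ one_ne _ hx
          · rw [toList_of_mul _ one_ne _ hx]; simp
        · obtain ⟨c, l'', hcl⟩ := List.exists_cons_of_ne_nil hne''
          have hi : Word.fstIdx (Word.equiv g'') = some c.1 := by simp [Word.fstIdx, hcl]
          have his : c.1 ≠ s := fun h => hfst' (h ▸ hi)
          have hlg : (Word.equiv g'').toList.length ≤ n := by omega
          obtain ⟨hfi, hni⟩ := ih g'' hlg hne'' (fun h => his (Option.some.inj (hi ▸ h).symm).symm)
          rw [hi] at hfi
          -- g * sig s = sig a.1 * (sig s * (g'' * sig s))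
          have hx1 : Word.fstIdx (Word.equiv (g'' * sig s)) ≠ some s := by
            rw [hfi]; exact fun h => his (Option.some.inj h)
          have hfs : Word.fstIdx (Word.equiv (sig s * (g'' * sig s))) = some s :=
            fstIdx_of_mul _ one_ne _ hx1
          have hx2 : Word.fstIdx (Word.equiv (sig s * (g'' * sig s))) ≠ some a.1 := by
            rw [hfs]; exact fun h => hjs (Option.some.inj h.symm)
          have hrw : g * sig s = ofl a.1 (Multiplicative.ofAdd 1) * (sig s * (g'' * sig s)) := by
            rw [hg, hg']; rw [show ofl a.1 (Multiplicative.ofAdd 1) = sig a.1 from rfl]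
            simp [mul_assoc]
          rw [hrw]
          constructor
          · exact fstIdx_of_mul _ one_ne _ hx2
          · rw [toList_of_mul _ one_ne _ hx2]; simp
      · -- second letter has index ≠ s : use IH on g'
        have hlg : (Word.equiv g').toList.length ≤ n := by omega
        obtain ⟨hfi, hni⟩ := ih g' hlg hne' (fun h => hks (Option.some.inj (hk ▸ h).symm).symm)
        rw [hk] at hfi
        have hx : Word.fstIdx (Word.equiv (g' * sig s)) ≠ some a.1 := by
          rw [hfi]; exact fun h => hkj (Option.some.inj h)
        have hrw : g * sig s = ofl a.1 (Multiplicative.ofAdd 1) * (g' * sig s) := by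
          rw [hg]; rw [show ofl a.1 (Multiplicative.ofAdd 1) = sig a.1 from rfl, mul_assoc]
        rw [hrw]
        constructor
        · exact fstIdx_of_mul _ one_ne _ hx
        · rw [toList_of_mul _ one_ne _ hx]; simp

lemma main (s : S) : ∀ (n : ℕ) (g : G), (Word.equiv g).toList.length ≤ n →
    g * sig s = sig s * g → g = 1 ∨ g = sig s := by
  intro n
  induction n with
  | zero =>
    intro g hlen _
    exact Or.inl (eq_one_of_toList_eq_nil (List.length_eq_zero_iff.mp (Nat.le_zero.mp hlen)))
  | succ n ih =>
    intro g hlen hc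
    by_cases hne : (Word.equiv g).toList = []
    · exact Or.inl (eq_one_of_toList_eq_nil hne)
    obtain ⟨a, l, hal⟩ := List.exists_cons_of_ne_nil hne
    have hj : Word.fstIdx (Word.equiv g) = some a.1 := by simp [Word.fstIdx, hal]
    by_cases hjs : a.1 = s
    · obtain ⟨g', hg, hlen', hfst⟩ := decompAt (hjs ▸ hj)
      subst hg
      have hcomm : g' * sig s = sig s * g' := by
        rw [mul_assoc] at hc
        exact mul_left_cancel hc
      have hlg : (Word.equiv g').toList.length ≤ n := by omega
      rcases ih g' hlg hcomm with rfl | rfl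
      · right; rw [mul_one]
      · left; exact sig_mul_self s
    · exfalso
      have h1 := (claimC s (n+1) g hlen hne (fun h => hjs (Option.some.inj (hj ▸ h).symm).symm)).1
      rw [hc, hj] at h1
      have hx : Word.fstIdx (Word.equiv g) ≠ some s := by
        rw [hj]; exact fun h => hjs (Option.some.inj h)
      have h2 : Word.fstIdx (Word.equiv (sig s * g)) = some s := fstIdx_of_mul _ one_ne _ hx
      rw [h1] at h2
      exact hjs (Option.some.inj h2)

end UCGaux3

open Monoid UCGaux UCGaux2 UCGaux3 in
/-- In the universal Coxeter group `F₂(S)` on a set `S`, the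
centraliser of a generator `s` is the two-element subgroup `{1, s}`; in particular,
`g s g⁻¹ = h s h⁻¹` implies `h = g` or `h = g * s`. -/
theorem centralizer_of_generator_universalCoxeterGroup (S : Type*) (s : S) :
    (∀ g : CoprodI (fun _ : S => Multiplicative (ZMod 2)),
      g * CoprodI.of (i := s) (Multiplicative.ofAdd (1 : ZMod 2)) =
          CoprodI.of (i := s) (Multiplicative.ofAdd (1 : ZMod 2)) * g ↔
        g = 1 ∨ g = CoprodI.of (i := s) (Multiplicative.ofAdd (1 : ZMod 2))) ∧
    (∀ g h : CoprodI (fun _ : S => Multiplicative (ZMod 2)),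
      g * CoprodI.of (i := s) (Multiplicative.ofAdd (1 : ZMod 2)) * g⁻¹ =
          h * CoprodI.of (i := s) (Multiplicative.ofAdd (1 : ZMod 2)) * h⁻¹ →
        h = g ∨ h = g * CoprodI.of (i := s) (Multiplicative.ofAdd (1 : ZMod 2))) := by
  letI : DecidableEq S := Classical.decEq S
  have key : ∀ g : CoprodI (fun _ : S => Multiplicative (ZMod 2)),
      g * sig s = sig s * g → g = 1 ∨ g = sig s :=
    fun g => main s (Word.equiv g).toList.length g le_rfl
  constructor
  · intro g
    constructor
    · exact key g
    · rintro (rfl | rfl)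
      · rw [one_mul, mul_one]
      · rfl
  · intro g h hgh
    have hc : (g⁻¹ * h) * sig s = sig s * (g⁻¹ * h) := by
      have e1 := congrArg (fun x => g⁻¹ * (x * h)) hgh
      simp only [mul_assoc] at e1 ⊢
      simpa [mul_assoc, sig, ofl] using e1.symm
    rcases key _ hc with h1 | h1
    · left
      have := congrArg (fun x => g * x) h1
      simpa [mul_assoc] using this
    · right
      have := congrArg (fun x => g * x) h1
      simpa [mul_assoc, sig, ofl] using this
end

section
/- Let S be a set, F₂(S) the universal Coxeter group on S (the free product of copies of ℤ/2 indexed by S), and let FQ₂(S) = {g ∈ F₂(S) : g² = e, g ≠ e} be its set of involutions, equipped with the conjugation operation g ▷ h = ghg⁻¹. Then FQ₂(S) is the free involutory quandle on S: for every involutory quandle (Q, ▷) and every map φ : S → Q, there exists a unique map f : FQ₂(S) → Q such that f(s) = φ(s) for every generator s ∈ S and f(g ▷ h) = f(g) ▷ f(h) for all g, h ∈ FQ₂(S). -/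
open Monoid Quandles

/-- The universal Coxeter group on `S`: the free product of copies of `ℤ/2`
indexed by `S`. -/
abbrev UniversalCoxeterGroup (S : Type*) : Type _ :=
  CoprodI (fun _ : S => Multiplicative (ZMod 2))

/-- The generator of the universal Coxeter group corresponding to `s : S`. -/
def coxGen {S : Type*} (s : S) : UniversalCoxeterGroup S :=
  CoprodI.of (i := s) (Multiplicative.ofAdd (1 : ZMod 2))

/-- The set of involutions of a group `G`. -/
def Involutions (G : Type*) [Group G] : Type _ := {g : G // g * g = 1 ∧ g ≠ 1}

/-- Conjugation `a ▷ b = a b a⁻¹` on the set of involutions of a group. -/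
def Involutions.conjOp {G : Type*} [Group G] (a b : Involutions G) : Involutions G :=
  ⟨a.1 * b.1 * a.1⁻¹, by
    constructor
    · have hb : b.1 * b.1 = 1 := b.2.1
      have h : a.1 * b.1 * a.1⁻¹ * (a.1 * b.1 * a.1⁻¹) = a.1 * (b.1 * b.1) * a.1⁻¹ := by
        group
      rw [h, hb, mul_one, mul_inv_cancel]
    · intro h
      apply b.2.2
      have h' : b.1 = a.1⁻¹ * (a.1 * b.1 * a.1⁻¹) * a.1 := by group
      rw [h] at h'
      simpa using h'⟩



namespace FQaux

abbrev UCG (S : Type*) : Type _ := CoprodI (fun _ : S => Multiplicative (ZMod 2))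

def cg {S : Type*} (s : S) : UCG S := CoprodI.of (i := s) (Multiplicative.ofAdd (1 : ZMod 2))

lemma zmod2_ne_one (m : Multiplicative (ZMod 2)) (h : m ≠ 1) : m = Multiplicative.ofAdd 1 := by
  revert h; revert m; decide

lemma zmod2_mul_self : (Multiplicative.ofAdd (1 : ZMod 2)) * Multiplicative.ofAdd 1 = 1 := by decide

lemma zmod2_gen_ne_one : (Multiplicative.ofAdd (1 : ZMod 2)) ≠ 1 := by decide

variable {S : Type*} [DecidableEq S]

/-- The reduced word of `g` as a list of indices. -/
noncomputable def wl (g : UCG S) : List S := ((CoprodI.Word.equiv g).toList.map Sigma.fst)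

lemma toList_eq (g : UCG S) :
    (CoprodI.Word.equiv g).toList = (wl g).map (fun s => ⟨s, Multiplicative.ofAdd 1⟩) := by
  rw [wl, List.map_map]
  conv_lhs => rw [← List.map_id (CoprodI.Word.equiv g).toList]
  refine List.map_congr_left (fun l hl => ?_)
  have := (CoprodI.Word.equiv g).ne_one l hl
  have h2 := zmod2_ne_one l.snd this
  cases l; simp_all [Function.comp]

lemma chain_wl (g : UCG S) : (wl g).Chain' (· ≠ ·) := by
  rw [wl, List.Chain', List.isChain_map]
  have := (CoprodI.Word.equiv g).chain_ne
  exact this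

lemma wl_one : wl (1 : UCG S) = [] := by
  have : CoprodI.Word.equiv (1 : UCG S) = CoprodI.Word.empty := by
    show (1 : UCG S) • CoprodI.Word.empty = _
    rw [one_smul]
  rw [wl, this]; rfl

lemma prod_wl (g : UCG S) : ((wl g).map cg).prod = g := by
  have h := (CoprodI.Word.equiv (M := fun _ : S => Multiplicative (ZMod 2))).symm_apply_apply g
  have h2 : CoprodI.Word.prod (CoprodI.Word.equiv g) = ((wl g).map cg).prod := by
    rw [CoprodI.Word.prod, toList_eq, List.map_map]; rfl
  rw [← h2]; exact h

end FQaux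
namespace FQaux
variable {S : Type*} [DecidableEq S]

lemma fstIdx_eq (g : UCG S) : (CoprodI.Word.equiv g).fstIdx = (wl g).head? := by
  rw [CoprodI.Word.fstIdx, toList_eq, List.head?_map, wl]
  cases h : ((CoprodI.Word.equiv g).toList.map Sigma.fst).head? <;> simp_all

lemma equiv_mul (s : S) (g : UCG S) :
    CoprodI.Word.equiv (cg s * g) =
      CoprodI.of (M := fun _ : S => Multiplicative (ZMod 2)) (i := s) (Multiplicative.ofAdd 1) • CoprodI.Word.equiv g := by
  show (cg s * g) • (CoprodI.Word.empty : CoprodI.Word fun _ : S => Multiplicative (ZMod 2)) = _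
  rw [mul_smul]; rfl

lemma wl_cg_mul (s : S) (g : UCG S) :
    wl (cg s * g) = if (wl g).head? = some s then (wl g).tail else s :: wl g := by
  set w := CoprodI.Word.equiv g with hw
  by_cases h : (wl g).head? = some s
  · rw [if_pos h]
    set p := CoprodI.Word.equivPair s w with hp
    have hrc : CoprodI.Word.rcons p = w := (CoprodI.Word.equivPair s).symm_apply_apply w
    have hfst : w.fstIdx = some s := by rw [fstIdx_eq]; exact h
    have hne : p.head ≠ 1 := by
      intro h1
      rw [CoprodI.Word.rcons, dif_pos h1] at hrc
      exact p.fstIdx_ne (hrc ▸ hfst)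
    have hph : p.head = Multiplicative.ofAdd 1 := zmod2_ne_one _ hne
    have hlist : w.toList = ⟨s, p.head⟩ :: p.tail.toList := by
      conv_lhs => rw [← hrc]
      rw [CoprodI.Word.rcons, dif_neg hne]
      rfl
    have hsmul : CoprodI.of (M := fun _ : S => Multiplicative (ZMod 2)) (i := s) (Multiplicative.ofAdd 1) • w = p.tail := by
      rw [CoprodI.Word.of_smul_def, ← hp, CoprodI.Word.rcons, dif_pos]
      rw [hph]; exact zmod2_mul_self
    rw [wl, equiv_mul, ← hw, hsmul]
    have : wl g = s :: p.tail.toList.map Sigma.fst := by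
      rw [wl, ← hw, hlist]; rfl
    rw [this]; rfl
  · rw [if_neg h]
    have hfst : w.fstIdx ≠ some s := by rw [fstIdx_eq]; exact h
    have hp : CoprodI.Word.equivPair s w = ⟨1, w, hfst⟩ :=
      CoprodI.Word.equivPair_eq_of_fstIdx_ne hfst
    have hsmul : CoprodI.of (M := fun _ : S => Multiplicative (ZMod 2)) (i := s) (Multiplicative.ofAdd 1) • w =
        CoprodI.Word.cons (M := fun _ : S => Multiplicative (ZMod 2)) (i := s) (Multiplicative.ofAdd (1 : ZMod 2)) w hfst zmod2_gen_ne_one := by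
      rw [CoprodI.Word.of_smul_def, hp, CoprodI.Word.rcons]
      simp only [mul_one]
      rw [dif_neg zmod2_gen_ne_one]
    rw [wl, equiv_mul, ← hw, hsmul]
    rfl

end FQaux
namespace FQaux
variable {S : Type*} [DecidableEq S]
set_option linter.unusedSectionVars false

lemma cg_mul_self (s : S) : cg s * cg s = (1 : UCG S) := by
  rw [cg, ← MonoidHom.map_mul, zmod2_mul_self, map_one]

lemma cg_inv (s : S) : (cg s)⁻¹ = cg s :=
  (inv_eq_of_mul_eq_one_right (cg_mul_self s)).symm

lemma wl_prodList : ∀ l : List S, l.Chain' (· ≠ ·) → wl ((l.map cg).prod) = l := by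
  intro l
  induction l with
  | nil => intro _; simpa using wl_one
  | cons s t ih =>
    intro hc
    rw [List.Chain', List.isChain_cons] at hc
    rw [List.map_cons, List.prod_cons, wl_cg_mul, ih hc.2, if_neg]
    intro h
    cases ht : t.head? with
    | none => rw [ht] at h; simp at h
    | some a => exact hc.1 a ht (by rw [ht] at h; simpa using h.symm)

lemma wl_inv (g : UCG S) : wl g⁻¹ = (wl g).reverse := by
  have h1 : g⁻¹ = (((wl g).reverse).map cg).prod := by
    conv_lhs => rw [← prod_wl g]
    rw [List.prod_inv_reverse]
    have h2 : List.map (fun x => x⁻¹) (List.map cg (wl g)) = List.map cg (wl g) := by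
      rw [List.map_map]
      exact List.map_congr_left fun a _ => cg_inv a
    rw [h2, ← List.map_reverse]
  rw [h1, wl_prodList]
  rw [List.Chain', List.isChain_reverse]
  exact (chain_wl g).imp fun a b h => Ne.symm h

lemma wl_eq_nil_iff (g : UCG S) : wl g = [] ↔ g = 1 := by
  constructor
  · intro h
    have := prod_wl g
    rw [h] at this
    simpa using this.symm
  · rintro rfl; exact wl_one

lemma wl_mul_cg (g : UCG S) (s : S) :
    wl (g * cg s) = if (wl g).getLast? = some s then (wl g).dropLast else wl g ++ [s] := by
  have h1 : g * cg s = (cg s * g⁻¹)⁻¹ := by rw [mul_inv_rev, inv_inv, cg_inv]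
  rw [h1, wl_inv, wl_cg_mul, wl_inv, ← List.head?_reverse]
  by_cases h : (wl g).reverse.head? = some s
  · rw [if_pos h, if_pos h, List.tail_reverse, List.reverse_reverse]
  · rw [if_neg h, if_neg h, List.reverse_cons, List.reverse_reverse]

lemma wl_pal {g : UCG S} (h : g * g = 1) : (wl g).reverse = wl g := by
  have h1 : g⁻¹ = g := inv_eq_of_mul_eq_one_right h
  rw [← wl_inv, h1]

lemma pal_odd {l : List S} (hpal : l.reverse = l) (hchain : l.Chain' (· ≠ ·)) (hne : l ≠ []) :
    l.length % 2 = 1 := by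
  by_contra hodd
  have hlen : 0 < l.length := List.length_pos_iff.2 hne
  obtain ⟨k, hk⟩ : ∃ k, l.length = 2 * k := ⟨l.length / 2, by omega⟩
  have hk0 : 1 ≤ k := by omega
  have hk1 : k - 1 < l.length - 1 := by omega
  have hchain' := (List.isChain_iff_getElem.1 hchain) (k - 1) (by omega)
  apply hchain'
  have key : l[k-1]? = l[k-1+1]? := by
    calc l[k-1]? = l.reverse[k-1]? := by rw [hpal]
    _ = l[l.length - 1 - (k-1)]? := List.getElem?_reverse (by omega)
    _ = l[k-1+1]? := by rw [show l.length - 1 - (k-1) = k-1+1 by omega]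
  rw [List.getElem?_eq_getElem (by omega), List.getElem?_eq_getElem (by omega)] at key
  exact Option.some_injective _ key

lemma wl_odd {g : UCG S} (h : g * g = 1) (h1 : g ≠ 1) : (wl g).length % 2 = 1 :=
  pal_odd (wl_pal h) (chain_wl g) (fun hn => h1 ((wl_eq_nil_iff g).1 hn))

end FQaux
namespace FQaux
set_option linter.unusedSectionVars false
variable {S : Type*} [DecidableEq S] {Q : Type*} [Quandle Q]

/-- Evaluate an odd palindromic word in a quandle. -/
noncomputable def evalQ (φ : S → Q) : List S → Option Q
  | [] => none
  | [s] => some (φ s)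
  | s :: a :: t => ((evalQ φ ((a :: t).dropLast)).map (fun q => φ s ◃ q))
termination_by l => l.length
decreasing_by simp

variable (φ : S → Q)

lemma evalQ_single (s : S) : evalQ φ [s] = some (φ s) := by simp [evalQ]

lemma evalQ_sandwich (s t : S) (m : List S) :
    evalQ φ (s :: (m ++ [t])) = (evalQ φ m).map (fun q => φ s ◃ q) := by
  cases m with
  | nil => simp [evalQ]
  | cons a m' =>
    show evalQ φ (s :: a :: (m' ++ [t])) = _
    rw [evalQ]
    congr 2
    show ((a :: m') ++ [t]).dropLast = _
    rw [List.dropLast_concat]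

lemma evalQ_isSome : ∀ (n : ℕ) (l : List S), l.length ≤ n → l.length % 2 = 1 →
    (evalQ φ l).isSome := by
  intro n
  induction n with
  | zero => intro l hl hodd; omega
  | succ n ih =>
    intro l hl hodd
    match l with
    | [] => simp at hodd
    | [s] => rw [evalQ_single]; rfl
    | s :: a :: t =>
      rw [evalQ, Option.isSome_map]
      refine ih _ ?_ ?_
      · simp at hl ⊢; omega
      · simp at hodd ⊢; omega

end FQaux
namespace FQaux
set_option linter.unusedSectionVars false
variable {S : Type*} [DecidableEq S] {Q : Type*} [Quandle Q]

lemma wl_cg (s : S) : wl (cg s) = [s] := by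
  have h := wl_mul_cg (1 : UCG S) s
  rw [one_mul, wl_one] at h
  rw [h]; rfl

lemma cg_ne_one (s : S) : cg s ≠ 1 := by
  intro h
  have h2 := wl_cg (S := S) s
  rw [h, wl_one] at h2
  simp at h2

/-- The generator as an involution. -/
def genInv (s : S) : Involutions (UniversalCoxeterGroup S) :=
  ⟨coxGen s, cg_mul_self s, cg_ne_one s⟩

lemma conj_val (s : S) (x : Involutions (UniversalCoxeterGroup S)) :
    ((genInv s).conjOp x).1 = cg s * x.1 * (cg s)⁻¹ := rfl

lemma inv_ne_nil (x : Involutions (UniversalCoxeterGroup S)) : wl x.1 ≠ [] :=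
  fun h => x.2.2 ((wl_eq_nil_iff _).1 h)

lemma inv_getLast_eq_head (x : Involutions (UniversalCoxeterGroup S)) :
    (wl x.1).getLast? = (wl x.1).head? := by
  rw [List.getLast?_eq_head?_reverse, wl_pal x.2.1]

lemma wl_conj_ne (s : S) (x : Involutions (UniversalCoxeterGroup S))
    (h : (wl x.1).head? ≠ some s) :
    wl ((genInv s).conjOp x).1 = s :: (wl x.1 ++ [s]) := by
  have h2 : (wl x.1 ++ [s]).head? ≠ some s := by
    cases hl : wl x.1 with
    | nil => exact absurd hl (inv_ne_nil x)
    | cons a t =>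
      rw [hl] at h
      simp only [List.cons_append, List.head?_cons, ne_eq, Option.some.injEq] at h ⊢
      exact h
  rw [conj_val, cg_inv, mul_assoc, wl_cg_mul, wl_mul_cg, inv_getLast_eq_head x, if_neg h,
    if_neg h2]

lemma wl_conj_eq (s : S) (x : Involutions (UniversalCoxeterGroup S)) (m : List S)
    (hm : m ≠ []) (h : wl x.1 = s :: m) :
    wl ((genInv s).conjOp x).1 = m.dropLast := by
  have hlast : (wl x.1).getLast? = some s := by rw [inv_getLast_eq_head, h]; rfl
  have hdl : (wl x.1).dropLast = s :: m.dropLast := by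
    rw [h]; exact List.dropLast_cons_of_ne_nil hm
  rw [conj_val, cg_inv, mul_assoc, wl_cg_mul, wl_mul_cg, if_pos hlast, hdl,
    if_pos (show (s :: m.dropLast).head? = some s from rfl)]
  rfl

lemma x_eq_genInv (s : S) (x : Involutions (UniversalCoxeterGroup S)) (h : wl x.1 = [s]) :
    x = genInv s := by
  apply Subtype.ext
  have h2 := prod_wl x.1
  rw [h] at h2
  simp only [List.map_cons, List.map_nil, List.prod_cons, List.prod_nil, mul_one] at h2
  exact h2.symm

lemma m_decomp (s : S) (x : Involutions (UniversalCoxeterGroup S)) (m : List S)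
    (hm : m ≠ []) (h : wl x.1 = s :: m) : m = m.dropLast ++ [s] := by
  have h2 := inv_getLast_eq_head x
  rw [h] at h2
  have h3 : m.getLast? = some s := by
    cases m with
    | nil => exact absurd rfl hm
    | cons b t =>
      rw [List.getLast?_cons_cons] at h2
      simpa using h2
  have h4 : m.getLast hm = s := by
    rw [List.getLast?_eq_getLast hm] at h3
    simpa using h3
  conv_lhs => rw [← List.dropLast_append_getLast hm, h4]

lemma cg_mul_mul_cancel (s : S) (y : UCG S) : cg s * (cg s * y) = y := by
  rw [← mul_assoc, cg_mul_self, one_mul]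

lemma conj_conj_cancel (s : S) (x : Involutions (UniversalCoxeterGroup S)) :
    (genInv s).conjOp ((genInv s).conjOp x) = x := by
  apply Subtype.ext
  show cg s * (cg s * x.1 * (cg s)⁻¹) * (cg s)⁻¹ = x.1
  rw [cg_inv]
  simp only [mul_assoc, cg_mul_self, mul_one, cg_mul_mul_cancel]

lemma conjOp_expand (s : S) (a b : Involutions (UniversalCoxeterGroup S)) :
    a.conjOp b = (genInv s).conjOp (((genInv s).conjOp a).conjOp ((genInv s).conjOp b)) := by
  apply Subtype.ext
  show a.1 * b.1 * a.1⁻¹ =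
    cg s * ((cg s * a.1 * (cg s)⁻¹) * (cg s * b.1 * (cg s)⁻¹) * (cg s * a.1 * (cg s)⁻¹)⁻¹)
      * (cg s)⁻¹
  simp only [cg_inv, mul_inv_rev, mul_assoc, cg_mul_mul_cancel, cg_mul_self, mul_one]

variable (φ : S → Q)

/-- The candidate map. -/
noncomputable def fdef (x : Involutions (UniversalCoxeterGroup S)) : Q :=
  (evalQ φ (wl x.1)).get
    (evalQ_isSome φ (wl x.1).length (wl x.1) le_rfl (wl_odd x.2.1 x.2.2))

lemma fdef_spec {x : Involutions (UniversalCoxeterGroup S)} {q : Q}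
    (h : evalQ φ (wl x.1) = some q) : fdef φ x = q := by
  have h2 : some (fdef φ x) = evalQ φ (wl x.1) := Option.some_get _
  rw [h] at h2
  exact Option.some.inj h2

lemma fdef_gen (s : S) : fdef φ (genInv s) = φ s := by
  apply fdef_spec
  have : wl (genInv s).1 = [s] := wl_cg s
  rw [this, evalQ_single]

lemma gen_conj (hinv : ∀ x y : Q, x ◃ (x ◃ y) = y) (s : S) (x : Involutions (UniversalCoxeterGroup S)) :
    fdef φ ((genInv s).conjOp x) = φ s ◃ fdef φ x := by
  cases hl : wl x.1 with
  | nil => exact absurd hl (inv_ne_nil x)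
  | cons a m =>
    by_cases has : a = s
    · subst has
      by_cases hm : m = []
      · subst hm
        have hx : x = genInv a := x_eq_genInv a x hl
        have hc : (genInv a).conjOp x = x := by
          rw [hx]
          apply Subtype.ext
          show cg a * cg a * (cg a)⁻¹ = cg a
          rw [mul_inv_cancel_right]
        rw [hc]
        have hfx : fdef φ x = φ a := by
          apply fdef_spec; rw [hl, evalQ_single]
        rw [hfx, Quandle.fix]
      · have hwc := wl_conj_eq a x m hm hl
        obtain ⟨q, hq⟩ := Option.isSome_iff_exists.1
          (evalQ_isSome φ (wl ((genInv a).conjOp x).1).length _ le_rfl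
            (wl_odd ((genInv a).conjOp x).2.1 ((genInv a).conjOp x).2.2))
        have hx : evalQ φ (wl x.1) = some (φ a ◃ q) := by
          rw [hl]
          conv_lhs => rw [m_decomp a x m hm hl]
          rw [evalQ_sandwich, ← hwc, hq]
          rfl
        rw [fdef_spec φ hq, fdef_spec φ hx]
        exact (hinv _ _).symm
    · have hh : (wl x.1).head? ≠ some s := by
        rw [hl]
        simp only [List.head?_cons, ne_eq, Option.some.injEq]
        exact has
      have hwc := wl_conj_ne s x hh
      obtain ⟨q, hq⟩ := Option.isSome_iff_exists.1
        (evalQ_isSome φ (wl x.1).length _ le_rfl (wl_odd x.2.1 x.2.2))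
      have hcj : evalQ φ (wl ((genInv s).conjOp x).1) = some (φ s ◃ q) := by
        rw [hwc, evalQ_sandwich, hq]
        rfl
      rw [fdef_spec φ hcj, fdef_spec φ hq]

lemma main_conj (hinv : ∀ x y : Q, x ◃ (x ◃ y) = y) : ∀ (n : ℕ) (a b : Involutions (UniversalCoxeterGroup S)),
    (wl a.1).length ≤ n → fdef φ (a.conjOp b) = fdef φ a ◃ fdef φ b := by
  intro n
  induction n with
  | zero =>
    intro a b h
    exact absurd (List.length_eq_zero_iff.1 (Nat.le_zero.1 h)) (inv_ne_nil a)
  | succ n ih =>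
    intro a b hlen
    cases hl : wl a.1 with
    | nil => exact absurd hl (inv_ne_nil a)
    | cons s m =>
      by_cases hm : m = []
      · subst hm
        have ha := x_eq_genInv s a hl
        rw [ha, gen_conj φ hinv, ← fdef_gen φ s]
      · set a' := (genInv s).conjOp a with ha'
        have hwa' : wl a'.1 = m.dropLast := by rw [ha']; exact wl_conj_eq s a m hm hl
        have hlen' : (wl a'.1).length ≤ n := by
          rw [hwa', List.length_dropLast]
          have : (wl a.1).length = m.length + 1 := by rw [hl]; rfl
          omega
        have hab : a = (genInv s).conjOp a' := by
          rw [ha']; exact (conj_conj_cancel s a).symm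
        have hb' : fdef φ ((genInv s).conjOp b) = φ s ◃ fdef φ b := gen_conj φ hinv s b
        have e1 : fdef φ (a.conjOp b)
            = φ s ◃ fdef φ (a'.conjOp ((genInv s).conjOp b)) := by
          rw [conjOp_expand s a b, ← ha']
          exact gen_conj φ hinv s (a'.conjOp ((genInv s).conjOp b))
        have e2 := ih a' ((genInv s).conjOp b) hlen'
        have e3 : fdef φ a = φ s ◃ fdef φ a' := by
          rw [hab]; exact gen_conj φ hinv s a'
        rw [e1, e2, hb', e3,
          Rack.self_distrib (x := φ s) (y := fdef φ a') (z := φ s ◃ fdef φ b),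
          hinv (φ s) (fdef φ b)]

lemma uniq_aux (hinv : ∀ x y : Q, x ◃ (x ◃ y) = y)
    (f' : Involutions (UniversalCoxeterGroup S) → Q)
    (h1 : ∀ (s : S) (h : coxGen s * coxGen s = 1 ∧ coxGen s ≠ 1), f' ⟨coxGen s, h⟩ = φ s)
    (h2 : ∀ a b, f' (a.conjOp b) = f' a ◃ f' b) :
    ∀ (n : ℕ) (g : Involutions (UniversalCoxeterGroup S)),
      (wl g.1).length ≤ n → f' g = fdef φ g := by
  intro n
  induction n with
  | zero =>
    intro g h
    exact absurd (List.length_eq_zero_iff.1 (Nat.le_zero.1 h)) (inv_ne_nil g)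
  | succ n ih =>
    intro g hlen
    cases hl : wl g.1 with
    | nil => exact absurd hl (inv_ne_nil g)
    | cons s m =>
      by_cases hm : m = []
      · subst hm
        rw [x_eq_genInv s g hl, fdef_gen]
        exact h1 s _
      · set g' := (genInv s).conjOp g with hg'
        have hwg' : wl g'.1 = m.dropLast := by rw [hg']; exact wl_conj_eq s g m hm hl
        have hlen' : (wl g'.1).length ≤ n := by
          rw [hwg', List.length_dropLast]
          have : (wl g.1).length = m.length + 1 := by rw [hl]; rfl
          omega
        have hgg : g = (genInv s).conjOp g' := by
          rw [hg']; exact (conj_conj_cancel s g).symm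
        calc f' g = f' ((genInv s).conjOp g') := by rw [← hgg]
        _ = f' (genInv s) ◃ f' g' := h2 _ _
        _ = φ s ◃ f' g' := by rw [show f' (genInv s) = φ s from h1 s _]
        _ = φ s ◃ fdef φ g' := by rw [ih g' hlen']
        _ = fdef φ ((genInv s).conjOp g') := (gen_conj φ hinv s g').symm
        _ = fdef φ g := by rw [← hgg]

end FQaux

/-- The set `FQ₂(S)` of involutions of the universal Coxeter group
`F₂(S)` on a set `S`, equipped with conjugation, is the free involutory quandle on
`S`: for every involutory quandle `Q` and every map `φ : S → Q` there is a unique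
map `f : FQ₂(S) → Q` sending each generator `s` to `φ s` and preserving the
conjugation operation. -/
theorem freeInvolutoryQuandle_universal_property
    (S : Type*) (Q : Type*) [Quandle Q] (hinv : ∀ x y : Q, x ◃ (x ◃ y) = y)
    (φ : S → Q) :
    ∃! f : Involutions (UniversalCoxeterGroup S) → Q,
      (∀ (s : S) (h : coxGen s * coxGen s = 1 ∧ coxGen s ≠ 1),
        f ⟨coxGen s, h⟩ = φ s) ∧
      (∀ a b, f (a.conjOp b) = f a ◃ f b) := by
  letI : DecidableEq S := Classical.decEq S
  refine ⟨FQaux.fdef φ,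
    ⟨fun s h => ?_, fun a b => FQaux.main_conj φ hinv (FQaux.wl a.1).length a b le_rfl⟩,
    fun f' hf' => ?_⟩
  · apply FQaux.fdef_spec
    have h2 : FQaux.wl (⟨coxGen s, h⟩ : Involutions (UniversalCoxeterGroup S)).1 = [s] :=
      FQaux.wl_cg s
    rw [h2, FQaux.evalQ_single]
  · funext g
    exact FQaux.uniq_aux φ hinv f' hf'.1 hf'.2 (FQaux.wl g.1).length g le_rfl
end

section
/- Fix an algebraic closure Ω of the rational number field ℚ. Any two involutions in the absolute Galois group Gal(ℚ) = Aut(Ω|ℚ) are conjugate in Gal(ℚ); that is, the involutions form a single conjugacy class. -/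
set_option linter.unusedSectionVars false

open Polynomial

namespace ASProof

variable {Ω : Type*} [Field Ω] [Algebra ℚ Ω] [IsAlgClosure ℚ Ω]
variable (σ : Ω ≃ₐ[ℚ] Ω)

lemma charZ : CharZero Ω := charZero_of_injective_algebraMap (algebraMap ℚ Ω).injective

lemma sigma_sq (hσ2 : σ * σ = 1) (x : Ω) : σ (σ x) = x := by
  have := congrArg (fun f : Ω ≃ₐ[ℚ] Ω => f x) hσ2
  simpa [AlgEquiv.mul_apply] using this

lemma decomp (hσ2 : σ * σ = 1) {d : Ω} (hd : σ d = -d) (hd0 : d ≠ 0) (x : Ω) :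
    ∃ a b : Ω, σ a = a ∧ σ b = b ∧ x = a + b * d := by
  haveI : CharZero Ω := charZ
  refine ⟨(x + σ x) / 2, ((x - σ x) / 2) / d, ?_, ?_, ?_⟩
  · rw [map_div₀, map_add, sigma_sq σ hσ2, map_ofNat]
    ring
  · rw [map_div₀, map_div₀, map_sub, sigma_sq σ hσ2, hd, map_ofNat, div_neg, ← neg_div,
      ← neg_div, neg_sub]
  · rw [div_mul_cancel₀ _ hd0]
    ring

lemma fixed_eq_odd (hσ2 : σ * σ = 1) {d a b : Ω} (hd : σ d = -d) (ha : σ a = a) (hb : σ b = b)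
    (h : a = b * d) : a = 0 ∧ b * d = 0 := by
  haveI : CharZero Ω := charZ
  have h2 : a = -(b * d) := by
    conv_lhs => rw [← ha, h, map_mul, hb, hd, mul_neg]
  have h2a : (2 : Ω) * a = 0 := by
    rw [two_mul]
    nth_rewrite 1 [h2]
    rw [h]
    ring
  have ha0 : a = 0 := by
    rcases mul_eq_zero.1 h2a with h' | h'
    · exact absurd h' two_ne_zero
    · exact h'
  exact ⟨ha0, by rw [← h, ha0]⟩


lemma exists_i (hσ2 : σ * σ = 1) (hσ1 : σ ≠ 1) : ∃ i : Ω, i ^ 2 = -1 ∧ σ i = -i := by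
  haveI : CharZero Ω := charZ
  haveI : IsAlgClosed Ω := IsAlgClosure.isAlgClosed ℚ
  -- find an element negated by σ
  obtain ⟨x, hx⟩ : ∃ x : Ω, σ x ≠ x := by
    by_contra h
    push_neg at h
    exact hσ1 (AlgEquiv.ext fun x => by rw [h x, AlgEquiv.one_apply])
  obtain ⟨d, hd, hd0⟩ : ∃ d : Ω, σ d = -d ∧ d ≠ 0 :=
    ⟨x - σ x, by rw [map_sub, sigma_sq σ hσ2]; ring, sub_ne_zero.2 (Ne.symm hx)⟩
  obtain ⟨c, hc⟩ : ∃ c : Ω, c ^ 2 = d := IsAlgClosed.exists_pow_nat_eq d (by norm_num)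
  obtain ⟨p, q, hp, hq, hcpq⟩ := decomp σ hσ2 hd hd0 c
  -- d = p^2 + 2pq d + q^2 d^2
  have hexp : c ^ 2 = p ^ 2 + 2 * (p * q) * d + q ^ 2 * d ^ 2 := by rw [hcpq]; ring
  have hrel : p ^ 2 + q ^ 2 * d ^ 2 = (1 - 2 * (p * q)) * d := by
    linear_combination hc - hexp
  have hfa : σ (p ^ 2 + q ^ 2 * d ^ 2) = p ^ 2 + q ^ 2 * d ^ 2 := by
    rw [map_add, map_pow, map_mul, map_pow, map_pow, hp, hq, hd]; ring
  have hfb : σ (1 - 2 * (p * q)) = 1 - 2 * (p * q) := by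
    rw [map_sub, map_one, map_mul, map_mul, hp, hq, map_ofNat]
  obtain ⟨hA, hB⟩ := fixed_eq_odd σ hσ2 hd hfa hfb hrel
  have hb0 : 1 - 2 * (p * q) = 0 := by
    rcases mul_eq_zero.1 hB with h' | h'
    · exact h'
    · exact absurd h' hd0
  have hq0 : q ≠ 0 := by
    intro h
    rw [h] at hb0; norm_num at hb0
  have hp0 : p ≠ 0 := by
    intro h
    rw [h] at hb0; norm_num at hb0
  have hd2 : d ^ 2 = -(p ^ 2 / q ^ 2) := by
    field_simp
    linear_combination hA
  refine ⟨d * q / p, ?_, ?_⟩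
  · rw [div_pow, mul_pow, hd2]
    field_simp
  · rw [map_div₀, map_mul, hd, hp, hq, neg_mul, neg_div]

lemma not_neg_one_sq (hσ2 : σ * σ = 1) {i : Ω} (hi2 : i ^ 2 = -1) (hii : σ i = -i) {x : Ω}
    (hx : σ x = x) : x ^ 2 ≠ -1 := by
  haveI : CharZero Ω := charZ
  intro h
  have hi0 : i ≠ 0 := by
    intro h0; rw [h0] at hi2; norm_num at hi2
  have : (x - i) * (x + i) = 0 := by linear_combination h - hi2
  rcases mul_eq_zero.1 this with h' | h'
  · have hxi : x = i := by linear_combination h'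
    rw [hxi] at hx
    rw [hii] at hx
    have : (2 : Ω) * i = 0 := by linear_combination -hx
    rcases mul_eq_zero.1 this with h'' | h''
    · exact absurd h'' two_ne_zero
    · exact hi0 h''
  · have hxi : x = -i := by linear_combination h'
    rw [hxi, map_neg, hii, neg_neg] at hx
    have : (2 : Ω) * i = 0 := by linear_combination hx
    rcases mul_eq_zero.1 this with h'' | h''
    · exact absurd h'' two_ne_zero
    · exact hi0 h''

lemma sq_or_neg_sq (hσ2 : σ * σ = 1) {i : Ω} (hi2 : i ^ 2 = -1) (hii : σ i = -i) {a : Ω}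
    (ha : σ a = a) : (∃ x : Ω, σ x = x ∧ a = x ^ 2) ∨ ∃ x : Ω, σ x = x ∧ a = -(x ^ 2) := by
  haveI : CharZero Ω := charZ
  haveI : IsAlgClosed Ω := IsAlgClosure.isAlgClosed ℚ
  have hi0 : i ≠ 0 := by
    intro h0; rw [h0] at hi2; norm_num at hi2
  obtain ⟨c, hc⟩ : ∃ c : Ω, c ^ 2 = a := IsAlgClosed.exists_pow_nat_eq a (by norm_num)
  obtain ⟨p, q, hp, hq, hcpq⟩ := decomp σ hσ2 hii hi0 c
  have hrel : a - (p ^ 2 - q ^ 2) = 2 * (p * q) * i := by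
    rw [← hc, hcpq]; linear_combination (q:Ω)^2 * hi2
  have hfa : σ (a - (p ^ 2 - q ^ 2)) = a - (p ^ 2 - q ^ 2) := by
    rw [map_sub, map_sub, map_pow, map_pow, hp, hq, ha]
  have hfb : σ (2 * (p * q)) = 2 * (p * q) := by
    rw [map_mul, map_mul, hp, hq, map_ofNat]
  obtain ⟨hA, hB⟩ := fixed_eq_odd σ hσ2 hii hfa hfb hrel
  have hpq : p * q = 0 := by
    rcases mul_eq_zero.1 hB with h' | h'
    · rcases mul_eq_zero.1 h' with h'' | h''
      · exact absurd h'' two_ne_zero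
      · exact h''
    · exact absurd h' hi0
  have ha' : a = p ^ 2 - q ^ 2 := by linear_combination hA
  rcases mul_eq_zero.1 hpq with h' | h'
  · right
    exact ⟨q, hq, by rw [ha', h']; ring⟩
  · left
    exact ⟨p, hp, by rw [ha', h']; ring⟩

lemma sum_sq (hσ2 : σ * σ = 1) {i : Ω} (hi2 : i ^ 2 = -1) (hii : σ i = -i) {x y : Ω}
    (hx : σ x = x) (hy : σ y = y) : ∃ z : Ω, σ z = z ∧ x ^ 2 + y ^ 2 = z ^ 2 := by
  haveI : IsAlgClosed Ω := IsAlgClosure.isAlgClosed ℚ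
  obtain ⟨c, hc⟩ : ∃ c : Ω, c ^ 2 = x + y * i := IsAlgClosed.exists_pow_nat_eq _ (by norm_num)
  refine ⟨c * σ c, ?_, ?_⟩
  · rw [map_mul, sigma_sq σ hσ2, mul_comm]
  · have h1 : (σ c) ^ 2 = x - y * i := by
      rw [← map_pow, hc, map_add, map_mul, hx, hy, hii]; ring
    have : (c * σ c) ^ 2 = (x + y * i) * (x - y * i) := by
      rw [mul_pow, hc, h1]
    rw [this]
    linear_combination (y:Ω)^2 * hi2

lemma rat_bound {K : Type*} [Field K] [LinearOrder K] [IsStrictOrderedRing K] {p : ℚ[X]} (hp : p.Monic) {a : K}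
    (h : p.eval₂ (Rat.castHom K) a = 0) : ∃ q : ℚ, a ≤ q := by
  by_contra hc
  push_neg at hc
  have hlt : ∀ q : ℚ, (q : K) < a := fun q => hc q
  have ha1 : (1 : K) < a := by simpa using hlt 1
  have ha0 : (0 : K) < a := zero_lt_one.trans ha1
  set n := p.natDegree with hn_def
  have hn : 0 < n := by
    rcases Nat.eq_zero_or_pos n with h0 | h0
    · exfalso
      have hp1 : p = 1 := by
        have := Polynomial.eq_C_of_natDegree_eq_zero h0
        rw [this]
        have : p.coeff 0 = 1 := by
          have hl := hp.coeff_natDegree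
          rwa [← hn_def, h0] at hl
        rw [this, map_one]
      rw [hp1] at h
      simp at h
    · exact h0
  have hev : p.eval₂ (Rat.castHom K) a
      = ∑ i ∈ Finset.range (n + 1), (p.coeff i : K) * a ^ i := by
    rw [Polynomial.eval₂_eq_sum_range]
    simp [Rat.coe_castHom, hn_def]
  have hsplit : a ^ n = -∑ i ∈ Finset.range n, (p.coeff i : K) * a ^ i := by
    rw [hev, Finset.sum_range_succ] at h
    have hcn : p.coeff n = 1 := hp.coeff_natDegree
    rw [hcn] at h
    push_cast at h
    linarith
  set B : ℚ := ∑ i ∈ Finset.range n, |p.coeff i| with hB_def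
  have hle : a ^ n ≤ (B : K) * a ^ (n - 1) := by
    rw [hsplit, ← Finset.sum_neg_distrib]
    have hstep : ∀ i ∈ Finset.range n,
        -((p.coeff i : K) * a ^ i) ≤ (|p.coeff i| : ℚ) * a ^ (n - 1) := by
      intro i hi
      have h1 : -((p.coeff i : K) * a ^ i) ≤ |(p.coeff i : K)| * a ^ i := by
        have := neg_le_abs ((p.coeff i : K))
        have hpow : (0:K) ≤ a ^ i := (pow_pos ha0 i).le
        calc -((p.coeff i : K) * a ^ i) = (-(p.coeff i : K)) * a ^ i := by ring
          _ ≤ |(p.coeff i : K)| * a ^ i := mul_le_mul_of_nonneg_right this hpow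
      have h2 : |(p.coeff i : K)| * a ^ i ≤ |(p.coeff i : K)| * a ^ (n - 1) := by
        apply mul_le_mul_of_nonneg_left _ (abs_nonneg _)
        exact pow_le_pow_right₀ ha1.le (Nat.le_pred_of_lt (Finset.mem_range.1 hi))
      have h3 : |(p.coeff i : K)| = ((|p.coeff i| : ℚ) : K) := by push_cast; ring
      rw [h3] at h1 h2
      exact h1.trans h2
    calc ∑ i ∈ Finset.range n, -((p.coeff i : K) * a ^ i)
        ≤ ∑ i ∈ Finset.range n, ((|p.coeff i| : ℚ) : K) * a ^ (n - 1) :=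
          Finset.sum_le_sum hstep
      _ = (B : K) * a ^ (n - 1) := by
          rw [← Finset.sum_mul, hB_def]
          push_cast
          ring
  have hfin : a ≤ (B : K) := by
    have hpow : a ^ n = a * a ^ (n - 1) := by
      have h1 : n - 1 + 1 = n := Nat.succ_pred_eq_of_pos hn
      calc a ^ n = a ^ (n - 1 + 1) := by rw [h1]
        _ = a * a ^ (n - 1) := by rw [pow_succ]; ring
    rw [hpow] at hle
    exact le_of_mul_le_mul_right (by rw [mul_comm] at hle ⊢; exact hle) (pow_pos ha0 _)
  exact absurd hfin (not_le.2 (hlt B))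

lemma conj_of_sq_eq_neg_one {z : ℂ} (h : z ^ 2 = -1) : starRingEnd ℂ z = -z := by
  have hI : Complex.I ^ 2 = -1 := Complex.I_sq
  have h2 : (z - Complex.I) * (z + Complex.I) = 0 := by linear_combination h - hI
  rcases mul_eq_zero.1 h2 with h' | h'
  · have : z = Complex.I := by linear_combination h'
    rw [this, Complex.conj_I]
  · have : z = -Complex.I := by linear_combination h'
    rw [this, map_neg, Complex.conj_I, neg_neg]

theorem exists_conj_embedding (hσ2 : σ * σ = 1) (hσ1 : σ ≠ 1) :
    ∃ e : Ω →+* ℂ, ∀ x, e (σ x) = starRingEnd ℂ (e x) := by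
  haveI : CharZero Ω := charZ
  haveI : IsAlgClosed Ω := IsAlgClosure.isAlgClosed ℚ
  haveI : Algebra.IsAlgebraic ℚ Ω := IsAlgClosure.isAlgebraic
  obtain ⟨i, hi2, hii⟩ := exists_i σ hσ2 hσ1
  have hi0 : i ≠ 0 := by intro h0; rw [h0] at hi2; norm_num at hi2
  -- the fixed subfield
  let F : Subfield Ω :=
    { carrier := {x | σ x = x}
      one_mem' := map_one σ
      mul_mem' := fun {a b} ha hb => by
        simp only [Set.mem_setOf_eq] at *; rw [map_mul, ha, hb]
      zero_mem' := map_zero σ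
      add_mem' := fun {a b} ha hb => by
        simp only [Set.mem_setOf_eq] at *; rw [map_add, ha, hb]
      neg_mem' := fun {a} ha => by
        simp only [Set.mem_setOf_eq] at *; rw [map_neg, ha]
      inv_mem' := fun a ha => by
        simp only [Set.mem_setOf_eq] at *; rw [map_inv₀, ha] }
  let K : IntermediateField ℚ Ω := F.toIntermediateField fun q => σ.commutes q
  have hmem : ∀ x : Ω, x ∈ K ↔ σ x = x := fun x => Iff.rfl
  have hcoe2 : ∀ x : ↥K, ((x ^ 2 : ↥K) : Ω) = (x : Ω) ^ 2 := fun x => by push_cast; ring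
  -- the cone of squares
  let C : RingCone ↥K :=
    { carrier := {a : ↥K | ∃ x : ↥K, a = x ^ 2}
      one_mem' := ⟨1, by norm_num⟩
      mul_mem' := by
        rintro a b ⟨x, rfl⟩ ⟨y, rfl⟩
        exact ⟨x * y, by ring⟩
      zero_mem' := ⟨0, by norm_num⟩
      add_mem' := by
        rintro a b ⟨x, rfl⟩ ⟨y, rfl⟩
        obtain ⟨z, hz, hzz⟩ := sum_sq σ hσ2 hi2 hii x.2 y.2
        refine ⟨⟨z, hz⟩, ?_⟩
        apply Subtype.ext
        push_cast
        exact hzz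
      eq_zero_of_mem_of_neg_mem' := by
        rintro a ⟨x, rfl⟩ ⟨y, hy⟩
        by_contra hne
        have hx0 : (x : Ω) ≠ 0 := by
          intro h0
          apply hne
          apply Subtype.ext
          rw [hcoe2, h0]
          norm_num
        have hyx : ((y : Ω) / (x : Ω)) ^ 2 = -1 := by
          have h1 : (x : Ω) ^ 2 + (y : Ω) ^ 2 = 0 := by
            have := congrArg (fun t : ↥K => ((t : ↥K) : Ω)) hy
            simp only [hcoe2] at this
            push_cast at this
            linear_combination -this
          field_simp
          linear_combination h1
        have hy' : σ (y : Ω) = (y : Ω) := y.2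
        have hx' : σ (x : Ω) = (x : Ω) := x.2
        have hdiv : σ ((y : Ω) / (x : Ω)) = (y : Ω) / (x : Ω) := by rw [map_div₀, hy', hx']
        exact not_neg_one_sq σ hσ2 hi2 hii hdiv hyx }
  haveI : HasMemOrNegMem C := by
    constructor
    intro a
    rcases sq_or_neg_sq σ hσ2 hi2 hii a.2 with ⟨x, hx, h⟩ | ⟨x, hx, h⟩
    · left
      exact ⟨⟨x, hx⟩, Subtype.ext (by rw [hcoe2]; exact h)⟩
    · right
      exact ⟨⟨x, hx⟩, Subtype.ext (by rw [hcoe2]; push_cast; linear_combination -h)⟩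
  letI lor : LinearOrder ↥K := by classical exact LinearOrder.mkOfAddGroupCone C
  haveI : IsOrderedRing ↥K := IsOrderedRing.mkOfCone C
  haveI lof : IsStrictOrderedRing ↥K := IsOrderedRing.toIsStrictOrderedRing ↥K
  -- archimedean
  haveI : Archimedean ↥K := by
    rw [archimedean_iff_rat_le]
    intro a
    have halg : IsAlgebraic ℚ (a : Ω) := Algebra.IsAlgebraic.isAlgebraic _
    have hint : IsIntegral ℚ (a : Ω) := halg.isIntegral
    have hmon : (minpoly ℚ (a : Ω)).Monic := minpoly.monic hint
    have haev : Polynomial.aeval (a : Ω) (minpoly ℚ (a : Ω)) = 0 := minpoly.aeval ℚ _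
    have hKev : Polynomial.aeval a (minpoly ℚ (a : Ω)) = (0 : ↥K) := by
      have h1 : Polynomial.aeval ((algebraMap ↥K Ω) a) (minpoly ℚ (a : Ω))
          = algebraMap ↥K Ω (Polynomial.aeval a (minpoly ℚ (a : Ω))) :=
        Polynomial.aeval_algebraMap_apply Ω a _
      rw [IntermediateField.algebraMap_apply] at h1
      apply (algebraMap ↥K Ω).injective
      rw [← h1, haev, map_zero]
    have hEq : algebraMap ℚ ↥K = Rat.castHom ↥K :=
      RingHom.ext fun q => (eq_ratCast _ q).trans (eq_ratCast (Rat.castHom ↥K) q).symm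
    have hev2 : (minpoly ℚ (a : Ω)).eval₂ (Rat.castHom ↥K) a = 0 := by
      rw [← hEq]
      exact hKev
    exact rat_bound hmon hev2
  -- the embedding of K into ℝ, then Ω into ℂ
  let e₀ : ↥K →+* ℝ := (LinearOrderedField.inducedOrderRingHom ↥K ℝ : ↥K →+*o ℝ)
  let j : ↥K →+* ℂ := Complex.ofRealHom.comp e₀
  letI : Algebra ↥K ℂ := j.toAlgebra
  haveI : Algebra.IsAlgebraic ↥K Ω := Algebra.IsAlgebraic.tower_top (K := ℚ) ↥K
  haveI : Module.IsTorsionFree ↥K Ω :=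
    NoZeroSMulDivisors.iff_algebraMap_injective.2 (algebraMap ↥K Ω).injective
  haveI : Module.IsTorsionFree ↥K ℂ :=
    NoZeroSMulDivisors.iff_algebraMap_injective.2 (algebraMap ↥K ℂ).injective
  let ψ : Ω →ₐ[↥K] ℂ := IsAlgClosed.lift
  refine ⟨ψ.toRingHom, ?_⟩
  have hreal : ∀ v : ↥K, ψ ((v : Ω)) = Complex.ofReal (e₀ v) := by
    intro v
    have := ψ.commutes v
    rwa [IntermediateField.algebraMap_apply] at this
  have hfix : ∀ (v : Ω) (hv : σ v = v), starRingEnd ℂ (ψ v) = ψ v := by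
    intro v hv
    have h1 : ψ v = Complex.ofReal (e₀ ⟨v, hv⟩) := hreal ⟨v, hv⟩
    rw [h1, Complex.conj_ofReal]
  have hψi : starRingEnd ℂ (ψ i) = -ψ i := by
    apply conj_of_sq_eq_neg_one
    rw [← map_pow, hi2, map_neg, map_one]
  intro x
  obtain ⟨a, b, ha, hb, hx⟩ := decomp σ hσ2 hii hi0 x
  have hσx : σ x = a + b * -i := by rw [hx, map_add, map_mul, ha, hb, hii]
  show ψ (σ x) = starRingEnd ℂ (ψ x)
  rw [hσx, hx]
  simp only [map_add, map_mul, map_neg, hfix a ha, hfix b hb, hψi]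

end ASProof

/-- Any two involutions in the absolute Galois group
`Gal(ℚ) = Ω ≃ₐ[ℚ] Ω` of the rational numbers are conjugate. -/
theorem involutions_conjugate_in_galois_group_of_rat
    (Ω : Type*) [Field Ω] [Algebra ℚ Ω] [IsAlgClosure ℚ Ω]
    (σ τ : Ω ≃ₐ[ℚ] Ω) (hσ2 : σ * σ = 1) (hσ1 : σ ≠ 1) (hτ2 : τ * τ = 1) (hτ1 : τ ≠ 1) :
    IsConj σ τ := by
  haveI : Algebra.IsAlgebraic ℚ Ω := IsAlgClosure.isAlgebraic
  haveI : IsAlgClosed Ω := IsAlgClosure.isAlgClosed ℚ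
  obtain ⟨e1, he1⟩ := ASProof.exists_conj_embedding σ hσ2 hσ1
  obtain ⟨e2, he2⟩ := ASProof.exists_conj_embedding τ hτ2 hτ1
  have hcomm : ∀ (e : Ω →+* ℂ) (q : ℚ), e (algebraMap ℚ Ω q) = algebraMap ℚ ℂ q := by
    intro e q
    rw [eq_ratCast (algebraMap ℚ Ω) q, map_ratCast, eq_ratCast]
  let E1 : Ω →ₐ[ℚ] ℂ := { toRingHom := e1, commutes' := fun q => hcomm e1 q }
  let E2 : Ω →ₐ[ℚ] ℂ := { toRingHom := e2, commutes' := fun q => hcomm e2 q }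
  have key : ∀ (E : Ω →ₐ[ℚ] ℂ) (z : ℂ), z ∈ E.range ↔ IsAlgebraic ℚ z := by
    intro E z
    constructor
    · rintro ⟨x, rfl⟩
      exact IsAlgebraic.algHom E (Algebra.IsAlgebraic.isAlgebraic x)
    · intro hz
      obtain ⟨p, hp0, hpz⟩ := hz
      have hsp : ((p.map (algebraMap ℚ Ω))).Splits :=
        IsAlgClosed.splits _
      have hmapmap : (p.map (algebraMap ℚ Ω)).map (E : Ω →+* ℂ) = p.map (algebraMap ℚ ℂ) := by
        rw [Polynomial.map_map]
        congr 1
        exact E.comp_algebraMap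
      have hz_root : z ∈ (p.map (algebraMap ℚ ℂ)).roots := by
        rw [Polynomial.mem_roots (Polynomial.map_ne_zero hp0), Polynomial.IsRoot,
          Polynomial.eval_map]
        rw [Polynomial.aeval_def] at hpz
        exact hpz
      rw [← hmapmap, hsp.roots_map _, Multiset.mem_map] at hz_root
      obtain ⟨x, _, hxz⟩ := hz_root
      exact ⟨x, hxz⟩
  have hrange : E1.range = E2.range := by
    apply SetLike.ext
    intro z
    exact (key E1 z).trans (key E2 z).symm
  let u1 := AlgEquiv.ofInjectiveField E1
  let u2 := AlgEquiv.ofInjectiveField E2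
  let g : Ω ≃ₐ[ℚ] Ω := u1.trans ((Subalgebra.equivOfEq _ _ hrange).trans u2.symm)
  have hg : ∀ x, e2 (g x) = e1 x := by
    intro x
    have h1 : ∀ w, e2 (u2.symm w) = (w : ℂ) := by
      intro w
      have h2 := u2.apply_symm_apply w
      calc e2 (u2.symm w) = (u2 (u2.symm w) : ℂ) := rfl
        _ = (w : ℂ) := by rw [h2]
    show e2 (u2.symm ((Subalgebra.equivOfEq _ _ hrange) (u1 x))) = e1 x
    rw [h1]
    rfl
  rw [isConj_iff]
  refine ⟨g, ?_⟩
  have hinj := e2.injective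
  apply AlgEquiv.ext
  intro x
  apply hinj
  have hgg : g (g⁻¹ x) = x := by
    show g (g.symm x) = x
    exact g.apply_symm_apply x
  calc e2 ((g * σ * g⁻¹) x) = e2 (g (σ (g⁻¹ x))) := by
        rw [AlgEquiv.mul_apply, AlgEquiv.mul_apply]
    _ = e1 (σ (g⁻¹ x)) := hg _
    _ = starRingEnd ℂ (e1 (g⁻¹ x)) := he1 _
    _ = starRingEnd ℂ (e2 (g (g⁻¹ x))) := by rw [hg]
    _ = starRingEnd ℂ (e2 x) := by rw [hgg]
    _ = e2 (τ x) := (he2 x).symm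
end

section
/- Fix an algebraic closure Ω of the rational number field ℚ and let b ∈ Ω be an element with b² = 2. Then every involution σ in the absolute Galois group Gal(ℚ) = Aut(Ω|ℚ) satisfies σ(b) = b. Consequently, every involution of Gal(ℚ) fixes the subfield ℚ(√2) pointwise, and the set of involutions of Gal(ℚ) coincides with the set of involutions of the subgroup Aut(Ω|ℚ(√2)). -/
/-!
Suppose an involution `σ` moved `b`, so `σ b = -b`. In an algebraically closed field the norm
`a * σ a` of any square root `a` is a `σ`-fixed square root of `c * σ c`. Applied to `c = b` this
gives a fixed `t` with `t² = -2`, so `i = t / b` satisfies `i² = -1` and `σ i = -i`; applied to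
`c = 1 + i` it gives a fixed `s` with `s² = (1 + i)(1 - i) = 2 = b²`. Then `b = ±s` is fixed,
a contradiction.
-/

theorem apply_eq_self_of_sq_eq_sq_of_apply_eq_self {R F : Type*} [CommRing R] [NoZeroDivisors R]
    [FunLike F R R] [RingHomClass F R R] {f : F} {b s : R} (hsb : s ^ 2 = b ^ 2)
    (hs : f s = s) : f b = b := by
  rcases sq_eq_sq_iff_eq_or_eq_neg.mp hsb.symm with rfl | rfl
  · exact hs
  · rw [map_neg, hs]

section Involution

variable {K F : Type*} [Field K] [FunLike F K K] [RingHomClass F K K] {f : F}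

theorem exists_apply_eq_self_sq_eq_mul_apply [IsAlgClosed K] (hf : Function.Involutive f)
    (c : K) : ∃ t, f t = t ∧ t ^ 2 = c * f c := by
  obtain ⟨a, rfl⟩ := IsAlgClosed.exists_pow_nat_eq c two_pos
  refine ⟨a * f a, ?_, ?_⟩
  · rw [map_mul, hf a, mul_comm]
  · rw [map_pow]
    ring

theorem apply_eq_self_of_sq_eq_two [IsAlgClosed K] (hf : Function.Involutive f) {b : K}
    (hb : b ^ 2 = 2) : f b = b := by
  by_contra hfb
  have hneg : f b = -b := by
    have hsq : f b ^ 2 = b ^ 2 := by rw [← map_pow, hb, map_ofNat]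
    exact (sq_eq_sq_iff_eq_or_eq_neg.mp hsq).resolve_left hfb
  have hb0 : b ≠ 0 := fun h => hfb (by rw [h, map_zero])
  obtain ⟨t, ht, ht2⟩ := exists_apply_eq_self_sq_eq_mul_apply hf b
  set i := t / b
  have hi2 : i ^ 2 = -1 := by
    rw [div_pow, div_eq_iff (pow_ne_zero 2 hb0)]
    linear_combination ht2 + b * hneg
  have hfi : f i = -i := by rw [map_div₀, ht, hneg, div_neg]
  obtain ⟨s, hs, hs2⟩ := exists_apply_eq_self_sq_eq_mul_apply hf (1 + i)
  have hsb : s ^ 2 = b ^ 2 := by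
    rw [hs2, map_add, map_one, hfi, hb]
    linear_combination -hi2
  exact hfb (apply_eq_self_of_sq_eq_sq_of_apply_eq_self hsb hs)

end Involution

theorem IntermediateField.mem_fixingSubgroup_adjoin_iff {F E : Type*} [Field F] [Field E]
    [Algebra F E] {S : Set E} {σ : E ≃ₐ[F] E} :
    σ ∈ (adjoin F S).fixingSubgroup ↔ ∀ x ∈ S, σ x = x := by
  refine ⟨fun h x hx => (mem_fixingSubgroup_iff _ σ).mp h x (subset_adjoin F S hx), fun h => ?_⟩
  have hext : (σ : E →ₐ[F] E).comp (adjoin F S).val = (adjoin F S).val :=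
    adjoin_algHom_ext F fun x hx => h x hx
  exact (mem_fixingSubgroup_iff _ σ).mpr fun x hx => DFunLike.congr_fun hext ⟨x, hx⟩

theorem AlgEquiv.involutive_of_mul_self_eq_one {R A : Type*} [CommSemiring R] [Semiring A]
    [Algebra R A] {σ : A ≃ₐ[R] A} (hσ : σ * σ = 1) : Function.Involutive σ :=
  fun x => by rw [← AlgEquiv.mul_apply, hσ, AlgEquiv.one_apply]

/-- Every involution `σ` in `Gal(ℚ) = Ω ≃ₐ[ℚ] Ω` fixes a square root
`b` of `2`; consequently every involution fixes `ℚ(√2)` pointwise, and the set of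
involutions of `Gal(ℚ)` coincides with the set of involutions of the subgroup
`Aut(Ω|ℚ(√2))` fixing `ℚ(√2)`. -/
theorem involutions_fix_sqrt_two
    (Ω : Type*) [Field Ω] [Algebra ℚ Ω] [IsAlgClosure ℚ Ω]
    (b : Ω) (hb : b ^ 2 = 2) :
    (∀ σ : Ω ≃ₐ[ℚ] Ω, σ * σ = 1 → σ ≠ 1 → σ b = b) ∧
    (∀ σ : Ω ≃ₐ[ℚ] Ω, σ * σ = 1 → σ ≠ 1 →
      ∀ x ∈ IntermediateField.adjoin ℚ {b}, σ x = x) ∧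
    ({σ : Ω ≃ₐ[ℚ] Ω | σ * σ = 1 ∧ σ ≠ 1} =
      {σ : Ω ≃ₐ[ℚ] Ω |
        σ ∈ (IntermediateField.adjoin ℚ {b}).fixingSubgroup ∧ σ * σ = 1 ∧ σ ≠ 1}) := by
  have : IsAlgClosed Ω := IsAlgClosure.isAlgClosed ℚ
  have hb_fixed : ∀ σ : Ω ≃ₐ[ℚ] Ω, σ * σ = 1 → σ b = b := fun σ hσ =>
    apply_eq_self_of_sq_eq_two (AlgEquiv.involutive_of_mul_self_eq_one hσ) hb
  have hfix : ∀ σ : Ω ≃ₐ[ℚ] Ω, σ * σ = 1 → σ ∈ (IntermediateField.adjoin ℚ {b}).fixingSubgroup :=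
    fun σ hσ => IntermediateField.mem_fixingSubgroup_adjoin_iff.mpr fun x hx =>
      (Set.mem_singleton_iff.mp hx) ▸ hb_fixed σ hσ
  refine ⟨fun σ hσ _ => hb_fixed σ hσ,
    fun σ hσ _ => (IntermediateField.mem_fixingSubgroup_iff _ σ).mp (hfix σ hσ), ?_⟩
  ext σ
  exact ⟨fun ⟨hσ, hne⟩ => ⟨hfix σ hσ, hσ, hne⟩, fun h => h.2⟩
end
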